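/- arXiv:0909.0938 — 9 statements merged into one kernel-verified Lean document; each statement's English description precedes it below -/
import Mathlib

section
/- Let (m₂,m₃) : I → ℝ² be a solution of the system dm₂/dt = m₂(1−m₂)(1+m₂−m₃), dm₃/dt = m₃(1−m₃)(1−m₂+m₃) on an interval I, and let t₀ ∈ I. Then: (i) if m₂(t₀) = 0 then m₂(t) = 0 for all t ∈ I; (ii) if m₃(t₀) = 0 then m₃(t) = 0 for all t ∈ I; (iii) if m₂(t₀) = 1 then m₂(t) = 1 for all t ∈ I; (iv) if m₃(t₀) = 1 then m₃(t) = 1 for all t ∈ I; (v) if m₂(t₀) = m₃(t₀) then m₂(t) = m₃(t) for all t ∈ I. In other words, the five curves m₂ = 0, m₃ = 0, m₂ = 1, m₃ = 1, and m₂ = m₃ are invariant under the flow. -/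
open Set Real

/-- Forward-in-time version: a solution of `v' = v * g` vanishing at `a` vanishes on `[a,b]`. -/
lemma vanish_fwd {v g : ℝ → ℝ} {a b : ℝ} (hab : a ≤ b)
    (hg : ContinuousOn g (Icc a b))
    (hv : ∀ t ∈ Icc a b, HasDerivAt v (v t * g t) t)
    (h0 : v a = 0) : ∀ t ∈ Icc a b, v t = 0 := by
  obtain ⟨K, hK⟩ := (isCompact_Icc (a := a) (b := b)).exists_bound_of_continuousOn hg
  have hcont : ContinuousOn v (Icc a b) := fun t ht =>
    (hv t ht).continuousAt.continuousWithinAt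
  have key := norm_le_gronwallBound_of_norm_deriv_right_le (f' := fun t => v t * g t)
    (δ := 0) (K := K) (ε := 0) hcont
    (fun x hx => (hv x (Ico_subset_Icc_self hx)).hasDerivWithinAt)
    (by simp [h0])
    (fun x hx => by
      have := hK x (Ico_subset_Icc_self hx)
      have : ‖v x * g x‖ ≤ K * ‖v x‖ := by
        rw [norm_mul, mul_comm]
        exact mul_le_mul_of_nonneg_right this (norm_nonneg _)
      linarith)
  intro t ht
  have := key t ht
  rw [gronwallBound_ε0_δ0] at this
  simpa using le_antisymm this (norm_nonneg _)

/-- A solution of `v' = v * g` on an order-connected set vanishing at one point vanishes. -/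
lemma vanish {I : Set ℝ} (hI : I.OrdConnected) {v g : ℝ → ℝ}
    (hg : ContinuousOn g I)
    (hv : ∀ t ∈ I, HasDerivAt v (v t * g t) t)
    {t₀ : ℝ} (ht₀ : t₀ ∈ I) (h0 : v t₀ = 0) : ∀ t ∈ I, v t = 0 := by
  intro t ht
  rcases le_total t₀ t with h | h
  · have hsub : Icc t₀ t ⊆ I := hI.out ht₀ ht
    exact vanish_fwd h (hg.mono hsub) (fun s hs => hv s (hsub hs)) h0 t
      ⟨h, le_rfl⟩
  · -- reverse time
    have hsub : Icc t t₀ ⊆ I := hI.out ht ht₀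
    set w : ℝ → ℝ := fun s => v (-s)
    set h' : ℝ → ℝ := fun s => -g (-s)
    have hw : ∀ s ∈ Icc (-t₀) (-t), HasDerivAt w (w s * h' s) s := by
      intro s hs
      have hms : -s ∈ Icc t t₀ := ⟨by linarith [hs.2], by linarith [hs.1]⟩
      have := (hv (-s) (hsub hms)).comp s (hasDerivAt_neg s)
      refine this.congr_deriv ?_
      simp only [w, h', Function.comp]
      ring
    have hgw : ContinuousOn h' (Icc (-t₀) (-t)) := by
      apply ContinuousOn.neg
      have : ContinuousOn (fun s : ℝ => g (-s)) (Icc (-t₀) (-t)) := by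
        apply (hg.mono hsub).comp continuousOn_neg
        intro s hs
        exact ⟨by linarith [hs.2], by linarith [hs.1]⟩
      exact this
    have := vanish_fwd (neg_le_neg h) hgw hw (by simp [w, h0]) (-t)
      ⟨neg_le_neg h, le_rfl⟩
    simpa [w] using this

/-- The five curves `m₂ = 0`, `m₃ = 0`, `m₂ = 1`, `m₃ = 1` and `m₂ = m₃` are invariant
under the flow of the planar Ricci flow system
`dm₂/dt = m₂(1−m₂)(1+m₂−m₃)`, `dm₃/dt = m₃(1−m₃)(1−m₂+m₃)`. -/
theorem ricci_flow_invariant_lines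
    (I : Set ℝ) (hI : I.OrdConnected)
    (m₂ m₃ : ℝ → ℝ)
    (hm₂ : ∀ t ∈ I, HasDerivAt m₂ (m₂ t * (1 - m₂ t) * (1 + m₂ t - m₃ t)) t)
    (hm₃ : ∀ t ∈ I, HasDerivAt m₃ (m₃ t * (1 - m₃ t) * (1 - m₂ t + m₃ t)) t)
    (t₀ : ℝ) (ht₀ : t₀ ∈ I) :
    (m₂ t₀ = 0 → ∀ t ∈ I, m₂ t = 0) ∧
    (m₃ t₀ = 0 → ∀ t ∈ I, m₃ t = 0) ∧
    (m₂ t₀ = 1 → ∀ t ∈ I, m₂ t = 1) ∧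
    (m₃ t₀ = 1 → ∀ t ∈ I, m₃ t = 1) ∧
    (m₂ t₀ = m₃ t₀ → ∀ t ∈ I, m₂ t = m₃ t) := by
  have hc₂ : ContinuousOn m₂ I := fun t ht => (hm₂ t ht).continuousAt.continuousWithinAt
  have hc₃ : ContinuousOn m₃ I := fun t ht => (hm₃ t ht).continuousAt.continuousWithinAt
  refine ⟨?_, ?_, ?_, ?_, ?_⟩
  · intro h0
    exact vanish hI (g := fun t => (1 - m₂ t) * (1 + m₂ t - m₃ t))
      (((continuousOn_const.sub hc₂)).mul
        ((continuousOn_const.add hc₂).sub hc₃))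
      (fun t ht => by convert hm₂ t ht using 1; ring) ht₀ h0
  · intro h0
    exact vanish hI (g := fun t => (1 - m₃ t) * (1 - m₂ t + m₃ t))
      (((continuousOn_const.sub hc₃)).mul
        ((continuousOn_const.sub hc₂).add hc₃))
      (fun t ht => by convert hm₃ t ht using 1; ring) ht₀ h0
  · intro h0
    intro t ht
    have := vanish hI (v := fun t => m₂ t - 1)
      (g := fun t => -(m₂ t * (1 + m₂ t - m₃ t)))
      ((hc₂.mul ((continuousOn_const.add hc₂).sub hc₃)).neg)
      (fun t ht => by
        have := (hm₂ t ht).sub_const 1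
        refine this.congr_deriv ?_; ring) ht₀ (by simp [h0]) t ht
    linarith
  · intro h0
    intro t ht
    have := vanish hI (v := fun t => m₃ t - 1)
      (g := fun t => -(m₃ t * (1 - m₂ t + m₃ t)))
      ((hc₃.mul ((continuousOn_const.sub hc₂).add hc₃)).neg)
      (fun t ht => by
        have := (hm₃ t ht).sub_const 1
        refine this.congr_deriv ?_; ring) ht₀ (by simp [h0]) t ht
    linarith
  · intro h0
    intro t ht
    have := vanish hI (v := fun t => m₂ t - m₃ t)
      (g := fun t => 1 - m₂ t ^ 2 - m₃ t ^ 2)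
      ((continuousOn_const.sub (hc₂.pow 2)).sub (hc₃.pow 2))
      (fun t ht => by
        have := (hm₂ t ht).sub (hm₃ t ht)
        refine this.congr_deriv ?_; ring) ht₀ (by simp [h0]) t ht
    linarith
end

section
/- Let W = {(m₂,m₃) ∈ ℝ² : 0 < m₂ < 1, m₃ < 0, and 1 − m₂ + m₃ < 0}, and let F(m₂,m₃) = (m₂(1−m₂)(1+m₂−m₃), m₃(1−m₃)(1−m₂+m₃)). Then both components of F are strictly positive at every point of W, and W is forward invariant under the flow: if (m₂,m₃) : I → ℝ² solves the system dm₂/dt = m₂(1−m₂)(1+m₂−m₃), dm₃/dt = m₃(1−m₃)(1−m₂+m₃), t₀ ∈ I, and (m₂(t₀),m₃(t₀)) ∈ W, then (m₂(t),m₃(t)) ∈ W for all t ∈ I with t ≥ t₀. -/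
open Set

lemma gron_pos (f f' : ℝ → ℝ) (K a b : ℝ) (hab : a ≤ b)
    (hd : ∀ t ∈ Icc a b, HasDerivAt f (f' t) t)
    (hge : ∀ t ∈ Icc a b, -K * f t ≤ f' t)
    (h0 : 0 < f a) : 0 < f b := by
  set g : ℝ → ℝ := fun t => f t * Real.exp (K * (t - a)) with hgdef
  have hgd : ∀ t ∈ Icc a b, HasDerivAt g ((f' t + K * f t) * Real.exp (K * (t - a))) t := by
    intro t ht
    have he : HasDerivAt (fun s => Real.exp (K * (s - a))) (Real.exp (K * (t - a)) * K) t := by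
      have h1 : HasDerivAt (fun s : ℝ => K * (s - a)) K t := by
        simpa using ((hasDerivAt_id t).sub_const a).const_mul K
      simpa using h1.exp
    have : HasDerivAt (fun s => f s * Real.exp (K * (s - a)))
        (f' t * Real.exp (K * (t - a)) + f t * (Real.exp (K * (t - a)) * K)) t := (hd t ht).mul he
    convert this using 1
    ring
  have hmono : MonotoneOn g (Icc a b) := by
    apply monotoneOn_of_deriv_nonneg (convex_Icc a b)
    · exact fun t ht => (hgd t ht).continuousAt.continuousWithinAt
    · intro t ht
      rw [interior_Icc] at ht
      exact ((hgd t (Ioo_subset_Icc_self ht)).differentiableAt).differentiableWithinAt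
    · intro t ht
      rw [interior_Icc] at ht
      rw [(hgd t (Ioo_subset_Icc_self ht)).deriv]
      have h1 := hge t (Ioo_subset_Icc_self ht)
      have h2 := Real.exp_pos (K * (t - a))
      nlinarith
  have hab' : g a ≤ g b := hmono ⟨le_refl a, hab⟩ ⟨hab, le_refl b⟩ hab
  have hga : g a = f a := by simp [hgdef]
  have := Real.exp_pos (K * (b - a))
  have hgb : g b = f b * Real.exp (K * (b - a)) := rfl
  nlinarith [hab', hga]

/-- On the region `W = {0 < m₂ < 1, m₃ < 0, 1 − m₂ + m₃ < 0}` both components of the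
Ricci flow vector field are strictly positive, and `W` is forward invariant under the flow
of `dm₂/dt = m₂(1−m₂)(1+m₂−m₃)`, `dm₃/dt = m₃(1−m₃)(1−m₂+m₃)`. -/
theorem ricci_flow_forward_invariant_region :
    (∀ p : ℝ × ℝ,
        p ∈ {p : ℝ × ℝ | 0 < p.1 ∧ p.1 < 1 ∧ p.2 < 0 ∧ 1 - p.1 + p.2 < 0} →
        0 < p.1 * (1 - p.1) * (1 + p.1 - p.2) ∧ 0 < p.2 * (1 - p.2) * (1 - p.1 + p.2)) ∧
    (∀ (I : Set ℝ), I.OrdConnected → ∀ (m₂ m₃ : ℝ → ℝ),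
        (∀ t ∈ I, HasDerivAt m₂ (m₂ t * (1 - m₂ t) * (1 + m₂ t - m₃ t)) t) →
        (∀ t ∈ I, HasDerivAt m₃ (m₃ t * (1 - m₃ t) * (1 - m₂ t + m₃ t)) t) →
        ∀ t₀ ∈ I,
          (m₂ t₀, m₃ t₀) ∈ {p : ℝ × ℝ | 0 < p.1 ∧ p.1 < 1 ∧ p.2 < 0 ∧ 1 - p.1 + p.2 < 0} →
          ∀ t ∈ I, t₀ ≤ t →
            (m₂ t, m₃ t) ∈ {p : ℝ × ℝ | 0 < p.1 ∧ p.1 < 1 ∧ p.2 < 0 ∧ 1 - p.1 + p.2 < 0}) := by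
  constructor
  · rintro ⟨x, y⟩ ⟨h1, h2, h3, h4⟩
    simp only at h1 h2 h3 h4 ⊢
    constructor
    · have := mul_pos (mul_pos h1 (by linarith : (0:ℝ) < 1 - x))
        (by linarith : (0:ℝ) < 1 + x - y)
      nlinarith
    · have := mul_pos (mul_pos (by linarith : (0:ℝ) < -y) (by linarith : (0:ℝ) < 1 - y))
        (by linarith : (0:ℝ) < -(1 - x + y))
      nlinarith
  · intro I hI m₂ m₃ hm₂ hm₃ t₀ ht₀ hmem t₁ ht₁ hle
    simp only [mem_setOf_eq] at hmem ⊢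
    by_contra hcon
    -- the bad set
    set W : Set (ℝ × ℝ) := {p : ℝ × ℝ | 0 < p.1 ∧ p.1 < 1 ∧ p.2 < 0 ∧ 1 - p.1 + p.2 < 0} with hW
    have hWopen : IsOpen W := by
      have h1 : IsOpen {p : ℝ × ℝ | 0 < p.1} := isOpen_lt continuous_const continuous_fst
      have h2 : IsOpen {p : ℝ × ℝ | p.1 < 1} := isOpen_lt continuous_fst continuous_const
      have h3 : IsOpen {p : ℝ × ℝ | p.2 < 0} := isOpen_lt continuous_snd continuous_const
      have h4 : IsOpen {p : ℝ × ℝ | 1 - p.1 + p.2 < 0} :=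
        isOpen_lt (by continuity) continuous_const
      have : W = {p : ℝ × ℝ | 0 < p.1} ∩ ({p : ℝ × ℝ | p.1 < 1} ∩
          ({p : ℝ × ℝ | p.2 < 0} ∩ {p : ℝ × ℝ | 1 - p.1 + p.2 < 0})) := by
        ext p
        simp only [hW, mem_setOf_eq, mem_inter_iff]
      rw [this]
      exact h1.inter (h2.inter (h3.inter h4))
    have hsub : Icc t₀ t₁ ⊆ I := hI.out ht₀ ht₁
    have hcont : ContinuousOn (fun t => (m₂ t, m₃ t)) (Icc t₀ t₁) := fun t ht =>
      (((hm₂ t (hsub ht)).continuousAt.prodMk (hm₃ t (hsub ht)).continuousAt)).continuousWithinAt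
    set S : Set ℝ := Icc t₀ t₁ ∩ (fun t => (m₂ t, m₃ t)) ⁻¹' Wᶜ with hS
    have hSclosed : IsClosed S :=
      hcont.preimage_isClosed_of_isClosed isClosed_Icc hWopen.isClosed_compl
    have hSne : S.Nonempty := ⟨t₁, ⟨hle, le_refl t₁⟩, by
      simp only [mem_preimage, mem_compl_iff, hW, mem_setOf_eq]; exact hcon⟩
    have hSbdd : BddBelow S := ⟨t₀, fun t ht => ht.1.1⟩
    set τ := sInf S with hτ
    have hτS : τ ∈ S := hSclosed.csInf_mem hSne hSbdd
    have hτIcc : τ ∈ Icc t₀ t₁ := hτS.1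
    have hτnot : ¬ ((m₂ τ, m₃ τ) ∈ W) := hτS.2
    have ht₀τ : t₀ < τ := by
      rcases lt_or_eq_of_le hτIcc.1 with h | h
      · exact h
      · exfalso; exact hτnot (by rw [← h]; exact hmem)
    have hsubτ : Icc t₀ τ ⊆ I := fun t ht => hsub ⟨ht.1, le_trans ht.2 hτIcc.2⟩
    -- strict inequalities on [t₀, τ)
    have hP : ∀ t ∈ Ico t₀ τ, 0 < m₂ t ∧ m₂ t < 1 ∧ m₃ t < 0 ∧ 1 - m₂ t + m₃ t < 0 := by
      intro t ht
      by_contra hc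
      have htS : t ∈ S := ⟨⟨ht.1, le_trans (le_of_lt ht.2) hτIcc.2⟩, by
        simp only [mem_preimage, mem_compl_iff, hW, mem_setOf_eq]; exact hc⟩
      exact absurd (csInf_le hSbdd htS) (not_le.mpr ht.2)
    -- weak inequalities on [t₀, τ]
    have hQ : ∀ t ∈ Icc t₀ τ, 0 ≤ m₂ t ∧ m₂ t ≤ 1 ∧ m₃ t ≤ 0 ∧ 1 - m₂ t + m₃ t ≤ 0 := by
      intro t ht
      rcases lt_or_eq_of_le ht.2 with h | h
      · have := hP t ⟨ht.1, h⟩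
        exact ⟨le_of_lt this.1, le_of_lt this.2.1, le_of_lt this.2.2.1, le_of_lt this.2.2.2⟩
      · have ht₀t : t₀ < t := h ▸ ht₀τ
        have hPt : ∀ s ∈ Ico t₀ t, 0 < m₂ s ∧ m₂ s < 1 ∧ m₃ s < 0 ∧ 1 - m₂ s + m₃ s < 0 :=
          fun s hs => hP s (h ▸ hs)
        have hmem2 : Ioo t₀ t ∈ nhdsWithin t (Iio t) :=
          Ioo_mem_nhdsLT_of_mem ⟨ht₀t, le_refl t⟩
        have hev : ∀ᶠ s in nhdsWithin t (Iio t),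
            0 ≤ m₂ s ∧ m₂ s ≤ 1 ∧ m₃ s ≤ 0 ∧ 1 - m₂ s + m₃ s ≤ 0 := by
          filter_upwards [hmem2] with s hs
          have := hPt s ⟨le_of_lt hs.1, hs.2⟩
          exact ⟨le_of_lt this.1, le_of_lt this.2.1, le_of_lt this.2.2.1, le_of_lt this.2.2.2⟩
        have hc2 : Filter.Tendsto m₂ (nhdsWithin t (Iio t)) (nhds (m₂ t)) :=
          (hm₂ t (hsubτ ht)).continuousAt.continuousWithinAt
        have hc3 : Filter.Tendsto m₃ (nhdsWithin t (Iio t)) (nhds (m₃ t)) :=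
          (hm₃ t (hsubτ ht)).continuousAt.continuousWithinAt
        refine ⟨ge_of_tendsto hc2 (hev.mono fun s hs => hs.1),
                le_of_tendsto hc2 (hev.mono fun s hs => hs.2.1),
                le_of_tendsto hc3 (hev.mono fun s hs => hs.2.2.1),
                le_of_tendsto ?_ (hev.mono fun s hs => hs.2.2.2)⟩
        exact (Filter.Tendsto.sub tendsto_const_nhds hc2).add hc3
    -- bound on m₃
    obtain ⟨C, hC⟩ : ∃ C, ∀ t ∈ Icc t₀ τ, ‖m₃ t‖ ≤ C := by
      apply IsCompact.exists_bound_of_continuousOn isCompact_Icc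
      exact fun t ht => (hm₃ t (hsubτ ht)).continuousAt.continuousWithinAt
    have hC0 : 0 ≤ C := le_trans (norm_nonneg _) (hC t₀ ⟨le_refl t₀, le_of_lt ht₀τ⟩)
    have hCabs : ∀ t ∈ Icc t₀ τ, -C ≤ m₃ t :=
      fun t ht => neg_le_of_abs_le (by simpa [Real.norm_eq_abs] using hC t ht)
    set K := (1 + C) * (2 + C) with hK
    have hK0 : 0 ≤ K := by positivity
    have hτle : t₀ ≤ τ := le_of_lt ht₀τ
    -- q₁ = m₂
    have hq1 : 0 < m₂ τ := by
      apply gron_pos m₂ (fun t => m₂ t * (1 - m₂ t) * (1 + m₂ t - m₃ t)) K t₀ τ hτle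
        (fun t ht => hm₂ t (hsubτ ht)) _ hmem.1
      intro t ht
      show -K * m₂ t ≤ m₂ t * (1 - m₂ t) * (1 + m₂ t - m₃ t)
      obtain ⟨a1, a2, a3, a4⟩ := hQ t ht
      nlinarith [mul_nonneg (mul_nonneg a1 (by linarith : (0:ℝ) ≤ 1 - m₂ t))
        (by linarith : (0:ℝ) ≤ 1 + m₂ t - m₃ t), mul_nonneg hK0 a1]
    -- q₂ = 1 - m₂
    have hq2 : 0 < 1 - m₂ τ := by
      apply gron_pos (fun t => 1 - m₂ t)
        (fun t => -(m₂ t * (1 - m₂ t) * (1 + m₂ t - m₃ t))) K t₀ τ hτle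
        (fun t ht => (hm₂ t (hsubτ ht)).const_sub 1) _ (show (0:ℝ) < 1 - m₂ t₀ by linarith [hmem.2.1])
      intro t ht
      show -K * (1 - m₂ t) ≤ -(m₂ t * (1 - m₂ t) * (1 + m₂ t - m₃ t))
      obtain ⟨a1, a2, a3, a4⟩ := hQ t ht
      have hc := hCabs t ht
      have hb : m₂ t * (1 + m₂ t - m₃ t) ≤ K := by
        nlinarith [mul_le_mul_of_nonneg_right a2 (show (0:ℝ) ≤ 1 + m₂ t - m₃ t by linarith),
          mul_nonneg hC0 (show (0:ℝ) ≤ 2 + C by linarith)]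
      nlinarith [mul_le_mul_of_nonneg_left hb (by linarith : (0:ℝ) ≤ 1 - m₂ t)]
    -- q₃ = -m₃
    have hq3 : 0 < -(m₃ τ) := by
      apply gron_pos (fun t => -(m₃ t))
        (fun t => -(m₃ t * (1 - m₃ t) * (1 - m₂ t + m₃ t))) K t₀ τ hτle
        (fun t ht => (hm₃ t (hsubτ ht)).neg) _ (show (0:ℝ) < -(m₃ t₀) by linarith [hmem.2.2.1])
      intro t ht
      show -K * -(m₃ t) ≤ -(m₃ t * (1 - m₃ t) * (1 - m₂ t + m₃ t))
      obtain ⟨a1, a2, a3, a4⟩ := hQ t ht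
      have hc := hCabs t ht
      have hb : -K ≤ (1 - m₃ t) * (1 - m₂ t + m₃ t) := by
        nlinarith [mul_le_mul (show -(m₃ t) ≤ C by linarith)
          (show -(1 - m₂ t + m₃ t) ≤ C by linarith) (by linarith) hC0]
      nlinarith [mul_le_mul_of_nonneg_left hb (by linarith : (0:ℝ) ≤ -(m₃ t))]
    -- q₄ = m₂ - m₃ - 1
    have hq4 : 0 < m₂ τ - m₃ τ - 1 := by
      apply gron_pos (fun t => m₂ t - m₃ t - 1)
        (fun t => m₂ t * (1 - m₂ t) * (1 + m₂ t - m₃ t)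
          - m₃ t * (1 - m₃ t) * (1 - m₂ t + m₃ t)) K t₀ τ hτle
        (fun t ht => ((hm₂ t (hsubτ ht)).sub (hm₃ t (hsubτ ht))).sub_const 1) _
        (show (0:ℝ) < m₂ t₀ - m₃ t₀ - 1 by linarith [hmem.2.2.2])
      intro t ht
      show -K * (m₂ t - m₃ t - 1) ≤
        m₂ t * (1 - m₂ t) * (1 + m₂ t - m₃ t) - m₃ t * (1 - m₃ t) * (1 - m₂ t + m₃ t)
      obtain ⟨a1, a2, a3, a4⟩ := hQ t ht
      have hc := hCabs t ht
      have h1 : 0 ≤ m₂ t * (1 - m₂ t) * (1 + m₂ t - m₃ t) :=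
        mul_nonneg (mul_nonneg a1 (by linarith)) (by linarith)
      have hb : -K ≤ m₃ t * (1 - m₃ t) := by
        nlinarith [mul_le_mul (show -(m₃ t) ≤ C by linarith)
          (show 1 - m₃ t ≤ 1 + C by linarith) (by linarith) hC0]
      nlinarith [mul_le_mul_of_nonneg_right hb (by linarith : (0:ℝ) ≤ m₂ t - m₃ t - 1)]
    exact hτnot ⟨hq1, by linarith, by linarith, by linarith⟩
end

section
/- Let (m₂,m₃) be a maximal solution of the system dm₂/dt = m₂(1−m₂)(1+m₂−m₃), dm₃/dt = m₃(1−m₃)(1−m₂+m₃) with 0 < m₃(t₀) < m₂(t₀) < 1 at some time t₀. Then the solution is defined for all t ∈ ℝ, satisfies 0 < m₃(t) < m₂(t) < 1 for all t, and (m₂(t),m₃(t)) → (1,1) as t → ∞ while (m₂(t),m₃(t)) → (0,0) as t → −∞. -/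
open Filter Set Topology
open scoped NNReal


private lemma ricciB14_g_est (R m n m' n' : ℝ) (hm : |m| ≤ R) (hm' : |m'| ≤ R)
    (hn : |n| ≤ R) (hn' : |n'| ≤ R) :
    |m*(1-m)*(1+m-n) - m'*(1-m')*(1+m'-n')| ≤ (1+2*R+6*R^2) * max |m - m'| |n - n'| := by
  have hR : 0 ≤ R := le_trans (abs_nonneg m) hm
  obtain ⟨hm1, hm2⟩ := abs_le.mp hm
  obtain ⟨hm1', hm2'⟩ := abs_le.mp hm'
  obtain ⟨hn1, hn2⟩ := abs_le.mp hn
  have hd1 : |m - m'| ≤ max |m - m'| |n - n'| := le_max_left _ _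
  have hd2 : |n - n'| ≤ max |m - m'| |n - n'| := le_max_right _ _
  have hd0 : 0 ≤ max |m - m'| |n - n'| := le_trans (abs_nonneg _) hd1
  have p1 : m^2 ≤ R^2 := by nlinarith
  have p2 : m'^2 ≤ R^2 := by nlinarith
  have p3a : -(R^2) ≤ m*m' := by nlinarith
  have p3b : m*m' ≤ R^2 := by nlinarith
  have p4 : |(m+m')*n| ≤ 2*R^2 := by
    rw [abs_mul]
    calc |m+m'| * |n| ≤ (2*R) * R :=
          mul_le_mul ((abs_add_le _ _).trans (by linarith)) hn (abs_nonneg n) (by positivity)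
      _ = 2*R^2 := by ring
  obtain ⟨p4a, p4b⟩ := abs_le.mp p4
  have hA : |1 - n - (m^2 + m*m' + m'^2) + (m+m')*n| ≤ 1 + R + 5*R^2 := by
    rw [abs_le]
    constructor <;> [skip; skip] <;> nlinarith [sq_nonneg m, sq_nonneg m']
  have hB : |m'^2 - m'| ≤ R + R^2 := by
    rw [abs_le]
    constructor <;> nlinarith [sq_nonneg m']
  have key : m*(1-m)*(1+m-n) - m'*(1-m')*(1+m'-n')
      = (1 - n - (m^2 + m*m' + m'^2) + (m+m')*n)*(m-m') + (m'^2 - m')*(n-n') := by ring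
  calc |m*(1-m)*(1+m-n) - m'*(1-m')*(1+m'-n')|
      = |(1 - n - (m^2 + m*m' + m'^2) + (m+m')*n)*(m-m') + (m'^2 - m')*(n-n')| := by rw [key]
    _ ≤ |(1 - n - (m^2 + m*m' + m'^2) + (m+m')*n)*(m-m')| + |(m'^2 - m')*(n-n')| := abs_add_le _ _
    _ = |1 - n - (m^2 + m*m' + m'^2) + (m+m')*n| * |m - m'| + |m'^2 - m'| * |n - n'| := by
        rw [abs_mul, abs_mul]
    _ ≤ (1 + R + 5*R^2) * (max |m - m'| |n - n'|) + (R + R^2) * (max |m - m'| |n - n'|) := by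
        gcongr
    _ = (1+2*R+6*R^2) * max |m - m'| |n - n'| := by ring

private lemma ricciB14_lip (R : ℝ) (hR : 0 ≤ R) :
    LipschitzOnWith (Real.toNNReal (1+2*R+6*R^2))
      (fun p : ℝ × ℝ => (p.1*(1-p.1)*(1+p.1-p.2), p.2*(1-p.2)*(1-p.1+p.2)))
      (Metric.closedBall (0 : ℝ × ℝ) R) := by
  rw [lipschitzOnWith_iff_dist_le_mul]
  intro p hp q hq
  have hK : (Real.toNNReal (1+2*R+6*R^2) : ℝ) = 1+2*R+6*R^2 :=
    Real.coe_toNNReal _ (by positivity)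
  rw [hK]
  have hp' : max |p.1| |p.2| ≤ R := by
    have := Metric.mem_closedBall.mp hp
    rw [Prod.dist_eq] at this
    simpa [Real.dist_eq] using this
  have hq' : max |q.1| |q.2| ≤ R := by
    have := Metric.mem_closedBall.mp hq
    rw [Prod.dist_eq] at this
    simpa [Real.dist_eq] using this
  have hp1 : |p.1| ≤ R := le_trans (le_max_left _ _) hp'
  have hp2 : |p.2| ≤ R := le_trans (le_max_right _ _) hp'
  have hq1 : |q.1| ≤ R := le_trans (le_max_left _ _) hq'
  have hq2 : |q.2| ≤ R := le_trans (le_max_right _ _) hq'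
  rw [Prod.dist_eq, Prod.dist_eq]
  simp only [Real.dist_eq]
  apply max_le
  · exact (ricciB14_g_est R p.1 p.2 q.1 q.2 hp1 hq1 hp2 hq2).trans
      (le_of_eq rfl)
  · have h := ricciB14_g_est R p.2 p.1 q.2 q.1 hp2 hq2 hp1 hq1
    have e1 : p.2*(1-p.2)*(1-p.1+p.2) = p.2*(1-p.2)*(1+p.2-p.1) := by ring
    have e2 : q.2*(1-q.2)*(1-q.1+q.2) = q.2*(1-q.2)*(1+q.2-q.1) := by ring
    rw [e1, e2]
    exact h.trans (by rw [max_comm])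

noncomputable def ricciF (T t d : ℝ) : ℝ :=
  2 * Real.sinh (d/2) / (Real.cosh (t - T) + Real.cosh (d/2))

lemma ricciF_denom_pos (T t d : ℝ) : 0 < Real.cosh (t - T) + Real.cosh (d/2) := by
  have := Real.cosh_pos (t - T); have := Real.cosh_pos (d/2); linarith

lemma ricciF_hasDerivAt (T t d : ℝ) :
    HasDerivAt (fun d => ricciF T t d)
      ((Real.cosh (d/2) * Real.cosh (t-T) + 1) / (Real.cosh (t - T) + Real.cosh (d/2))^2) d := by
  have hden := ricciF_denom_pos T t d
  have h1 : HasDerivAt (fun d : ℝ => d/2) (1/2) d := (hasDerivAt_id d).div_const 2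
  have hs : HasDerivAt (fun d : ℝ => Real.sinh (d/2)) (Real.cosh (d/2) * (1/2)) d :=
    h1.sinh
  have hc : HasDerivAt (fun d : ℝ => Real.cosh (t-T) + Real.cosh (d/2))
      (Real.sinh (d/2) * (1/2)) d :=
    (((Real.hasDerivAt_cosh (d/2)).comp d h1)).const_add _
  have h := ((hs.const_mul 2).div hc hden.ne')
  refine h.congr_deriv ?_
  congr 1
  linear_combination Real.cosh_sq_sub_sinh_sq (d/2)

lemma ricciF_deriv_bound (T t d : ℝ) :
    (Real.cosh (d/2) * Real.cosh (t-T) + 1) / (Real.cosh (t - T) + Real.cosh (d/2))^2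
      ∈ Set.Icc (0:ℝ) (1/2) := by
  have hden := ricciF_denom_pos T t d
  have h1 := Real.one_le_cosh (t - T)
  have h2 := Real.one_le_cosh (d/2)
  constructor
  · positivity
  · rw [div_le_iff₀ (by positivity)]
    nlinarith [sq_nonneg (Real.cosh (t-T) - Real.cosh (d/2))]

lemma ricciF_lipschitz (T t : ℝ) : LipschitzWith (1/2 : ℝ≥0) (ricciF T t) := by
  apply lipschitzWith_of_nnnorm_deriv_le
  · intro d
    exact (ricciF_hasDerivAt T t d).differentiableAt
  · intro d
    have h := (ricciF_hasDerivAt T t d).deriv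
    rw [← NNReal.coe_le_coe, coe_nnnorm, Real.norm_eq_abs]
    have hc : ((1/2 : ℝ≥0) : ℝ) = 1/2 := by norm_num
    rw [hc, show deriv (ricciF T t) = deriv (fun d => ricciF T t d) from rfl, h]
    obtain ⟨h0, h12⟩ := ricciF_deriv_bound T t d
    rw [abs_of_nonneg h0]
    exact h12

lemma ricciF_bound (T t d : ℝ) : ‖ricciF T t d‖ ≤ 2 := by
  have hden := ricciF_denom_pos T t d
  have h1 := Real.one_le_cosh (t - T)
  have h2 := Real.one_le_cosh (d/2)
  have hs : |Real.sinh (d/2)| ≤ Real.cosh (d/2) := by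
    rw [abs_le]
    constructor
    · have := Real.sinh_lt_cosh (-(d/2))
      rw [Real.sinh_neg, Real.cosh_neg] at this
      linarith
    · exact (Real.sinh_lt_cosh _).le
  rw [Real.norm_eq_abs, ricciF, abs_div, abs_of_pos hden, abs_mul]
  rw [div_le_iff₀ hden]
  have : |(2:ℝ)| = 2 := by norm_num
  rw [this]
  nlinarith

lemma ricciF_cont (T x : ℝ) : Continuous (fun t => ricciF T t x) := by
  apply Continuous.div
  · fun_prop
  · fun_prop
  · intro t
    exact (ricciF_denom_pos T t x).ne'

lemma ricciF_zero (T t : ℝ) : ricciF T t 0 = 0 := by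
  simp [ricciF]

lemma ricci_unique_Icc (T : ℝ) {a b t₁ : ℝ} {f g : ℝ → ℝ} (ht : t₁ ∈ Ioo a b)
    (hf : ∀ t ∈ Ioo a b, HasDerivAt f (ricciF T t (f t)) t)
    (hg : ∀ t ∈ Ioo a b, HasDerivAt g (ricciF T t (g t)) t)
    (heq : f t₁ = g t₁) : EqOn f g (Ioo a b) := by
  apply ODE_solution_unique_of_mem_Ioo (v := ricciF T) (s := fun _ => (univ : Set ℝ))
    (K := 1/2) (fun t _ => (ricciF_lipschitz T t).lipschitzOnWith) ht
    (fun t ht' => ⟨hf t ht', trivial⟩) (fun t ht' => ⟨hg t ht', trivial⟩) heq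

lemma ricci_global_solution (T t₀ δ₀ : ℝ) :
    ∃ δ : ℝ → ℝ, δ t₀ = δ₀ ∧ ∀ t, HasDerivAt δ (ricciF T t (δ t)) t := by
  have exist : ∀ n : ℕ, ∃ f : ℝ → ℝ, f t₀ = δ₀ ∧
      ∀ t ∈ Icc (t₀-(n+1:ℝ)) (t₀+(n+1:ℝ)),
        HasDerivWithinAt f (ricciF T t (f t)) (Icc (t₀-(n+1:ℝ)) (t₀+(n+1:ℝ))) t := by
    intro n
    have hn : (0:ℝ) ≤ (n:ℝ) + 1 := by positivity
    have hmem : t₀ ∈ Icc (t₀-(n+1:ℝ)) (t₀+(n+1:ℝ)) := by constructor <;> linarith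
    have hP : IsPicardLindelof (fun t d => ricciF T t d) (tmin := t₀-(n+1:ℝ)) (tmax := t₀+(n+1:ℝ))
        ⟨t₀, hmem⟩ δ₀ ⟨2*((n:ℝ)+1), by positivity⟩ 0 2 (1/2) :=
      { lipschitzOnWith := fun t _ => (ricciF_lipschitz T t).lipschitzOnWith
        continuousOn := fun x _ => (ricciF_cont T x).continuousOn
        norm_le := fun t _ x _ => by simpa using ricciF_bound T t x
        mul_max_le := by
          show ((2:ℝ≥0):ℝ) * max (t₀+((n:ℝ)+1) - t₀) (t₀-(t₀-((n:ℝ)+1))) ≤ 2*((n:ℝ)+1) - ((0:ℝ≥0):ℝ)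
          rw [show t₀+((n:ℝ)+1) - t₀ = (n:ℝ)+1 by ring, show t₀-(t₀-((n:ℝ)+1)) = (n:ℝ)+1 by ring,
            max_self]
          norm_num }
    exact hP.exists_eq_forall_mem_Icc_hasDerivWithinAt₀
  choose f hf0 hf using exist
  -- derivative at interior points
  have hDeriv : ∀ (n : ℕ) (t : ℝ), |t - t₀| < (n:ℝ)+1 → HasDerivAt (f n) (ricciF T t (f n t)) t := by
    intro n t h
    obtain ⟨h1, h2⟩ := abs_lt.mp h
    exact (hf n t ⟨by linarith, by linarith⟩).hasDerivAt
      (Icc_mem_nhds (by linarith) (by linarith))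
  have agree : ∀ m n : ℕ, (m:ℝ) ≤ (n:ℝ) → ∀ t, |t - t₀| < (m:ℝ)+1 → f m t = f n t := by
    intro m n hmn t ht
    have hm0 : (0:ℝ) < (m:ℝ)+1 := by positivity
    have ht₀ : t₀ ∈ Ioo (t₀-((m:ℝ)+1)) (t₀+((m:ℝ)+1)) := by constructor <;> linarith
    refine ricci_unique_Icc T ht₀ ?_ ?_ (by rw [hf0 m, hf0 n]) ?_
    · intro s hs
      obtain ⟨h1, h2⟩ := hs
      exact hDeriv m s (abs_lt.mpr ⟨by linarith, by linarith⟩)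
    · intro s hs
      obtain ⟨h1, h2⟩ := hs
      exact hDeriv n s (abs_lt.mpr ⟨by linarith, by linarith⟩)
    · obtain ⟨h1, h2⟩ := abs_lt.mp ht
      constructor <;> linarith
  set δ : ℝ → ℝ := fun t => f (Nat.floor |t - t₀|) t with hδ
  have eqf : ∀ (n : ℕ) (t : ℝ), |t - t₀| < (n:ℝ)+1 → δ t = f n t := by
    intro n t ht
    set k := Nat.floor |t - t₀| with hk
    have hkt : |t - t₀| < (k:ℝ)+1 := Nat.lt_floor_add_one _
    have h1 : f k t = f (max k n) t :=
      agree k (max k n) (by exact_mod_cast Nat.le_max_left k n) t hkt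
    have h2 : f n t = f (max k n) t :=
      agree n (max k n) (by exact_mod_cast Nat.le_max_right k n) t ht
    rw [hδ]; dsimp only; rw [← hk, h1, h2]
  refine ⟨δ, ?_, ?_⟩
  · have : |t₀ - t₀| < ((0:ℕ):ℝ)+1 := by simp
    rw [eqf 0 t₀ this, hf0]
  · intro t
    set n := Nat.floor |t - t₀| with hn
    have hnt : |t - t₀| < (n:ℝ)+1 := Nat.lt_floor_add_one _
    have hev : δ =ᶠ[𝓝 t] f n := by
      have hmem : Ioo (t₀-((n:ℝ)+1)) (t₀+((n:ℝ)+1)) ∈ 𝓝 t := by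
        obtain ⟨h1, h2⟩ := abs_lt.mp hnt
        exact Ioo_mem_nhds (by linarith) (by linarith)
      filter_upwards [hmem] with s hs
      obtain ⟨h1, h2⟩ := hs
      exact eqf n s (abs_lt.mpr ⟨by linarith, by linarith⟩)
    have := (hDeriv n t hnt).congr_of_eventuallyEq hev
    rwa [← eqf n t hnt] at this

lemma ricci_delta_pos (T t₀ δ₀ : ℝ) (h : 0 < δ₀) {δ : ℝ → ℝ} (h0 : δ t₀ = δ₀)
    (hd : ∀ t, HasDerivAt δ (ricciF T t (δ t)) t) : ∀ t, 0 < δ t := by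
  have hcont : Continuous δ := by
    rw [continuous_iff_continuousAt]; exact fun t => (hd t).continuousAt
  by_contra hcon
  push_neg at hcon
  obtain ⟨t₁, ht₁⟩ := hcon
  have hzero : ∃ t₂, δ t₂ = 0 := by
    rcases le_or_gt t₁ t₀ with hle | hlt
    · have himg := intermediate_value_Icc hle hcont.continuousOn
      have : (0:ℝ) ∈ Icc (δ t₁) (δ t₀) := ⟨ht₁, by rw [h0]; exact h.le⟩
      obtain ⟨t₂, _, ht₂⟩ := himg this
      exact ⟨t₂, ht₂⟩
    · have himg := intermediate_value_Icc' hlt.le hcont.continuousOn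
      have : (0:ℝ) ∈ Icc (δ t₁) (δ t₀) := ⟨ht₁, by rw [h0]; exact h.le⟩
      obtain ⟨t₂, _, ht₂⟩ := himg this
      exact ⟨t₂, ht₂⟩
  obtain ⟨t₂, ht₂⟩ := hzero
  have key : EqOn δ (fun _ => (0:ℝ)) (Ioo (min t₂ t₀ - 1) (max t₂ t₀ + 1)) := by
    apply ricci_unique_Icc T (a := min t₂ t₀ - 1) (b := max t₂ t₀ + 1)
      (t₁ := t₂) ⟨by have := min_le_left t₂ t₀; linarith, by have := le_max_left t₂ t₀; linarith⟩
      (fun t _ => hd t)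
      (fun t _ => by simpa [ricciF_zero T t] using hasDerivAt_const t (0:ℝ)) ht₂
  have : δ t₀ = 0 := key ⟨by have := min_le_right t₂ t₀; linarith,
    by have := le_max_right t₂ t₀; linarith⟩
  rw [h0] at this
  linarith

lemma ricci_key_identity (τ d : ℝ) :
    2 * Real.sinh (d/2) / (Real.cosh τ + Real.cosh (d/2))
      = 2*(Real.exp (τ + d/2) - Real.exp (τ - d/2))
        / ((1+Real.exp (τ + d/2))*(1+Real.exp (τ - d/2))) := by
  have hA := Real.exp_pos τ
  have hB := Real.exp_pos (d/2)
  have hd1 : Real.cosh τ + Real.cosh (d/2) ≠ 0 := by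
    have := Real.cosh_pos τ; have := Real.cosh_pos (d/2); positivity
  have hd2 : (1 + Real.exp (τ + d/2)) ≠ 0 := by positivity
  have hd3 : (1 + Real.exp (τ - d/2)) ≠ 0 := by positivity
  rw [div_eq_div_iff hd1 (by positivity)]
  rw [Real.cosh_eq, Real.cosh_eq, Real.sinh_eq, Real.exp_add, Real.exp_sub,
    Real.exp_neg, Real.exp_neg]
  field_simp
  ring

/-- Trajectories of the planar Ricci flow system starting in the open region
`B₁,₄ = {0 < m₃ < m₂ < 1}` are global, remain in `B₁,₄`, tend to `(1,1)` as `t → ∞`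
and to `(0,0)` as `t → −∞`. Globality and maximality of the exhibited solution are
expressed by the final uniqueness clause. -/
theorem ricci_flow_B14_trajectory (t₀ a b : ℝ) (h0 : 0 < b) (hba : b < a) (ha1 : a < 1) :
    ∃ m₂ m₃ : ℝ → ℝ,
      m₂ t₀ = a ∧ m₃ t₀ = b ∧
      (∀ t, HasDerivAt m₂ (m₂ t * (1 - m₂ t) * (1 + m₂ t - m₃ t)) t) ∧
      (∀ t, HasDerivAt m₃ (m₃ t * (1 - m₃ t) * (1 - m₂ t + m₃ t)) t) ∧
      (∀ t, 0 < m₃ t ∧ m₃ t < m₂ t ∧ m₂ t < 1) ∧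
      Tendsto (fun t => (m₂ t, m₃ t)) atTop (𝓝 ((1 : ℝ), (1 : ℝ))) ∧
      Tendsto (fun t => (m₂ t, m₃ t)) atBot (𝓝 ((0 : ℝ), (0 : ℝ))) ∧
      (∀ (s : Set ℝ) (z₂ z₃ : ℝ → ℝ), IsOpen s → s.OrdConnected → t₀ ∈ s →
        (∀ t ∈ s, HasDerivAt z₂ (z₂ t * (1 - z₂ t) * (1 + z₂ t - z₃ t)) t) →
        (∀ t ∈ s, HasDerivAt z₃ (z₃ t * (1 - z₃ t) * (1 - z₂ t + z₃ t)) t) →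
        z₂ t₀ = a → z₃ t₀ = b → ∀ t ∈ s, z₂ t = m₂ t ∧ z₃ t = m₃ t) := by
  have ha0 : 0 < a := h0.trans hba
  have hb1 : b < 1 := hba.trans ha1
  have h1a : 0 < 1 - a := by linarith
  have h1b : 0 < 1 - b := by linarith
  set x₀ : ℝ := a / (1-a) with hx₀def
  set y₀ : ℝ := b / (1-b) with hy₀def
  have hx₀ : 0 < x₀ := by positivity
  have hy₀ : 0 < y₀ := by positivity
  have hyx : y₀ < x₀ := by
    rw [hx₀def, hy₀def, div_lt_div_iff₀ h1b h1a]; nlinarith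
  set δ₀ : ℝ := Real.log x₀ - Real.log y₀ with hδ₀def
  have hδ₀pos : 0 < δ₀ := sub_pos.mpr (Real.log_lt_log hy₀ hyx)
  set T : ℝ := t₀ - (Real.log x₀ + Real.log y₀)/2 with hTdef
  obtain ⟨δ, hδ0, hδd⟩ := ricci_global_solution T t₀ δ₀
  have hδpos : ∀ t, 0 < δ t := ricci_delta_pos T t₀ δ₀ hδ₀pos hδ0 hδd
  set lx : ℝ → ℝ := fun t => (t - T) + δ t / 2 with hlxdef
  set ly : ℝ → ℝ := fun t => (t - T) - δ t / 2 with hlydef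
  set x : ℝ → ℝ := fun t => Real.exp (lx t) with hxdef
  set y : ℝ → ℝ := fun t => Real.exp (ly t) with hydef
  have hx : ∀ t, 0 < x t := fun t => Real.exp_pos _
  have hy : ∀ t, 0 < y t := fun t => Real.exp_pos _
  have hyxlt : ∀ t, y t < x t := by
    intro t
    rw [hxdef, hydef]
    apply Real.exp_lt_exp.mpr
    rw [hlxdef, hlydef]
    dsimp only
    have := hδpos t; linarith
  set m₂ : ℝ → ℝ := fun t => x t / (1 + x t) with hm₂def
  set m₃ : ℝ → ℝ := fun t => y t / (1 + y t) with hm₃def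
  have hm₂eq : ∀ t, m₂ t = x t / (1 + x t) := fun t => rfl
  have hm₃eq : ∀ t, m₃ t = y t / (1 + y t) := fun t => rfl
  -- region
  have hregion : ∀ t, 0 < m₃ t ∧ m₃ t < m₂ t ∧ m₂ t < 1 := by
    intro t
    have h1 := hx t; have h2 := hy t; have h3 := hyxlt t
    rw [hm₂eq, hm₃eq]
    refine ⟨by positivity, ?_, ?_⟩
    · rw [div_lt_div_iff₀ (by linarith) (by linarith)]; nlinarith
    · rw [div_lt_one (by linarith)]; linarith
  -- key identity
  have hFeq : ∀ t, ricciF T t (δ t) = 2*(x t - y t)/((1+x t)*(1+y t)) := by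
    intro t
    have h := ricci_key_identity (t - T) (δ t)
    rw [ricciF]
    rw [hxdef, hydef, hlxdef, hlydef]
    exact h
  have hF2 : ∀ t, ricciF T t (δ t) = 2*(m₂ t - m₃ t) := by
    intro t
    rw [hFeq t, hm₂eq, hm₃eq]
    have h1 := hx t; have h2 := hy t
    field_simp
    ring
  -- derivatives
  have hlxd : ∀ t, HasDerivAt lx (1 + (m₂ t - m₃ t)) t := by
    intro t
    have h1 : HasDerivAt lx (1 + ricciF T t (δ t)/2) t :=
      ((hasDerivAt_id t).sub_const T).add ((hδd t).div_const 2)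
    convert h1 using 1
    rw [hF2 t]; ring
  have hlyd : ∀ t, HasDerivAt ly (1 - (m₂ t - m₃ t)) t := by
    intro t
    have h1 : HasDerivAt ly (1 - ricciF T t (δ t)/2) t :=
      ((hasDerivAt_id t).sub_const T).sub ((hδd t).div_const 2)
    convert h1 using 1
    rw [hF2 t]; ring
  have hxd : ∀ t, HasDerivAt x (x t * (1 + (m₂ t - m₃ t))) t := by
    intro t
    exact (Real.hasDerivAt_exp (lx t)).comp t (hlxd t)
  have hyd : ∀ t, HasDerivAt y (y t * (1 - (m₂ t - m₃ t))) t := by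
    intro t
    exact (Real.hasDerivAt_exp (ly t)).comp t (hlyd t)
  have hm₂d : ∀ t, HasDerivAt m₂ (m₂ t * (1 - m₂ t) * (1 + m₂ t - m₃ t)) t := by
    intro t
    have h1 := hx t
    have hden : (1 + x t) ≠ 0 := by linarith
    have h := (hxd t).div ((hxd t).const_add 1) hden
    rw [hm₂def]
    refine h.congr_deriv ?_
    rw [hm₂eq, hm₃eq]
    have h2 := hy t
    field_simp
    ring
  have hm₃d : ∀ t, HasDerivAt m₃ (m₃ t * (1 - m₃ t) * (1 - m₂ t + m₃ t)) t := by
    intro t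
    have h2 := hy t
    have hden : (1 + y t) ≠ 0 := by linarith
    have h := (hyd t).div ((hyd t).const_add 1) hden
    rw [hm₃def]
    refine h.congr_deriv ?_
    rw [hm₂eq, hm₃eq]
    have h1 := hx t
    field_simp
    ring
  -- initial values
  have hxt₀ : x t₀ = x₀ := by
    rw [hxdef, hlxdef]
    dsimp only
    rw [hδ0, hTdef, hδ₀def]
    rw [show t₀ - (t₀ - (Real.log x₀ + Real.log y₀)/2) + (Real.log x₀ - Real.log y₀)/2
      = Real.log x₀ by ring]
    exact Real.exp_log hx₀
  have hyt₀ : y t₀ = y₀ := by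
    rw [hydef, hlydef]
    dsimp only
    rw [hδ0, hTdef, hδ₀def]
    rw [show t₀ - (t₀ - (Real.log x₀ + Real.log y₀)/2) - (Real.log x₀ - Real.log y₀)/2
      = Real.log y₀ by ring]
    exact Real.exp_log hy₀
  have hm₂a : m₂ t₀ = a := by
    rw [hm₂eq, hxt₀, hx₀def]
    rw [show (1:ℝ) + a/(1-a) = 1/(1-a) by field_simp; ring]
    field_simp
  have hm₃b : m₃ t₀ = b := by
    rw [hm₃eq, hyt₀, hy₀def]
    rw [show (1:ℝ) + b/(1-b) = 1/(1-b) by field_simp; ring]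
    field_simp
  -- limits at +infinity
  have hm₃mono : StrictMono m₃ := by
    apply strictMono_of_deriv_pos
    intro t
    rw [(hm₃d t).deriv]
    obtain ⟨r1, r2, r3⟩ := hregion t
    have : 0 < 1 - m₃ t := by linarith
    have : 0 < 1 - m₂ t + m₃ t := by linarith
    positivity
  have hm₃ge : ∀ t, t₀ ≤ t → b ≤ m₃ t := by
    intro t ht
    calc b = m₃ t₀ := hm₃b.symm
      _ ≤ m₃ t := hm₃mono.monotone ht
  have hgd : ∀ t, HasDerivAt (fun t => ly t - b*t) (1 - (m₂ t - m₃ t) - b) t := by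
    intro t
    have := (hlyd t).sub ((hasDerivAt_id t).const_mul b)
    refine this.congr_deriv ?_
    ring
  have hgmono : MonotoneOn (fun t => ly t - b*t) (Ici t₀) := by
    apply monotoneOn_of_deriv_nonneg (convex_Ici t₀)
    · exact fun t _ => ((hgd t).continuousAt).continuousWithinAt
    · exact fun t _ => ((hgd t).differentiableAt).differentiableWithinAt
    · intro t ht
      rw [interior_Ici] at ht
      rw [(hgd t).deriv]
      obtain ⟨r1, r2, r3⟩ := hregion t
      have := hm₃ge t ht.le
      linarith
  have hly_top : Tendsto ly atTop atTop := by
    have hev : (fun t => b*t + (ly t₀ - b*t₀)) ≤ᶠ[atTop] ly := by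
      filter_upwards [eventually_ge_atTop t₀] with t ht
      have := hgmono (self_mem_Ici (a := t₀)) (mem_Ici.mpr ht) ht
      dsimp at this
      skip
      linarith
    exact tendsto_atTop_mono' atTop hev
      (tendsto_atTop_add_const_right atTop _ (tendsto_id.const_mul_atTop h0))
  have hy_top : Tendsto y atTop atTop := by
    rw [hydef]
    exact Real.tendsto_exp_atTop.comp hly_top
  have hm₃1 : Tendsto m₃ atTop (𝓝 1) := by
    have heq : ∀ t, m₃ t = 1 - (1 + y t)⁻¹ := by
      intro t
      have h2 := hy t
      rw [hm₃eq]
      field_simp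
      ring
    have h2 : Tendsto (fun t => 1 - (1 + y t)⁻¹) atTop (𝓝 (1 - 0)) := by
      apply Tendsto.sub tendsto_const_nhds
      exact tendsto_inv_atTop_zero.comp (tendsto_atTop_add_const_left atTop 1 hy_top)
    rw [sub_zero] at h2
    exact h2.congr (fun t => (heq t).symm)
  have hm₂1 : Tendsto m₂ atTop (𝓝 1) :=
    tendsto_of_tendsto_of_tendsto_of_le_of_le hm₃1 tendsto_const_nhds
      (fun t => (hregion t).2.1.le) (fun t => (hregion t).2.2.le)
  -- limits at -infinity
  have hhd : ∀ t, HasDerivAt (fun s => lx s - s) (m₂ t - m₃ t) t := by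
    intro t
    have h := (hlxd t).sub (hasDerivAt_id' (x := t))
    refine h.congr_deriv ?_
    ring
  have hhmono : Monotone (fun t => lx t - t) := by
    apply monotone_of_deriv_nonneg
    · exact fun t => (hhd t).differentiableAt
    · intro t
      rw [(hhd t).deriv]
      obtain ⟨r1, r2, r3⟩ := hregion t
      linarith
  have hlx_bot : Tendsto lx atBot atBot := by
    have hev : lx ≤ᶠ[atBot] (fun t => t + (lx t₀ - t₀)) := by
      filter_upwards [eventually_le_atBot t₀] with t ht
      have := hhmono ht
      dsimp at this
      skip
      linarith
    exact tendsto_atBot_mono' atBot hev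
      (tendsto_atBot_add_const_right atBot _ tendsto_id)
  have hx_bot : Tendsto x atBot (𝓝 0) := by
    rw [hxdef]
    exact Real.tendsto_exp_atBot.comp hlx_bot
  have hm₂0 : Tendsto m₂ atBot (𝓝 0) := by
    apply tendsto_of_tendsto_of_tendsto_of_le_of_le tendsto_const_nhds hx_bot
    · intro t
      show (0:ℝ) ≤ m₂ t
      exact ((hregion t).1.trans (hregion t).2.1).le
    · intro t
      rw [hm₂eq]
      exact div_le_self (hx t).le (by linarith [hx t])
  have hm₃0 : Tendsto m₃ atBot (𝓝 0) :=
    tendsto_of_tendsto_of_tendsto_of_le_of_le tendsto_const_nhds hm₂0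
      (fun t => (hregion t).1.le) (fun t => (hregion t).2.1.le)
  refine ⟨m₂, m₃, hm₂a, hm₃b, hm₂d, hm₃d, hregion,
    hm₂1.prodMk_nhds hm₃1, hm₂0.prodMk_nhds hm₃0, ?_⟩
  intro s z₂ z₃ hsopen hsord hts₀ hz₂ hz₃ hz₂0 hz₃0 t₁ ht₁
  set V : ℝ × ℝ → ℝ × ℝ :=
    fun p => (p.1*(1-p.1)*(1+p.1-p.2), p.2*(1-p.2)*(1-p.1+p.2)) with hVdef
  set Z : ℝ → ℝ × ℝ := fun t => (z₂ t, z₃ t) with hZdef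
  set M : ℝ → ℝ × ℝ := fun t => (m₂ t, m₃ t) with hMdef
  have hZd : ∀ t ∈ s, HasDerivAt Z (V (Z t)) t := fun t ht => (hz₂ t ht).prodMk (hz₃ t ht)
  have hMd : ∀ t, HasDerivAt M (V (M t)) t := fun t => (hm₂d t).prodMk (hm₃d t)
  have hmin : min t₀ t₁ ∈ s := by
    rcases le_total t₀ t₁ with h | h
    · rwa [min_eq_left h]
    · rwa [min_eq_right h]
  have hmax : max t₀ t₁ ∈ s := by
    rcases le_total t₀ t₁ with h | h
    · rwa [max_eq_right h]
    · rwa [max_eq_left h]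
  obtain ⟨ε₁, hε₁, hball₁⟩ := Metric.isOpen_iff.mp hsopen (min t₀ t₁) hmin
  obtain ⟨ε₂, hε₂, hball₂⟩ := Metric.isOpen_iff.mp hsopen (max t₀ t₁) hmax
  set p : ℝ := min t₀ t₁ - ε₁/2 with hpdef
  set q : ℝ := max t₀ t₁ + ε₂/2 with hqdef
  have hp : p ∈ s := by
    apply hball₁
    rw [Metric.mem_ball, Real.dist_eq, hpdef,
      show min t₀ t₁ - ε₁/2 - min t₀ t₁ = -(ε₁/2) by ring, abs_neg,
      abs_of_nonneg (by linarith)]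
    linarith
  have hq : q ∈ s := by
    apply hball₂
    rw [Metric.mem_ball, Real.dist_eq, hqdef,
      show max t₀ t₁ + ε₂/2 - max t₀ t₁ = ε₂/2 by ring,
      abs_of_nonneg (by linarith)]
    linarith
  have hsub : Icc p q ⊆ s := hsord.out hp hq
  have hIoo : Ioo p q ⊆ s := fun u hu => hsub (Ioo_subset_Icc_self hu)
  have ht₀I : t₀ ∈ Ioo p q := by
    constructor
    · have := min_le_left t₀ t₁; rw [hpdef]; linarith
    · have := le_max_left t₀ t₁; rw [hqdef]; linarith
  have ht₁I : t₁ ∈ Ioo p q := by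
    constructor
    · have := min_le_right t₀ t₁; rw [hpdef]; linarith
    · have := le_max_right t₀ t₁; rw [hqdef]; linarith
  have hZc : ContinuousOn Z (Icc p q) :=
    fun u hu => ((hZd u (hsub hu)).continuousAt).continuousWithinAt
  have hMc : ContinuousOn M (Icc p q) :=
    fun u hu => ((hMd u).continuousAt).continuousWithinAt
  obtain ⟨C₁, hC₁⟩ := (isCompact_Icc (a := p) (b := q)).exists_bound_of_continuousOn hZc
  obtain ⟨C₂, hC₂⟩ := (isCompact_Icc (a := p) (b := q)).exists_bound_of_continuousOn hMc
  set R : ℝ := max C₁ (max C₂ 0) with hRdef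
  have hR : 0 ≤ R := le_max_of_le_right (le_max_right _ _)
  have hmemZ : ∀ u ∈ Ioo p q, Z u ∈ Metric.closedBall (0:ℝ×ℝ) R := by
    intro u hu
    rw [Metric.mem_closedBall, dist_zero_right]
    exact (hC₁ u (Ioo_subset_Icc_self hu)).trans (le_max_left _ _)
  have hmemM : ∀ u ∈ Ioo p q, M u ∈ Metric.closedBall (0:ℝ×ℝ) R := by
    intro u hu
    rw [Metric.mem_closedBall, dist_zero_right]
    exact (hC₂ u (Ioo_subset_Icc_self hu)).trans
      (le_max_of_le_right (le_max_left _ _))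
  have hlipV : ∀ _t : ℝ, LipschitzOnWith (Real.toNNReal (1+2*R+6*R^2)) V
      (Metric.closedBall (0:ℝ×ℝ) R) := by
    intro _t
    have h := ricciB14_lip R hR
    rwa [← hVdef] at h
  have key : EqOn Z M (Ioo p q) := by
    apply ODE_solution_unique_of_mem_Ioo (v := fun _ => V)
      (s := fun _ => Metric.closedBall (0:ℝ×ℝ) R) (fun t _ => hlipV t) ht₀I
      (fun u hu => ⟨hZd u (hIoo hu), hmemZ u hu⟩)
      (fun u hu => ⟨hMd u, hmemM u hu⟩) ?_
    rw [hZdef, hMdef]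
    dsimp only
    rw [hz₂0, hz₃0, hm₂a, hm₃b]
  have hkey := key ht₁I
  rw [hZdef, hMdef] at hkey
  dsimp only at hkey
  exact ⟨congrArg Prod.fst hkey, congrArg Prod.snd hkey⟩
end

section
/- Let (m₂,m₃) be a maximal solution of the system dm₂/dt = m₂(1−m₂)(1+m₂−m₃), dm₃/dt = m₃(1−m₃)(1−m₂+m₃) with 0 < m₂(t₀) < 1 and m₃(t₀) < 0 at some time t₀. Then the solution is defined for all t ≥ t₀, satisfies 0 < m₂(t) < 1 and m₃(t) < 0 for all t ≥ t₀, and (m₂(t),m₃(t)) → (1,0) as t → ∞. -/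
open Filter Set Topology

section RicciFlowStrip

open Real

noncomputable def sig (y : ℝ) : ℝ := Real.exp y / (1 + Real.exp y)

lemma one_add_exp_pos (y : ℝ) : 0 < 1 + Real.exp y := by positivity

lemma sig_pos (y : ℝ) : 0 < sig y := div_pos (Real.exp_pos y) (one_add_exp_pos y)

lemma sig_lt_one (y : ℝ) : sig y < 1 := by
  rw [sig, div_lt_one (one_add_exp_pos y)]; linarith

lemma one_sub_sig (y : ℝ) : 1 - sig y = 1 / (1 + Real.exp y) := by
  rw [sig]; field_simp; ring

lemma hasDerivAt_sig (y : ℝ) : HasDerivAt sig (sig y * (1 - sig y)) y := by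
  have h : HasDerivAt (fun y => Real.exp y / (1 + Real.exp y))
      ((Real.exp y * (1 + Real.exp y) - Real.exp y * Real.exp y) / (1 + Real.exp y) ^ 2) y :=
    (Real.hasDerivAt_exp y).div ((Real.hasDerivAt_exp y).const_add 1)
      (one_add_exp_pos y).ne'
  refine h.congr_deriv ?_
  have h0 := (one_add_exp_pos y).ne'
  rw [sig]
  field_simp

lemma exp_lip {W s t : ℝ} (hs : s ≤ W) (ht : t ≤ W) :
    |Real.exp s - Real.exp t| ≤ Real.exp W * |s - t| := by
  wlog h : t ≤ s generalizing s t
  · rw [abs_sub_comm, abs_sub_comm s t]; exact this ht hs (le_of_not_ge h)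
  rw [abs_of_nonneg (sub_nonneg.2 (Real.exp_le_exp.2 h)), abs_of_nonneg (sub_nonneg.2 h)]
  have h1 : Real.exp s - Real.exp t ≤ Real.exp s * (s - t) := by
    have := Real.add_one_le_exp (t - s)
    have hes : (0:ℝ) < Real.exp s := Real.exp_pos s
    have : Real.exp t = Real.exp s * Real.exp (t - s) := by rw [← Real.exp_add]; ring_nf
    nlinarith [Real.exp_pos (t - s)]
  have h2 : Real.exp s ≤ Real.exp W := Real.exp_le_exp.2 hs
  nlinarith


lemma sig_lip (s t : ℝ) : |sig s - sig t| ≤ |s - t| := by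
  wlog h : t ≤ s generalizing s t
  · rw [abs_sub_comm, abs_sub_comm s t]; exact this t s (le_of_not_ge h)
  have hs := Real.exp_pos s; have ht := Real.exp_pos t
  have hmono : Real.exp t ≤ Real.exp s := Real.exp_le_exp.2 h
  have hkey : Real.exp s - Real.exp t ≤ Real.exp s * (s - t) := by
    have h1 := Real.add_one_le_exp (t - s)
    have h2 : Real.exp t = Real.exp s * Real.exp (t - s) := by rw [← Real.exp_add]; ring_nf
    nlinarith [Real.exp_pos (t - s)]
  have hdiff : sig s - sig t = (Real.exp s - Real.exp t) / ((1 + Real.exp s) * (1 + Real.exp t)) := by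
    rw [sig, sig]; field_simp; ring
  have hpos : (0:ℝ) < (1 + Real.exp s) * (1 + Real.exp t) := by positivity
  rw [hdiff, abs_of_nonneg (div_nonneg (sub_nonneg.2 hmono) hpos.le),
    abs_of_nonneg (sub_nonneg.2 h), div_le_iff₀ hpos]
  nlinarith

lemma sig_tendsto_one : Tendsto sig atTop (𝓝 1) := by
  have h1 : Tendsto (fun y : ℝ => 1 - (1 + Real.exp y)⁻¹) atTop (𝓝 1) := by
    have := (tendsto_atTop_add_const_left atTop (1:ℝ) Real.tendsto_exp_atTop).inv_tendsto_atTop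
    simpa using tendsto_const_nhds.sub this
  refine h1.congr fun y => ?_
  rw [sig]
  have := (one_add_exp_pos y).ne'
  field_simp
  ring

/-- If `w t ≤ w τ` on a left neighborhood of `τ`, the derivative at `τ` is nonneg. -/
lemma deriv_nonneg_of_le_left {w : ℝ → ℝ} {d τ T : ℝ} (hT : T < τ)
    (hd : HasDerivAt w d τ) (hle : ∀ t ∈ Ioo T τ, w t ≤ w τ) : 0 ≤ d := by
  have hs : Tendsto (slope w τ) (𝓝[<] τ) (𝓝 d) :=
    (hasDerivAt_iff_tendsto_slope.1 hd).mono_left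
      (nhdsWithin_mono τ fun x hx => ne_of_lt hx)
  refine ge_of_tendsto hs ?_
  filter_upwards [Ioo_mem_nhdsLT_of_mem (⟨hT, le_rfl⟩ : τ ∈ Ioc T τ)] with t ht
  have h1 : w t - w τ ≤ 0 := sub_nonpos.2 (hle t ht)
  have h2 : t - τ < 0 := sub_neg.2 ht.2
  rw [slope_def_field]
  exact div_nonneg_of_nonpos h1 h2.le

/-- Barrier lemma: if the derivative is negative whenever `w t = c` (for `t ≥ T`),
and `w T < c`, then `w` stays below `c` for `t ≥ T`. -/
lemma stay_below {w dw : ℝ → ℝ} (hw : ∀ t, HasDerivAt w (dw t) t) {c T : ℝ}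
    (h0 : w T < c) (hneg : ∀ t, T ≤ t → w t = c → dw t < 0) :
    ∀ t, T ≤ t → w t < c := by
  by_contra hcon
  push_neg at hcon
  obtain ⟨t₁, ht₁T, ht₁⟩ := hcon
  have hwc : Continuous w := by
    rw [continuous_iff_continuousAt]; exact fun t => (hw t).continuousAt
  set S : Set ℝ := {t | T ≤ t ∧ c ≤ w t} with hS
  have hSne : S.Nonempty := ⟨t₁, ht₁T, ht₁⟩
  have hScl : IsClosed S := by
    have : S = Ici T ∩ w ⁻¹' (Ici c) := rfl
    rw [this]; exact isClosed_Ici.inter (isClosed_Ici.preimage hwc)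
  have hSbdd : BddBelow S := ⟨T, fun t ht => ht.1⟩
  have hτS : sInf S ∈ S := hScl.csInf_mem hSne hSbdd
  set τ := sInf S with hτdef
  have hTτ : T < τ := lt_of_le_of_ne hτS.1 (fun h => absurd (h ▸ hτS.2) (not_le.2 h0))
  have hbelow : ∀ t ∈ Ioo T τ, w t < c := by
    intro t ht
    by_contra hge
    exact absurd (csInf_le hSbdd (⟨ht.1.le, not_lt.1 hge⟩ : t ∈ S)) (not_le.2 ht.2)
  have hwτ : w τ = c := by
    refine le_antisymm ?_ hτS.2
    have htend : Tendsto w (𝓝[<] τ) (𝓝 (w τ)) :=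
      (hwc.tendsto τ).mono_left nhdsWithin_le_nhds
    refine le_of_tendsto htend ?_
    filter_upwards [Ioo_mem_nhdsLT_of_mem (⟨hTτ, le_rfl⟩ : τ ∈ Ioc T τ)] with t ht
    exact (hbelow t ht).le
  have hd0 : 0 ≤ dw τ :=
    deriv_nonneg_of_le_left hTτ (hw τ) fun t ht => by rw [hwτ]; exact (hbelow t ht).le
  exact absurd (hneg τ hτS.1 hwτ) (not_lt.2 hd0)


lemma escape_below {w dw : ℝ → ℝ} (hw : ∀ t, HasDerivAt w (dw t) t) {c T δ : ℝ}
    (hδ : 0 < δ) (hneg : ∀ t, T ≤ t → c ≤ w t → dw t ≤ -δ) :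
    ∃ T', T ≤ T' ∧ w T' < c := by
  by_contra hcon
  push_neg at hcon
  have habove : ∀ t, T ≤ t → c ≤ w t := fun t ht => hcon t ht
  have hg : ∀ t, HasDerivAt (fun t => w t + δ * t) (dw t + δ) t := by
    intro t
    exact ((hw t).add ((hasDerivAt_id' t).const_mul δ)).congr_deriv (by ring)
  have hanti : AntitoneOn (fun t => w t + δ * t) (Ici T) := by
    refine antitoneOn_of_deriv_nonpos (convex_Ici T) ?_ ?_ ?_
    · exact (Continuous.continuousOn (by
        rw [continuous_iff_continuousAt]; exact fun t => (hg t).continuousAt))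
    · intro t _; exact (hg t).differentiableAt.differentiableWithinAt
    · intro t ht
      rw [(hg t).deriv]
      rw [interior_Ici] at ht
      have := hneg t (le_of_lt ht) (habove t (le_of_lt ht))
      linarith
  have key : ∀ t, T ≤ t → w t + δ * t ≤ w T + δ * T :=
    fun t ht => hanti (mem_Ici.2 le_rfl) (mem_Ici.2 ht) ht
  have hq : 0 ≤ (w T - c + δ) / δ := div_nonneg (by linarith [habove T le_rfl]) hδ.le
  have hδt₂ : δ * ((w T - c + δ) / δ + T) = w T - c + δ + δ * T := by
    field_simp
  have hTt₂ : T ≤ (w T - c + δ) / δ + T := by linarith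
  have h2 := key _ hTt₂
  have h3 := habove _ hTt₂
  linarith

lemma eventually_stay_below {w dw : ℝ → ℝ} (hw : ∀ t, HasDerivAt w (dw t) t) {c T δ : ℝ}
    (hδ : 0 < δ) (hneg : ∀ t, T ≤ t → c ≤ w t → dw t ≤ -δ) :
    ∃ T', T ≤ T' ∧ ∀ t, T' ≤ t → w t < c := by
  obtain ⟨T', hTT', hT'⟩ := escape_below hw hδ hneg
  exact ⟨T', hTT', stay_below hw hT' fun t ht heq =>
    lt_of_le_of_lt (hneg t (hTT'.trans ht) heq.ge) (by linarith)⟩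


/-- Global existence for a bounded globally-Lipschitz autonomous ODE. -/
lemma exists_global_solution {E : Type*} [NormedAddCommGroup E] [NormedSpace ℝ E]
    [CompleteSpace E] (v : E → E) (K : NNReal) (hl : LipschitzWith K v) {C : ℝ}
    (hbd : ∀ x, ‖v x‖ ≤ C) (t₀ : ℝ) (x₀ : E) :
    ∃ f : ℝ → E, f t₀ = x₀ ∧ ∀ t, HasDerivAt f (v (f t)) t := by
  have hC0 : 0 ≤ C := le_trans (norm_nonneg _) (hbd x₀)
  have hpl : ∀ n : ℕ, IsPicardLindelof (fun _ => v) (tmin := t₀ - (n + 1)) (tmax := t₀ + (n + 1))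
      ⟨t₀, by constructor <;> linarith [Nat.cast_nonneg (α := ℝ) n]⟩ x₀ (C.toNNReal * (n + 1)) 0
      C.toNNReal K := by
    intro n
    have hn1 : (0:ℝ) ≤ (n:ℝ) + 1 := by positivity
    refine IsPicardLindelof.of_time_independent
      (fun x _ => (hbd x).trans (Real.le_coe_toNNReal C)) hl.lipschitzOnWith ?_
    simp only [add_sub_cancel_left, sub_sub_cancel, max_self, NNReal.coe_mul, NNReal.coe_zero,
      sub_zero, Real.coe_toNNReal _ hC0, NNReal.coe_add, NNReal.coe_natCast, NNReal.coe_one, le_refl]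
  choose F hF0' hF using fun n : ℕ => (hpl n).exists_eq_forall_mem_Icc_hasDerivWithinAt₀
  have hF0 : ∀ n, F n t₀ = x₀ := hF0'
  -- all solutions agree on common domains
  have hcont : ∀ n : ℕ, ContinuousOn (F n) (Icc (t₀ - (n + 1)) (t₀ + (n + 1))) :=
    fun n t ht => (hF n t ht).continuousWithinAt
  have hder : ∀ n : ℕ, ∀ t ∈ Ioo (t₀ - (n + 1)) (t₀ + (n + 1)), HasDerivAt (F n) (v (F n t)) t :=
    fun n t ht => (hF n t (Ioo_subset_Icc_self ht)).hasDerivAt (Icc_mem_nhds ht.1 ht.2)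
  have key : ∀ n m : ℕ, ∀ t ∈ Icc (t₀ - ((min n m : ℕ) + 1)) (t₀ + ((min n m : ℕ) + 1)),
      F n t = F m t := by
    intro n m t ht
    have hmn : ((min n m : ℕ) : ℝ) ≤ (n : ℝ) := Nat.cast_le.2 (min_le_left n m)
    have hmm : ((min n m : ℕ) : ℝ) ≤ (m : ℝ) := Nat.cast_le.2 (min_le_right n m)
    have hsub1 : Icc (t₀ - ((min n m : ℕ) + 1)) (t₀ + ((min n m : ℕ) + 1)) ⊆
        Icc (t₀ - (n + 1)) (t₀ + (n + 1)) := Icc_subset_Icc (by linarith) (by linarith)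
    have hsub2 : Icc (t₀ - ((min n m : ℕ) + 1)) (t₀ + ((min n m : ℕ) + 1)) ⊆
        Icc (t₀ - (m + 1)) (t₀ + (m + 1)) := Icc_subset_Icc (by linarith) (by linarith)
    have hsub1' : Ioo (t₀ - ((min n m : ℕ) + 1)) (t₀ + ((min n m : ℕ) + 1)) ⊆
        Ioo (t₀ - (n + 1)) (t₀ + (n + 1)) := Ioo_subset_Ioo (by linarith) (by linarith)
    have hsub2' : Ioo (t₀ - ((min n m : ℕ) + 1)) (t₀ + ((min n m : ℕ) + 1)) ⊆
        Ioo (t₀ - (m + 1)) (t₀ + (m + 1)) := Ioo_subset_Ioo (by linarith) (by linarith)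
    have h01 : (0:ℝ) < ((min n m : ℕ) : ℝ) + 1 := by positivity
    refine ODE_solution_unique_of_mem_Icc (v := fun _ => v) (s := fun _ => univ)
      (K := K) (fun _ _ => hl.lipschitzOnWith)
      (show t₀ ∈ Ioo (t₀ - (((min n m : ℕ):ℝ) + 1)) (t₀ + (((min n m : ℕ):ℝ) + 1)) from
        ⟨by linarith, by linarith⟩)
      ((hcont n).mono hsub1) (fun t ht => hder n t (hsub1' ht)) (fun _ _ => trivial)
      ((hcont m).mono hsub2) (fun t ht => hder m t (hsub2' ht)) (fun _ _ => trivial)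
      (by rw [hF0 n, hF0 m]) ht
  refine ⟨fun t => F ⌈|t - t₀|⌉₊ t, by simpa using hF0 _, ?_⟩
  intro t
  set n := ⌈|t - t₀|⌉₊ with hn
  have htn : |t - t₀| ≤ (n : ℝ) := Nat.le_ceil _
  have htU : t ∈ Ioo (t₀ - (n + 1)) (t₀ + (n + 1)) := by
    rw [abs_le] at htn; constructor <;> linarith
  have heq : ∀ᶠ s in 𝓝 t, F ⌈|s - t₀|⌉₊ s = F n s := by
    filter_upwards [isOpen_Ioo.mem_nhds htU] with s hs
    have hsn : |s - t₀| ≤ (⌈|s - t₀|⌉₊ : ℝ) := Nat.le_ceil _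
    have hs' : |s - t₀| ≤ ((min ⌈|s - t₀|⌉₊ n : ℕ) : ℝ) + 1 := by
      rcases min_cases (⌈|s - t₀|⌉₊) n with ⟨h1, _⟩ | ⟨h1, _⟩ <;> rw [h1]
      · linarith
      · rw [abs_le] at *
        rcases hs with ⟨h2, h3⟩
        constructor <;> linarith
    refine key _ _ s ?_
    rw [abs_le] at hs'
    constructor <;> linarith [hs'.1, hs'.2]
  have hFn : HasDerivAt (F n) (v (F n t)) t := hder n t htU
  have heqt : F ⌈|t - t₀|⌉₊ t = F n t := by rw [← hn]
  rw [show v (F ⌈|t - t₀|⌉₊ t) = v (F n t) by rw [heqt]]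
  exact hFn.congr_of_eventuallyEq heq


noncomputable def Ef (W w : ℝ) : ℝ := Real.exp (min w W)

noncomputable def Vf (W : ℝ) (p : ℝ × ℝ) : ℝ × ℝ :=
  (1 + sig p.1 + Ef W p.2, (1 + Ef W p.2) * (1 - sig p.1 - Ef W p.2))

lemma Ef_pos (W w : ℝ) : 0 < Ef W w := Real.exp_pos _
lemma Ef_le (W w : ℝ) : Ef W w ≤ Real.exp W := Real.exp_le_exp.2 (min_le_right _ _)

lemma Ef_lip (W s t : ℝ) : |Ef W s - Ef W t| ≤ Real.exp W * |s - t| := by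
  refine le_trans (exp_lip (min_le_right s W) (min_le_right t W)) ?_
  have h : |min s W - min t W| ≤ |s - t| := by
    rw [abs_le]
    simp only [min_def]
    split_ifs <;> constructor <;>
      linarith [le_abs_self (s - t), neg_abs_le (s - t), abs_nonneg (s - t)]
  exact mul_le_mul_of_nonneg_left h (Real.exp_pos W).le

lemma Vf_lip (W : ℝ) :
    LipschitzWith (Real.toNNReal ((1 + Real.exp W) * (1 + 2 * Real.exp W))) (Vf W) := by
  have hk0 : (0:ℝ) ≤ (1 + Real.exp W) * (1 + 2 * Real.exp W) := by positivity
  refine LipschitzWith.of_dist_le_mul fun p q => ?_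
  rw [Real.coe_toNNReal _ hk0, Prod.dist_eq]
  have hd1 : dist p.1 q.1 ≤ dist p q := le_max_left _ _
  have hd2 : dist p.2 q.2 ≤ dist p q := le_max_right _ _
  have hdnn : 0 ≤ dist p q := dist_nonneg
  rw [Real.dist_eq] at hd1 hd2
  have hB : |sig p.1 - sig q.1| ≤ dist p q := le_trans (sig_lip _ _) hd1
  have hA : |Ef W p.2 - Ef W q.2| ≤ Real.exp W * dist p q :=
    le_trans (Ef_lip W _ _) (mul_le_mul_of_nonneg_left hd2 (Real.exp_pos W).le)
  have hE := Real.exp_pos W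
  have hA1 := Ef_pos W p.2; have hA2 := Ef_pos W q.2
  have hA1' := Ef_le W p.2; have hA2' := Ef_le W q.2
  have hB1 := sig_pos p.1; have hB2 := sig_pos q.1
  have hB1' := sig_lt_one p.1; have hB2' := sig_lt_one q.1
  rw [abs_le] at hA hB
  refine max_le ?_ ?_ <;> rw [Real.dist_eq, Vf, Vf, abs_le] <;> constructor <;>
    simp only <;> nlinarith [mul_nonneg hdnn hE.le]
lemma Vf_bound (W : ℝ) (p : ℝ × ℝ) :
    ‖Vf W p‖ ≤ (1 + Real.exp W) * (2 + Real.exp W) := by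
  have hE := Real.exp_pos W
  have hA := Ef_pos W p.2; have hA' := Ef_le W p.2
  have hB := sig_pos p.1; have hB' := sig_lt_one p.1
  rw [Vf, Prod.norm_def]
  refine max_le ?_ ?_ <;> rw [Real.norm_eq_abs, abs_le] <;> constructor <;> simp only <;> nlinarith


theorem construction (t₀ a b : ℝ) (ha0 : 0 < a) (ha1 : a < 1) (hb : b < 0) :
    ∃ m₂ m₃ : ℝ → ℝ,
      Continuous m₂ ∧ Continuous m₃ ∧
      m₂ t₀ = a ∧ m₃ t₀ = b ∧
      (∀ t ∈ Ici t₀, HasDerivAt m₂ (m₂ t * (1 - m₂ t) * (1 + m₂ t - m₃ t)) t) ∧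
      (∀ t ∈ Ici t₀, HasDerivAt m₃ (m₃ t * (1 - m₃ t) * (1 - m₂ t + m₃ t)) t) ∧
      (∀ t ∈ Ici t₀, 0 < m₂ t ∧ m₂ t < 1 ∧ m₃ t < 0) ∧
      Tendsto (fun t => (m₂ t, m₃ t)) atTop (𝓝 ((1 : ℝ), (0 : ℝ))) := by
  set W : ℝ := max 1 (Real.log (-b) + 1) with hWdef
  have hW1 : (1:ℝ) ≤ W := le_max_left _ _
  have hWlog : Real.log (-b) + 1 ≤ W := le_max_right _ _
  have hb' : (0:ℝ) < -b := by linarith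
  have ha' : (0:ℝ) < 1 - a := by linarith
  have hr : (0:ℝ) < a / (1 - a) := div_pos ha0 ha'
  obtain ⟨f, hf0, hf⟩ := exists_global_solution (Vf W) _ (Vf_lip W) (Vf_bound W) t₀
    (Real.log (a / (1 - a)), Real.log (-b))
  set x : ℝ → ℝ := fun t => (f t).1 with hxdef
  set w : ℝ → ℝ := fun t => (f t).2 with hwdef'
  have hx : ∀ t, HasDerivAt x (1 + sig (x t) + Ef W (w t)) t := by
    intro t
    have h := (ContinuousLinearMap.fst ℝ ℝ ℝ).hasFDerivAt.comp_hasDerivAt t (hf t)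
    exact h
  have hw : ∀ t, HasDerivAt w ((1 + Ef W (w t)) * (1 - sig (x t) - Ef W (w t))) t := by
    intro t
    have h := (ContinuousLinearMap.snd ℝ ℝ ℝ).hasFDerivAt.comp_hasDerivAt t (hf t)
    exact h
  have hx0 : x t₀ = Real.log (a / (1 - a)) := by simp only [hxdef, hf0]
  have hw0 : w t₀ = Real.log (-b) := by simp only [hwdef', hf0]
  have hexpW : (1:ℝ) < Real.exp W := by
    rw [← Real.exp_zero, Real.exp_lt_exp]; linarith
  -- forward invariance : w t < W for t ≥ t₀
  have hWlt : ∀ t, t₀ ≤ t → w t < W := by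
    refine stay_below hw ?_ ?_
    · rw [hw0]; linarith
    · intro t _ hwt
      have hEf : Ef W (w t) = Real.exp W := by rw [Ef, hwt, min_self]
      rw [hEf]
      have := sig_pos (x t)
      exact mul_neg_of_pos_of_neg (by linarith) (by linarith)
  have hsigc : Continuous sig := by
    rw [continuous_iff_continuousAt]; exact fun y => (hasDerivAt_sig y).continuousAt
  have hxc : Continuous x := by
    rw [continuous_iff_continuousAt]; exact fun t => (hx t).continuousAt
  have hwc : Continuous w := by
    rw [continuous_iff_continuousAt]; exact fun t => (hw t).continuousAt
  refine ⟨fun t => sig (x t), fun t => -Real.exp (w t), hsigc.comp hxc,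
    (Real.continuous_exp.comp hwc).neg, ?_, ?_, ?_, ?_, ?_, ?_⟩
  · show sig (x t₀) = a
    rw [hx0, sig, Real.exp_log hr]
    field_simp
    ring
  · show -Real.exp (w t₀) = b
    rw [hw0, Real.exp_log hb', neg_neg]
  · -- m₂ derivative
    intro t ht
    have hEf : Ef W (w t) = Real.exp (w t) := by
      rw [Ef, min_eq_left (hWlt t ht).le]
    have h := (hasDerivAt_sig (x t)).comp t (hx t)
    refine h.congr_deriv ?_
    rw [hEf]
    ring
  · -- m₃ derivative
    intro t ht
    have hEf : Ef W (w t) = Real.exp (w t) := by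
      rw [Ef, min_eq_left (hWlt t ht).le]
    have h := ((Real.hasDerivAt_exp (w t)).comp t (hw t)).neg
    refine h.congr_deriv ?_
    rw [hEf]
    ring
  · intro t _
    exact ⟨sig_pos _, sig_lt_one _, by simpa using neg_neg_of_pos (Real.exp_pos (w t))⟩
  · -- convergence
    have hg : ∀ t, HasDerivAt (fun t => x t - t) (sig (x t) + Ef W (w t)) t := by
      intro t
      have h := (hx t).sub (hasDerivAt_id t)
      refine h.congr_deriv ?_
      ring
    have hgmono : Monotone (fun t => x t - t) := by
      refine monotone_of_deriv_nonneg (fun t => (hg t).differentiableAt) ?_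
      intro t
      rw [(hg t).deriv]
      have := sig_pos (x t); have := Real.exp_pos (min (w t) W)
      have : 0 < Ef W (w t) := Real.exp_pos _
      linarith [sig_pos (x t)]
    have hxtop : Tendsto x atTop atTop := by
      refine tendsto_atTop_mono' atTop ?_ (tendsto_atTop_add_const_left _ (x t₀ - t₀) tendsto_id)
      filter_upwards [eventually_ge_atTop t₀] with t ht
      have h2 : x t₀ - t₀ ≤ x t - t := hgmono ht
      show x t₀ - t₀ + t ≤ x t
      linarith
    have hm₂lim : Tendsto (fun t => sig (x t)) atTop (𝓝 1) := sig_tendsto_one.comp hxtop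
    have hwbot : Tendsto w atTop atBot := by
      rw [tendsto_atBot]
      intro c
      have hδ : (0:ℝ) < Real.exp c / 2 := by positivity
      have hev : ∀ᶠ t in atTop, 1 - Real.exp c / 2 < sig (x t) ∧ t₀ ≤ t :=
        (hm₂lim.eventually_const_lt (by linarith)).and (eventually_ge_atTop t₀)
      obtain ⟨T, hT⟩ := eventually_atTop.1 hev
      have hneg : ∀ t, T ≤ t → c ≤ w t → (1 + Ef W (w t)) * (1 - sig (x t) - Ef W (w t)) ≤
          -(Real.exp c / 2) := by
        intro t hTt hcw
        obtain ⟨hsig, ht₀⟩ := hT t hTt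
        have hEf : Ef W (w t) = Real.exp (w t) := by
          rw [Ef, min_eq_left (hWlt t ht₀).le]
        have hEc : Real.exp c ≤ Ef W (w t) := by rw [hEf]; exact Real.exp_le_exp.2 hcw
        have hE0 : 0 < Ef W (w t) := Real.exp_pos _
        nlinarith
      obtain ⟨T', _, hT'⟩ := eventually_stay_below hw hδ hneg
      exact eventually_atTop.2 ⟨T', fun t ht => (hT' t ht).le⟩
    have hm₃lim : Tendsto (fun t => -Real.exp (w t)) atTop (𝓝 0) := by
      have := (Real.tendsto_exp_atBot.comp hwbot).neg
      simpa using this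
    exact hm₂lim.prodMk_nhds hm₃lim


noncomputable def Gf (p : ℝ × ℝ) : ℝ × ℝ :=
  (p.1 * (1 - p.1) * (1 + p.1 - p.2), p.2 * (1 - p.2) * (1 - p.1 + p.2))

lemma Gf_contDiff : ContDiff ℝ 1 Gf := by
  apply ContDiff.prodMk <;> fun_prop

lemma forward_uniqueness {t₀ t₁ a b : ℝ} {m₂ m₃ : ℝ → ℝ}
    (hm₂c : Continuous m₂) (hm₃c : Continuous m₃)
    (hm₂ : ∀ t ∈ Ici t₀, HasDerivAt m₂ (m₂ t * (1 - m₂ t) * (1 + m₂ t - m₃ t)) t)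
    (hm₃ : ∀ t ∈ Ici t₀, HasDerivAt m₃ (m₃ t * (1 - m₃ t) * (1 - m₂ t + m₃ t)) t)
    (hm20 : m₂ t₀ = a) (hm30 : m₃ t₀ = b)
    {s : Set ℝ} {z₂ z₃ : ℝ → ℝ} (hso : IsOpen s) (hsc : s.OrdConnected) (ht₀s : t₀ ∈ s)
    (hz₂ : ∀ t ∈ s, HasDerivAt z₂ (z₂ t * (1 - z₂ t) * (1 + z₂ t - z₃ t)) t)
    (hz₃ : ∀ t ∈ s, HasDerivAt z₃ (z₃ t * (1 - z₃ t) * (1 - z₂ t + z₃ t)) t)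
    (hz20 : z₂ t₀ = a) (hz30 : z₃ t₀ = b)
    (ht₁s : t₁ ∈ s) (ht01 : t₀ ≤ t₁) : z₂ t₁ = m₂ t₁ ∧ z₃ t₁ = m₃ t₁ := by
  set M : ℝ → ℝ × ℝ := fun t => (m₂ t, m₃ t) with hMdef
  set Z : ℝ → ℝ × ℝ := fun t => (z₂ t, z₃ t) with hZdef
  have hM' : ∀ t, t₀ ≤ t → HasDerivAt M (Gf (M t)) t :=
    fun t ht => (hm₂ t ht).prodMk (hm₃ t ht)
  have hZ' : ∀ t ∈ s, HasDerivAt Z (Gf (Z t)) t :=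
    fun t ht => (hz₂ t ht).prodMk (hz₃ t ht)
  have hZM0 : Z t₀ = M t₀ := by
    show (z₂ t₀, z₃ t₀) = (m₂ t₀, m₃ t₀)
    rw [hz20, hz30, hm20, hm30]
  have hsub : Icc t₀ t₁ ⊆ s := hsc.out ht₀s ht₁s
  have hMc : Continuous M := hm₂c.prodMk hm₃c
  set A : Set ℝ := {u | u ∈ Icc t₀ t₁ ∧ EqOn Z M (Icc t₀ u)} with hAdef
  have hA0 : t₀ ∈ A := by
    refine ⟨⟨le_rfl, ht01⟩, fun τ hτ => ?_⟩
    have : τ = t₀ := le_antisymm hτ.2 hτ.1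
    rw [this]; exact hZM0
  have hAne : A.Nonempty := ⟨t₀, hA0⟩
  have hbdd : BddAbove A := ⟨t₁, fun v hv => hv.1.2⟩
  have hu1 : t₀ ≤ sSup A := le_csSup hbdd hA0
  have hu2 : sSup A ≤ t₁ := csSup_le hAne fun v hv => hv.1.2
  set u := sSup A with hudef
  have hus : u ∈ s := hsub ⟨hu1, hu2⟩
  have hZcu : ∀ t ∈ s, ContinuousAt Z t :=
    fun t ht => ((hz₂ t ht).continuousAt).prodMk ((hz₃ t ht).continuousAt)
  have hlt : ∀ τ ∈ Ico t₀ u, Z τ = M τ := by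
    intro τ hτ
    obtain ⟨v, hvA, hτv⟩ := exists_lt_of_lt_csSup hAne hτ.2
    exact hvA.2 ⟨hτ.1, hτv.le⟩
  have huZM : Z u = M u := by
    rcases eq_or_lt_of_le hu1 with heq | htu
    · rw [← heq]; exact hZM0
    · have h1 : Tendsto Z (𝓝[<] u) (𝓝 (Z u)) := (hZcu u hus).tendsto.mono_left nhdsWithin_le_nhds
      have h2 : Tendsto M (𝓝[<] u) (𝓝 (M u)) :=
        (hMc.continuousAt).tendsto.mono_left nhdsWithin_le_nhds
      have heqev : Z =ᶠ[𝓝[<] u] M := by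
        filter_upwards [Ioo_mem_nhdsLT_of_mem (⟨htu, le_rfl⟩ : u ∈ Ioc t₀ u)] with τ hτ
        exact hlt τ ⟨hτ.1.le, hτ.2⟩
      exact tendsto_nhds_unique (h1.congr' heqev) h2
  have huA : u ∈ A := by
    refine ⟨⟨hu1, hu2⟩, fun τ hτ => ?_⟩
    rcases eq_or_lt_of_le hτ.2 with heq | hlt'
    · rw [heq]; exact huZM
    · exact hlt τ ⟨hτ.1, hlt'⟩
  have hut₁ : u = t₁ := by
    by_contra hne
    have hul : u < t₁ := lt_of_le_of_ne hu2 hne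
    obtain ⟨L, s', hs', hlip⟩ := (Gf_contDiff.contDiffAt).exists_lipschitzOnWith (x := M u)
    obtain ⟨r, hr0, hrs⟩ := Metric.mem_nhds_iff.1 hs'
    have hlipb : LipschitzOnWith L Gf (Metric.ball (M u) r) := hlip.mono hrs
    have hZball : ∀ᶠ t in 𝓝 u, Z t ∈ Metric.ball (M u) r := by
      have hmem : Metric.ball (M u) r ∈ 𝓝 (Z u) := by
        rw [huZM]; exact Metric.ball_mem_nhds _ hr0
      exact (hZcu u hus).tendsto.eventually_mem hmem
    have hMball : ∀ᶠ t in 𝓝 u, M t ∈ Metric.ball (M u) r :=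
      (hMc.continuousAt).tendsto.eventually_mem (Metric.ball_mem_nhds _ hr0)
    obtain ⟨ε, hε0, hball⟩ := Metric.eventually_nhds_iff.1 (hZball.and hMball)
    set δ := min (ε / 2) (t₁ - u) with hδdef
    have hδ0 : 0 < δ := lt_min (by linarith) (by linarith)
    have hδε : δ < ε := lt_of_le_of_lt (min_le_left _ _) (by linarith)
    have hδt₁ : u + δ ≤ t₁ := by
      have := min_le_right (ε / 2) (t₁ - u); linarith
    have hIccs : Icc u (u + δ) ⊆ s :=
      fun t ht => hsub ⟨hu1.trans ht.1, ht.2.trans hδt₁⟩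
    have hdist : ∀ t ∈ Icc u (u + δ), dist t u < ε := by
      intro t ht
      rw [Real.dist_eq, abs_of_nonneg (by linarith [ht.1])]
      linarith [ht.2]
    have heqon : EqOn Z M (Icc u (u + δ)) := by
      refine ODE_solution_unique_of_mem_Icc_right (v := fun _ => Gf)
        (s := fun _ => Metric.ball (M u) r) (K := L) (fun _ _ => hlipb) ?_ ?_ ?_ ?_ ?_ ?_ huZM
      · exact continuousOn_of_forall_continuousAt fun t ht => hZcu t (hIccs ht)
      · exact fun t ht => (hZ' t (hIccs (Ico_subset_Icc_self ht))).hasDerivWithinAt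
      · exact fun t ht => (hball (hdist t (Ico_subset_Icc_self ht))).1
      · exact hMc.continuousOn
      · exact fun t ht => (hM' t (hu1.trans ht.1)).hasDerivWithinAt
      · exact fun t ht => (hball (hdist t (Ico_subset_Icc_self ht))).2
    have hA' : u + δ ∈ A := by
      refine ⟨⟨by linarith, hδt₁⟩, fun τ hτ => ?_⟩
      rcases le_total τ u with h | h
      · exact huA.2 ⟨hτ.1, h⟩
      · exact heqon ⟨h, hτ.2⟩
    have := le_csSup hbdd hA'
    rw [← hudef] at this
    linarith
  have := huA.2 (show t₁ ∈ Icc t₀ u by rw [hut₁]; exact ⟨ht01, le_rfl⟩)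
  exact ⟨congrArg Prod.fst this, congrArg Prod.snd this⟩

end RicciFlowStrip

/-- Trajectories of the planar Ricci flow system starting in the strip
`{0 < m₂ < 1, m₃ < 0}` exist for all forward time, remain in the strip, and converge to
`(1,0)` as `t → ∞`. Forward globality and maximality of the exhibited solution are
expressed by the final uniqueness clause. -/
theorem ricci_flow_strip_forward_trajectory (t₀ a b : ℝ)
    (ha0 : 0 < a) (ha1 : a < 1) (hb : b < 0) :
    ∃ m₂ m₃ : ℝ → ℝ,
      m₂ t₀ = a ∧ m₃ t₀ = b ∧
      (∀ t ∈ Ici t₀, HasDerivAt m₂ (m₂ t * (1 - m₂ t) * (1 + m₂ t - m₃ t)) t) ∧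
      (∀ t ∈ Ici t₀, HasDerivAt m₃ (m₃ t * (1 - m₃ t) * (1 - m₂ t + m₃ t)) t) ∧
      (∀ t ∈ Ici t₀, 0 < m₂ t ∧ m₂ t < 1 ∧ m₃ t < 0) ∧
      Tendsto (fun t => (m₂ t, m₃ t)) atTop (𝓝 ((1 : ℝ), (0 : ℝ))) ∧
      (∀ (s : Set ℝ) (z₂ z₃ : ℝ → ℝ), IsOpen s → s.OrdConnected → t₀ ∈ s →
        (∀ t ∈ s, HasDerivAt z₂ (z₂ t * (1 - z₂ t) * (1 + z₂ t - z₃ t)) t) →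
        (∀ t ∈ s, HasDerivAt z₃ (z₃ t * (1 - z₃ t) * (1 - z₂ t + z₃ t)) t) →
        z₂ t₀ = a → z₃ t₀ = b → ∀ t ∈ s, t₀ ≤ t → z₂ t = m₂ t ∧ z₃ t = m₃ t) := by
  obtain ⟨m₂, m₃, hc2, hc3, h1, h2, h3, h4, h5, h6⟩ := construction t₀ a b ha0 ha1 hb
  refine ⟨m₂, m₃, h1, h2, h3, h4, h5, h6, ?_⟩
  intro s z₂ z₃ hso hsc ht₀s hz₂ hz₃ hz20 hz30 t ht hle
  exact forward_uniqueness hc2 hc3 h3 h4 h1 h2 hso hsc ht₀s hz₂ hz₃ hz20 hz30 ht hle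
end

section
/- Let (m₂,m₃) be a maximal solution of the system dm₂/dt = m₂(1−m₂)(1+m₂−m₃), dm₃/dt = m₃(1−m₃)(1−m₂+m₃) with 0 < m₂(t₀) < 1 and m₃(t₀) < 0 at some time t₀, and let (α,∞) denote its maximal interval of existence. Then exactly one of the following holds: (i) α = −∞ and (m₂(t),m₃(t)) → (0,0) as t → −∞; (ii) α = −∞ and (m₂(t),m₃(t)) → (0,−1) as t → −∞; (iii) m₃(t) → −∞ as t → α⁺. -/
open Filter Set Topology

lemma RF_intDeriv {D : Set ℝ} (hD : IsOpen D) (hDc : D.OrdConnected)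
    {y : ℝ → ℝ} (hy : ∀ t ∈ D, ContinuousAt y t) {t₀ : ℝ} (ht₀ : t₀ ∈ D) {t : ℝ} (ht : t ∈ D) :
    HasDerivAt (fun u => ∫ s in t₀..u, y s) (y t) t := by
  have hco : ContinuousOn y D := fun s hs => (hy s hs).continuousWithinAt
  apply intervalIntegral.integral_hasDerivAt_right
  · exact (hco.mono (hDc.uIcc_subset ht₀ ht)).intervalIntegrable
  · exact hco.stronglyMeasurableAtFilter hD t ht
  · exact hy t ht

lemma RF_const {D : Set ℝ} (hD : IsOpen D) (hDc : D.OrdConnected) {F : ℝ → ℝ}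
    (hFd : ∀ t ∈ D, HasDerivAt F 0 t) {t₀ t₁ : ℝ} (ht₀ : t₀ ∈ D) (ht₁ : t₁ ∈ D) :
    F t₁ = F t₀ := by
  have hconv : Convex ℝ D := by
    exact convex_iff_ordConnected.mpr hDc
  apply hconv.is_const_of_fderivWithin_eq_zero (𝕜 := ℝ)
    (fun x hx => ((hFd x hx).differentiableAt).differentiableWithinAt) _ ht₁ ht₀
  intro x hx
  rw [fderivWithin_of_isOpen hD hx, (hFd x hx).hasFDerivAt.fderiv]
  ext
  simp

lemma RF_linODE {D : Set ℝ} (hD : IsOpen D) (hDc : D.OrdConnected)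
    {f y : ℝ → ℝ} (hy : ∀ t ∈ D, ContinuousAt y t)
    (hf : ∀ t ∈ D, HasDerivAt f (y t * f t) t)
    {t₀ t₁ : ℝ} (ht₀ : t₀ ∈ D) (ht₁ : t₁ ∈ D) :
    f t₁ = f t₀ * Real.exp (∫ s in t₀..t₁, y s) := by
  set Y : ℝ → ℝ := fun u => ∫ s in t₀..u, y s with hY
  have hYd : ∀ t ∈ D, HasDerivAt Y (y t) t := fun t ht => RF_intDeriv hD hDc hy ht₀ ht
  have hFd : ∀ t ∈ D, HasDerivAt (fun u => f u * Real.exp (-(Y u))) 0 t := by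
    intro t ht
    have h1 := ((hYd t ht).neg).exp
    have h2 := (hf t ht).mul h1
    exact h2.congr_deriv (by ring)
  have key := RF_const hD hDc hFd ht₀ ht₁
  have hYt₀ : Y t₀ = 0 := intervalIntegral.integral_same
  simp only [hYt₀, neg_zero, Real.exp_zero, mul_one] at key
  have hne : Real.exp (-(Y t₁)) ≠ 0 := Real.exp_ne_zero _
  have : f t₁ = f t₀ / Real.exp (-(Y t₁)) := by
    field_simp at key ⊢
    linarith [key]
  rw [this, Real.exp_neg]
  field_simp
  rfl

/-- sign preservation -/
lemma RF_sign_pos {D : Set ℝ} (hD : IsOpen D) (hDc : D.OrdConnected)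
    {f y : ℝ → ℝ} (hy : ∀ t ∈ D, ContinuousAt y t)
    (hf : ∀ t ∈ D, HasDerivAt f (y t * f t) t)
    {t₀ t₁ : ℝ} (ht₀ : t₀ ∈ D) (ht₁ : t₁ ∈ D) (h : 0 < f t₀) : 0 < f t₁ := by
  rw [RF_linODE hD hDc hy hf ht₀ ht₁]
  positivity

lemma RF_sign_neg {D : Set ℝ} (hD : IsOpen D) (hDc : D.OrdConnected)
    {f y : ℝ → ℝ} (hy : ∀ t ∈ D, ContinuousAt y t)
    (hf : ∀ t ∈ D, HasDerivAt f (y t * f t) t)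
    {t₀ t₁ : ℝ} (ht₀ : t₀ ∈ D) (ht₁ : t₁ ∈ D) (h : f t₀ < 0) : f t₁ < 0 := by
  rw [RF_linODE hD hDc hy hf ht₀ ht₁]
  have := Real.exp_pos (∫ s in t₀..t₁, y s)
  nlinarith

/-- affine forward invariance: f' = y f + r with r < 0 on D; f s ≤ 0, s < u ⇒ f u < 0 -/
lemma RF_aff_forward {D : Set ℝ} (hD : IsOpen D) (hDc : D.OrdConnected)
    {f y r : ℝ → ℝ} (hy : ∀ t ∈ D, ContinuousAt y t) (hr : ∀ t ∈ D, r t < 0)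
    (hf : ∀ t ∈ D, HasDerivAt f (y t * f t + r t) t)
    {s u : ℝ} (hs : s ∈ D) (hu : u ∈ D) (hsu : s < u) (hfs : f s ≤ 0) : f u < 0 := by
  set Y : ℝ → ℝ := fun w => ∫ x in s..w, y x with hY
  have hYd : ∀ t ∈ D, HasDerivAt Y (y t) t := fun t ht => RF_intDeriv hD hDc hy hs ht
  set F : ℝ → ℝ := fun w => f w * Real.exp (-(Y w)) with hF
  have hFd : ∀ t ∈ D, HasDerivAt F (r t * Real.exp (-(Y t))) t := by
    intro t ht
    have h1 := ((hYd t ht).neg).exp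
    have h2 := (hf t ht).mul h1
    exact h2.congr_deriv (by simp only [Pi.neg_apply]; ring)
  have hIcc : Icc s u ⊆ D := hDc.out hs hu
  have hanti : StrictAntiOn F (Icc s u) := by
    apply strictAntiOn_of_deriv_neg (convex_Icc s u)
    · intro x hx
      exact ((hFd x (hIcc hx)).continuousAt).continuousWithinAt
    · intro x hx
      rw [interior_Icc] at hx
      have hxD : x ∈ D := hIcc (Ioo_subset_Icc_self hx)
      rw [(hFd x hxD).deriv]
      have := hr x hxD
      have := Real.exp_pos (-(Y x))
      nlinarith
  have hFs : F s ≤ 0 := by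
    have : Real.exp (-(Y s)) > 0 := Real.exp_pos _
    simp only [hF]
    nlinarith
  have := hanti (left_mem_Icc.mpr hsu.le) (right_mem_Icc.mpr hsu.le) hsu
  have hFu : F u < 0 := lt_of_lt_of_le this hFs
  have hexp : Real.exp (-(Y u)) > 0 := Real.exp_pos _
  by_contra hcon
  push_neg at hcon
  simp only [hF] at hFu
  nlinarith

set_option linter.unusedSectionVars false

section strip
variable {D : Set ℝ} (hD : IsOpen D) (hDc : D.OrdConnected)
  {m₂ m₃ : ℝ → ℝ}
  (hode₂ : ∀ t ∈ D, HasDerivAt m₂ (m₂ t * (1 - m₂ t) * (1 + m₂ t - m₃ t)) t)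
  (hode₃ : ∀ t ∈ D, HasDerivAt m₃ (m₃ t * (1 - m₃ t) * (1 - m₂ t + m₃ t)) t)
  {t₀ : ℝ} (ht₀ : t₀ ∈ D) (h2p : 0 < m₂ t₀) (h2l : m₂ t₀ < 1) (h3n : m₃ t₀ < 0)

include hD hDc hode₂ hode₃ ht₀ h2p h2l h3n

lemma RF_m₂_pos : ∀ t ∈ D, 0 < m₂ t := by
  intro t ht
  apply RF_sign_pos hD hDc (y := fun t => (1 - m₂ t) * (1 + m₂ t - m₃ t)) ?_ ?_ ht₀ ht h2p
  · intro s hs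
    have h2 := (hode₂ s hs).continuousAt
    have h3 := (hode₃ s hs).continuousAt
    fun_prop
  · intro s hs
    convert hode₂ s hs using 1
    ring

lemma RF_m₂_lt1 : ∀ t ∈ D, m₂ t < 1 := by
  intro t ht
  have key : 0 < 1 - m₂ t := by
    apply RF_sign_pos hD hDc (f := fun t => 1 - m₂ t)
      (y := fun t => -(m₂ t * (1 + m₂ t - m₃ t))) ?_ ?_ ht₀ ht (by show (0:ℝ) < 1 - m₂ t₀; linarith)
    · intro s hs
      have h2 := (hode₂ s hs).continuousAt
      have h3 := (hode₃ s hs).continuousAt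
      fun_prop
    · intro s hs
      have := (hode₂ s hs).const_sub 1
      exact this.congr_deriv (by ring)
  linarith

lemma RF_m₃_neg : ∀ t ∈ D, m₃ t < 0 := by
  intro t ht
  apply RF_sign_neg hD hDc (y := fun t => (1 - m₃ t) * (1 - m₂ t + m₃ t)) ?_ ?_ ht₀ ht h3n
  · intro s hs
    have h2 := (hode₂ s hs).continuousAt
    have h3 := (hode₃ s hs).continuousAt
    fun_prop
  · intro s hs
    convert hode₃ s hs using 1
    ring

/-- `m₂` is strictly monotone on `D`. -/
lemma RF_m₂_mono : StrictMonoOn m₂ D := by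
  have hp := RF_m₂_pos hD hDc hode₂ hode₃ ht₀ h2p h2l h3n
  have hl := RF_m₂_lt1 hD hDc hode₂ hode₃ ht₀ h2p h2l h3n
  have hn := RF_m₃_neg hD hDc hode₂ hode₃ ht₀ h2p h2l h3n
  apply strictMonoOn_of_deriv_pos (convex_iff_ordConnected.mpr hDc)
  · exact fun s hs => (hode₂ s hs).continuousAt.continuousWithinAt
  · intro x hx
    rw [hD.interior_eq] at hx
    rw [(hode₂ x hx).deriv]
    exact mul_pos (mul_pos (hp x hx) (by have := hl x hx; linarith))
      (by have := hp x hx; have := hn x hx; linarith)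

/-- One-crossing property of `g = 1 - m₂ + m₃`. -/
lemma RF_g_forward {s u : ℝ} (hs : s ∈ D) (hu : u ∈ D) (hsu : s < u)
    (hgs : 1 - m₂ s + m₃ s ≤ 0) : 1 - m₂ u + m₃ u < 0 := by
  have hp := RF_m₂_pos hD hDc hode₂ hode₃ ht₀ h2p h2l h3n
  have hl := RF_m₂_lt1 hD hDc hode₂ hode₃ ht₀ h2p h2l h3n
  apply RF_aff_forward hD hDc (f := fun t => 1 - m₂ t + m₃ t)
    (y := fun t => m₂ t * (1 - m₂ t) + m₃ t * (1 - m₃ t))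
    (r := fun t => -(2 * (m₂ t * (1 - m₂ t)))) ?_ ?_ ?_ hs hu hsu hgs
  · intro x hx
    have h2 := (hode₂ x hx).continuousAt
    have h3 := (hode₃ x hx).continuousAt
    fun_prop
  · intro x hx
    show -(2 * (m₂ x * (1 - m₂ x))) < 0
    have hh : 0 < m₂ x * (1 - m₂ x) := mul_pos (hp x hx) (by have := hl x hx; linarith)
    linarith
  · intro x hx
    have := ((hode₂ x hx).const_sub 1).add (hode₃ x hx)
    exact this.congr_deriv (by ring)

/-- If `g > 0` on an interval inside `D`, `m₃` is strictly antitone there. -/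
lemma RF_m₃_anti {E : Set ℝ} (hE : E ⊆ D) (hEc : Convex ℝ E)
    (hg : ∀ t ∈ E, 0 < 1 - m₂ t + m₃ t) : StrictAntiOn m₃ E := by
  have hn := RF_m₃_neg hD hDc hode₂ hode₃ ht₀ h2p h2l h3n
  apply strictAntiOn_of_deriv_neg hEc
  · exact fun s hs => (hode₃ s (hE hs)).continuousAt.continuousWithinAt
  · intro x hx
    have hxE : x ∈ E := interior_subset hx
    rw [(hode₃ x (hE hxE)).deriv]
    exact mul_neg_of_neg_of_pos
      (mul_neg_of_neg_of_pos (hn x (hE hxE)) (by have := hn x (hE hxE); linarith))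
      (hg x hxE)

/-- If `g < 0` on an interval inside `D`, `m₃` is strictly monotone there. -/
lemma RF_m₃_mono {E : Set ℝ} (hE : E ⊆ D) (hEc : Convex ℝ E)
    (hg : ∀ t ∈ E, 1 - m₂ t + m₃ t < 0) : StrictMonoOn m₃ E := by
  have hn := RF_m₃_neg hD hDc hode₂ hode₃ ht₀ h2p h2l h3n
  apply strictMonoOn_of_deriv_pos hEc
  · exact fun s hs => (hode₃ s (hE hs)).continuousAt.continuousWithinAt
  · intro x hx
    have hxE : x ∈ E := interior_subset hx
    rw [(hode₃ x (hE hxE)).deriv]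
    exact mul_pos_of_neg_of_neg
      (mul_neg_of_neg_of_pos (hn x (hE hxE)) (by have := hn x (hE hxE); linarith))
      (hg x hxE)

end strip

/-- If `f` converges at `-∞` and its derivative converges, the derivative limit is `0`. -/
lemma RF_deriv_lim_aux {f F : ℝ → ℝ} {c L : ℝ}
    (hf : ∀ t, HasDerivAt f (F t) t)
    (hF : Tendsto F atBot (𝓝 c)) (hfl : Tendsto f atBot (𝓝 L)) (hc : 0 < c) : False := by
  obtain ⟨T, hT⟩ : ∃ T, ∀ t ≤ T, c / 2 ≤ F t := by
    have := hF.eventually (eventually_ge_nhds (show c / 2 < c by linarith))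
    exact eventually_atBot.mp this
  have key : ∀ t ≤ T, c / 2 * (T - t) ≤ f T - f t := by
    intro t ht
    apply Convex.mul_sub_le_image_sub_of_le_deriv (convex_Iic T)
      (fun s hs => (hf s).continuousAt.continuousWithinAt)
      (fun s hs => (hf s).differentiableAt.differentiableWithinAt)
    · intro x hx
      rw [(hf x).deriv]
      rw [interior_Iic] at hx
      exact hT x hx.le
    · exact ht
    · exact self_mem_Iic
    · exact ht
  have h1 : ∀ᶠ t in atBot, L - 1 ≤ f t :=
    hfl.eventually (eventually_ge_nhds (show L - 1 < L by linarith))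
  have h3 : Tendsto (fun t : ℝ => f T - c / 2 * (T - t)) atBot atBot := by
    apply tendsto_atBot.mpr
    intro b
    rw [eventually_atBot]
    refine ⟨(b - (f T - c / 2 * T)) / (c / 2), fun t ht => ?_⟩
    rw [le_div_iff₀ (by linarith : (0:ℝ) < c / 2)] at ht
    nlinarith
  have h4 : ∀ᶠ t in atBot, f T - c / 2 * (T - t) < L - 1 :=
    h3.eventually (eventually_lt_atBot (L - 1))
  obtain ⟨t, ht1, ht2, ht3⟩ := ((eventually_le_atBot T).and (h1.and h4)).exists
  have := key t ht1
  linarith [ht2, ht3]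

/-- If `f` converges at `-∞` and its derivative converges, the derivative limit is `0`. -/
lemma RF_deriv_lim_zero {f F : ℝ → ℝ} {c L : ℝ}
    (hf : ∀ t, HasDerivAt f (F t) t)
    (hF : Tendsto F atBot (𝓝 c)) (hfl : Tendsto f atBot (𝓝 L)) : c = 0 := by
  rcases lt_trichotomy c 0 with h | h | h
  · exfalso
    exact RF_deriv_lim_aux (f := fun t => -f t) (F := fun t => -F t)
      (fun t => (hf t).neg) hF.neg hfl.neg (by linarith)
  · exact h
  · exact absurd (RF_deriv_lim_aux hf hF hfl h) not_false

/-- The global (backward-complete) case: trichotomy of backward limits. -/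
theorem RF_global {m₂ m₃ : ℝ → ℝ} {t₀ : ℝ}
    (hode₂ : ∀ t : ℝ, HasDerivAt m₂ (m₂ t * (1 - m₂ t) * (1 + m₂ t - m₃ t)) t)
    (hode₃ : ∀ t : ℝ, HasDerivAt m₃ (m₃ t * (1 - m₃ t) * (1 - m₂ t + m₃ t)) t)
    (h2p : 0 < m₂ t₀) (h2l : m₂ t₀ < 1) (h3n : m₃ t₀ < 0) :
    Tendsto (fun t => (m₂ t, m₃ t)) atBot (𝓝 ((0:ℝ), (0:ℝ))) ∨
    Tendsto (fun t => (m₂ t, m₃ t)) atBot (𝓝 ((0:ℝ), (-1:ℝ))) ∨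
    Tendsto m₃ atBot atBot := by
  have hD : IsOpen (univ : Set ℝ) := isOpen_univ
  have hDc : (univ : Set ℝ).OrdConnected := ordConnected_univ
  have ht₀ : t₀ ∈ (univ : Set ℝ) := trivial
  have ho₂ : ∀ t ∈ (univ : Set ℝ), HasDerivAt m₂ (m₂ t * (1 - m₂ t) * (1 + m₂ t - m₃ t)) t :=
    fun t _ => hode₂ t
  have ho₃ : ∀ t ∈ (univ : Set ℝ), HasDerivAt m₃ (m₃ t * (1 - m₃ t) * (1 - m₂ t + m₃ t)) t :=
    fun t _ => hode₃ t
  have hp := RF_m₂_pos hD hDc ho₂ ho₃ ht₀ h2p h2l h3n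
  have hl := RF_m₂_lt1 hD hDc ho₂ ho₃ ht₀ h2p h2l h3n
  have hn := RF_m₃_neg hD hDc ho₂ ho₃ ht₀ h2p h2l h3n
  have hmono₂ : StrictMono m₂ :=
    strictMonoOn_univ.mp (RF_m₂_mono hD hDc ho₂ ho₃ ht₀ h2p h2l h3n)
  have hbb₂ : BddBelow (range m₂) := ⟨0, by rintro y ⟨x, rfl⟩; exact (hp x trivial).le⟩
  set L₂ := ⨅ i, m₂ i with hL₂def
  have hL₂ : Tendsto m₂ atBot (𝓝 L₂) := tendsto_atBot_ciInf hmono₂.monotone hbb₂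
  have hL₂0 : 0 ≤ L₂ := le_ciInf fun i => (hp i trivial).le
  have hL₂lt : L₂ < 1 := lt_of_le_of_lt (ciInf_le hbb₂ t₀) h2l
  by_cases hcase : ∃ c, 0 ≤ 1 - m₂ c + m₃ c
  · -- Case A : `g > 0` backward of `c`; limit is `(0,0)`
    obtain ⟨c, hc⟩ := hcase
    have hgpos : ∀ t < c, 0 < 1 - m₂ t + m₃ t := by
      intro t htc
      by_contra hcon
      push_neg at hcon
      have := RF_g_forward hD hDc ho₂ ho₃ ht₀ h2p h2l h3n trivial trivial htc hcon
      linarith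
    have hanti : StrictAntiOn m₃ (Iio c) :=
      RF_m₃_anti hD hDc ho₂ ho₃ ht₀ h2p h2l h3n (subset_univ _) (convex_Iio c)
        (fun t ht => hgpos t ht)
    set c' := c - 1 with hc'def
    have hminc : ∀ t : ℝ, min t c' < c := fun t => lt_of_le_of_lt (min_le_right _ _) (by linarith)
    set h : ℝ → ℝ := fun t => m₃ (min t c') with hdef
    have hantih : Antitone h := by
      intro x y hxy
      exact hanti.antitoneOn (hminc x) (hminc y) (min_le_min hxy le_rfl)
    have hba : BddAbove (range h) := ⟨0, by rintro y ⟨x, rfl⟩; exact (hn _ trivial).le⟩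
    set L₃ := ⨆ i, h i with hL₃def
    have hL₃h : Tendsto h atBot (𝓝 L₃) := tendsto_atBot_ciSup hantih hba
    have hL₃ : Tendsto m₃ atBot (𝓝 L₃) := by
      apply hL₃h.congr'
      filter_upwards [eventually_le_atBot c'] with t ht
      simp [hdef, min_eq_left ht]
    have hL₃0 : L₃ ≤ 0 := ciSup_le fun i => (hn _ trivial).le
    have hL₃m1 : -1 < L₃ := by
      have h1 : h t₀ ≤ L₃ := le_ciSup hba t₀
      have h2 := hgpos (min t₀ c') (hminc t₀)
      have h3 := hp (min t₀ c') trivial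
      simp only [hdef] at h1
      linarith
    have hT2 : Tendsto (fun t => m₂ t * (1 - m₂ t) * (1 + m₂ t - m₃ t)) atBot
        (𝓝 (L₂ * (1 - L₂) * (1 + L₂ - L₃))) :=
      (hL₂.mul (tendsto_const_nhds.sub hL₂)).mul ((tendsto_const_nhds.add hL₂).sub hL₃)
    have e₂ : L₂ * (1 - L₂) * (1 + L₂ - L₃) = 0 := RF_deriv_lim_zero hode₂ hT2 hL₂
    have hL₂eq : L₂ = 0 := by
      rcases mul_eq_zero.mp e₂ with h | h
      · rcases mul_eq_zero.mp h with h | h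
        · exact h
        · linarith
      · linarith
    have hT3 : Tendsto (fun t => m₃ t * (1 - m₃ t) * (1 - m₂ t + m₃ t)) atBot
        (𝓝 (L₃ * (1 - L₃) * (1 - L₂ + L₃))) :=
      (hL₃.mul (tendsto_const_nhds.sub hL₃)).mul ((tendsto_const_nhds.sub hL₂).add hL₃)
    have e₃ : L₃ * (1 - L₃) * (1 - L₂ + L₃) = 0 := RF_deriv_lim_zero hode₃ hT3 hL₃
    have hL₃eq : L₃ = 0 := by
      rcases mul_eq_zero.mp e₃ with h | h
      · rcases mul_eq_zero.mp h with h | h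
        · exact h
        · linarith
      · rw [hL₂eq] at h; linarith
    left
    have := hL₂.prodMk_nhds hL₃
    rwa [hL₂eq, hL₃eq] at this
  · -- Case B : `g < 0` everywhere
    push_neg at hcase
    have hmono₃ : StrictMono m₃ :=
      strictMonoOn_univ.mp (RF_m₃_mono hD hDc ho₂ ho₃ ht₀ h2p h2l h3n
        (subset_univ _) convex_univ (fun t _ => hcase t))
    by_cases hbb : BddBelow (range m₃)
    · set L₃ := ⨅ i, m₃ i with hL₃def
      have hL₃ : Tendsto m₃ atBot (𝓝 L₃) := tendsto_atBot_ciInf hmono₃.monotone hbb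
      have hL₃le : L₃ ≤ L₂ - 1 := by
        apply le_of_tendsto_of_tendsto hL₃ (hL₂.sub tendsto_const_nhds)
        filter_upwards with t
        have := hcase t
        linarith
      have hT2 : Tendsto (fun t => m₂ t * (1 - m₂ t) * (1 + m₂ t - m₃ t)) atBot
          (𝓝 (L₂ * (1 - L₂) * (1 + L₂ - L₃))) :=
        (hL₂.mul (tendsto_const_nhds.sub hL₂)).mul ((tendsto_const_nhds.add hL₂).sub hL₃)
      have e₂ : L₂ * (1 - L₂) * (1 + L₂ - L₃) = 0 := RF_deriv_lim_zero hode₂ hT2 hL₂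
      have hL₂eq : L₂ = 0 := by
        rcases mul_eq_zero.mp e₂ with h | h
        · rcases mul_eq_zero.mp h with h | h
          · exact h
          · linarith
        · linarith
      have hL₃le1 : L₃ ≤ -1 := by rw [hL₂eq] at hL₃le; linarith
      have hT3 : Tendsto (fun t => m₃ t * (1 - m₃ t) * (1 - m₂ t + m₃ t)) atBot
          (𝓝 (L₃ * (1 - L₃) * (1 - L₂ + L₃))) :=
        (hL₃.mul (tendsto_const_nhds.sub hL₃)).mul ((tendsto_const_nhds.sub hL₂).add hL₃)
      have e₃ : L₃ * (1 - L₃) * (1 - L₂ + L₃) = 0 := RF_deriv_lim_zero hode₃ hT3 hL₃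
      have hL₃eq : L₃ = -1 := by
        rcases mul_eq_zero.mp e₃ with h | h
        · rcases mul_eq_zero.mp h with h | h
          · linarith
          · linarith
        · rw [hL₂eq] at h; linarith
      right; left
      have := hL₂.prodMk_nhds hL₃
      rwa [hL₂eq, hL₃eq] at this
    · right; right
      apply tendsto_atBot.mpr
      intro b
      obtain ⟨y, ⟨x, rfl⟩, hyb⟩ := not_bddBelow_iff.mp hbb b
      rw [eventually_atBot]
      exact ⟨x, fun t ht => (hmono₃.monotone ht).trans hyb.le⟩

/-- The planar vector field of the system. -/
noncomputable def RF_V : ℝ × ℝ → ℝ × ℝ :=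
  fun p => (p.1 * (1 - p.1) * (1 + p.1 - p.2), p.2 * (1 - p.2) * (1 - p.1 + p.2))

lemma RF_V_contDiff : ContDiff ℝ 1 RF_V := by
  apply ContDiff.prodMk <;> fun_prop

lemma RF_hasDerivAt_fst {z : ℝ → ℝ × ℝ} {v : ℝ × ℝ} {t : ℝ} (h : HasDerivAt z v t) :
    HasDerivAt (fun s => (z s).1) v.1 t :=
  (ContinuousLinearMap.fst ℝ ℝ ℝ).hasFDerivAt.comp_hasDerivAt t h

lemma RF_hasDerivAt_snd {z : ℝ → ℝ × ℝ} {v : ℝ × ℝ} {t : ℝ} (h : HasDerivAt z v t) :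
    HasDerivAt (fun s => (z s).2) v.2 t :=
  (ContinuousLinearMap.snd ℝ ℝ ℝ).hasFDerivAt.comp_hasDerivAt t h

/-- If both components converge at the finite left endpoint, the solution extends. -/
lemma RF_extend {a : ℝ} {m₂ m₃ : ℝ → ℝ}
    (hode₂ : ∀ t ∈ Ioi a, HasDerivAt m₂ (m₂ t * (1 - m₂ t) * (1 + m₂ t - m₃ t)) t)
    (hode₃ : ∀ t ∈ Ioi a, HasDerivAt m₃ (m₃ t * (1 - m₃ t) * (1 - m₂ t + m₃ t)) t)
    {L₂ L₃ : ℝ}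
    (hL₂ : Tendsto m₂ (𝓝[>] a) (𝓝 L₂)) (hL₃ : Tendsto m₃ (𝓝[>] a) (𝓝 L₃)) :
    ∃ ε > (0:ℝ), ∃ z₂ z₃ : ℝ → ℝ,
      (∀ t ∈ Ioi (a - ε), HasDerivAt z₂ (z₂ t * (1 - z₂ t) * (1 + z₂ t - z₃ t)) t) ∧
      (∀ t ∈ Ioi (a - ε), HasDerivAt z₃ (z₃ t * (1 - z₃ t) * (1 - z₂ t + z₃ t)) t) ∧
      (∀ t ∈ Ioi a, z₂ t = m₂ t ∧ z₃ t = m₃ t) := by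
  classical
  set x₀ : ℝ × ℝ := (L₂, L₃) with hx₀
  -- Lipschitz constant near x₀
  obtain ⟨K, s, hs, hKs⟩ := (RF_V_contDiff.contDiffAt (x := x₀)).exists_lipschitzOnWith
  obtain ⟨r₀, hr₀, hball⟩ := Metric.mem_nhds_iff.mp hs
  set r := r₀ / 2 with hrdef
  have hr : 0 < r := by positivity
  have hcb : Metric.closedBall x₀ r ⊆ s :=
    (Metric.closedBall_subset_ball (by linarith)).trans hball
  have hLip : LipschitzOnWith K RF_V (Metric.closedBall x₀ r) := hKs.mono hcb
  -- local solution through (a, x₀)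
  obtain ⟨f, hf0, ε₀, hε₀, hf⟩ :=
    ContDiffAt.exists_forall_mem_closedBall_exists_eq_forall_mem_Ioo_hasDerivAt₀ (x₀ := x₀) RF_V_contDiff.contDiffAt a
  -- the (completed) original solution
  set M : ℝ → ℝ × ℝ := fun t => if a < t then (m₂ t, m₃ t) else x₀ with hM
  have hMa : M a = x₀ := by simp [hM]
  have hMeq : ∀ t ∈ Ioi a, M t = (m₂ t, m₃ t) := fun t ht => by simp [hM, if_pos (mem_Ioi.mp ht)]
  have hMder : ∀ t ∈ Ioi a, HasDerivAt M (RF_V (M t)) t := by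
    intro t ht
    have hev : (fun u => (m₂ u, m₃ u)) =ᶠ[𝓝 t] M := by
      filter_upwards [isOpen_Ioi.mem_nhds ht] with u hu
      simp [hM, if_pos (mem_Ioi.mp hu)]
    have := ((hode₂ t ht).prodMk (hode₃ t ht)).congr_of_eventuallyEq hev.symm
    rw [hMeq t ht]
    exact this
  have hMtend : Tendsto M (𝓝[>] a) (𝓝 x₀) := by
    apply (hL₂.prodMk_nhds hL₃).congr'
    filter_upwards [self_mem_nhdsWithin] with u hu
    exact (hMeq u hu).symm
  have hMtendIci : Tendsto M (𝓝[Ici a] a) (𝓝 x₀) := by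
    have hsplit : Ici a = {a} ∪ Ioi a := by
      ext u; simp [le_iff_lt_or_eq, or_comm, eq_comm]
    rw [hsplit, nhdsWithin_union, nhdsWithin_singleton, tendsto_sup]
    constructor
    · exact tendsto_pure_left.mpr fun u hu => by simpa [hMa] using mem_of_mem_nhds hu
    · exact hMtend
  -- derivative of M at a from the right
  have hMder_a : HasDerivWithinAt M (RF_V x₀) (Ici a) a := by
    apply hasDerivWithinAt_Ici_of_tendsto_deriv (s := Ioi a)
    · exact fun t ht => (hMder t ht).differentiableAt.differentiableWithinAt
    · rw [ContinuousWithinAt, hMa]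
      exact hMtend
    · exact self_mem_nhdsWithin
    · apply ((RF_V_contDiff.continuous.tendsto x₀).comp hMtend).congr'
      filter_upwards [self_mem_nhdsWithin] with u hu
      exact ((hMder u hu).deriv).symm
  -- choose b > a such that everything holds on [a, b]
  have hfc : ContinuousAt f a :=
    (hf a (by constructor <;> linarith)).continuousAt
  have hfev : ∀ᶠ t in 𝓝 a, f t ∈ Metric.closedBall x₀ r := by
    have hmem : Metric.closedBall x₀ r ∈ 𝓝 (f a) := by
      rw [hf0]; exact Metric.closedBall_mem_nhds _ hr
    exact hfc hmem
  obtain ⟨δ₁, hδ₁, hδ₁h⟩ := Metric.eventually_nhds_iff.mp hfev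
  obtain ⟨u, hu, hIccu⟩ := mem_nhdsGE_iff_exists_Icc_subset.mp
    (hMtendIci (Metric.closedBall_mem_nhds _ hr))
  set η := min ε₀ (min δ₁ (u - a)) with hη
  have hηpos : 0 < η := by
    apply lt_min hε₀ (lt_min hδ₁ (by linarith))
  set b := a + η / 2 with hb
  have hab : a < b := by rw [hb]; linarith
  have hbε₀ : b < a + ε₀ := by
    have : η ≤ ε₀ := min_le_left _ _
    rw [hb]; linarith
  have hIccIoo : Icc a b ⊆ Ioo (a - ε₀) (a + ε₀) := fun t ht =>
    ⟨by have := ht.1; linarith, lt_of_le_of_lt ht.2 hbε₀⟩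
  -- uniqueness on [a, b]
  have hEq : EqOn f M (Icc a b) := by
    apply ODE_solution_unique_of_mem_Icc_right (v := fun _ x => RF_V x)
      (s := fun _ => Metric.closedBall x₀ r) (K := K) (fun _ _ => hLip)
    · exact fun t ht => (hf t (hIccIoo ht)).continuousAt.continuousWithinAt
    · exact fun t ht => (hf t (hIccIoo (Ico_subset_Icc_self ht))).hasDerivWithinAt
    · intro t ht
      apply hδ₁h
      have h1 : η ≤ δ₁ := (min_le_right _ _).trans (min_le_left _ _)
      rw [Real.dist_eq, abs_of_nonneg (by linarith [ht.1])]
      have := ht.2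
      simp only [hb] at this
      linarith
    · intro t ht
      rcases eq_or_lt_of_le ht.1 with h | h
      · subst h
        rw [ContinuousWithinAt, hMa]
        exact hMtendIci.mono_left (nhdsWithin_mono _ Icc_subset_Ici_self)
      · exact (hMder t h).continuousAt.continuousWithinAt
    · intro t ht
      rcases eq_or_lt_of_le ht.1 with h | h
      · subst h
        rw [hMa]
        exact hMder_a
      · exact (hMder t h).hasDerivWithinAt
    · intro t ht
      apply hIccu
      have h1 : η ≤ u - a := (min_le_right _ _).trans (min_le_right _ _)
      constructor
      · exact ht.1
      · have := ht.2.le; simp only [hb] at this; linarith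
    · rw [hf0, hMa]
  -- glue
  set z : ℝ → ℝ × ℝ := fun t => if a < t then (m₂ t, m₃ t) else f t with hz
  have hzf : ∀ t ≤ a, z t = f t := fun t ht => by simp [hz, not_lt.mpr ht]
  have hzm : ∀ t ∈ Ioi a, z t = (m₂ t, m₃ t) := fun t ht => by simp [hz, if_pos (mem_Ioi.mp ht)]
  set ε := ε₀ / 2 with hε
  have hzder : ∀ t ∈ Ioi (a - ε), HasDerivAt z (RF_V (z t)) t := by
    intro t ht
    rcases lt_trichotomy t a with h | h | h
    · -- below a : z = f locally
      have hev : f =ᶠ[𝓝 t] z := by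
        filter_upwards [isOpen_Iio.mem_nhds h] with w hw
        exact (hzf w (le_of_lt hw)).symm
      have ht' : a - ε < t := mem_Ioi.mp ht
      rw [hε] at ht'
      have hfd := hf t ⟨by linarith, by linarith⟩
      rw [hzf t h.le]
      exact hfd.congr_of_eventuallyEq hev.symm
    · -- at a : z = f on a neighborhood
      subst h
      have hev : f =ᶠ[𝓝 t] z := by
        filter_upwards [Ioo_mem_nhds (show t - ε < t by rw [hε]; linarith)
          (show t < b from hab)] with w hw
        rcases le_or_gt w t with h' | h'
        · exact (hzf w h').symm
        · rw [hzm w h', ← hMeq w h', ← hEq ⟨(le_of_lt h'), hw.2.le⟩]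
      have hfd := hf t ⟨by linarith, by linarith⟩
      rw [hzf t le_rfl]
      exact hfd.congr_of_eventuallyEq hev.symm
    · -- above a : z = (m₂, m₃) locally
      have hev : (fun u => (m₂ u, m₃ u)) =ᶠ[𝓝 t] z := by
        filter_upwards [isOpen_Ioi.mem_nhds h] with w hw
        exact (hzm w hw).symm
      have := ((hode₂ t h).prodMk (hode₃ t h)).congr_of_eventuallyEq hev.symm
      rw [hzm t h]
      exact this
  refine ⟨ε, by positivity, fun t => (z t).1, fun t => (z t).2, ?_, ?_, ?_⟩
  · exact fun t ht => RF_hasDerivAt_fst (hzder t ht)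
  · exact fun t ht => RF_hasDerivAt_snd (hzder t ht)
  · intro t ht
    constructor <;> simp [hz, if_pos (mem_Ioi.mp ht)]

/-- The finite-endpoint case: non-extendability forces `m₃ → -∞`. -/
theorem RF_finite {a : ℝ} {m₂ m₃ : ℝ → ℝ} {t₀ : ℝ} (hat₀ : a < t₀)
    (hode₂ : ∀ t ∈ Ioi a, HasDerivAt m₂ (m₂ t * (1 - m₂ t) * (1 + m₂ t - m₃ t)) t)
    (hode₃ : ∀ t ∈ Ioi a, HasDerivAt m₃ (m₃ t * (1 - m₃ t) * (1 - m₂ t + m₃ t)) t)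
    (h2p : 0 < m₂ t₀) (h2l : m₂ t₀ < 1) (h3n : m₃ t₀ < 0)
    (hext : ∀ ε > (0:ℝ), ¬ ∃ z₂ z₃ : ℝ → ℝ,
      (∀ t ∈ Ioi (a - ε), HasDerivAt z₂ (z₂ t * (1 - z₂ t) * (1 + z₂ t - z₃ t)) t) ∧
      (∀ t ∈ Ioi (a - ε), HasDerivAt z₃ (z₃ t * (1 - z₃ t) * (1 - z₂ t + z₃ t)) t) ∧
      (∀ t ∈ Ioi a, z₂ t = m₂ t ∧ z₃ t = m₃ t)) :
    Tendsto m₃ (𝓝[>] a) atBot := by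
  have hD : IsOpen (Ioi a) := isOpen_Ioi
  have hDc : (Ioi a).OrdConnected := ordConnected_Ioi
  have ht₀ : t₀ ∈ Ioi a := hat₀
  have hp := RF_m₂_pos hD hDc hode₂ hode₃ ht₀ h2p h2l h3n
  have hl := RF_m₂_lt1 hD hDc hode₂ hode₃ ht₀ h2p h2l h3n
  have hn := RF_m₃_neg hD hDc hode₂ hode₃ ht₀ h2p h2l h3n
  have hmono₂ : StrictMonoOn m₂ (Ioi a) := RF_m₂_mono hD hDc hode₂ hode₃ ht₀ h2p h2l h3n
  have hbb₂ : BddBelow (m₂ '' Ioi a) := ⟨0, by rintro y ⟨x, hx, rfl⟩; exact (hp x hx).le⟩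
  have hL₂ : Tendsto m₂ (𝓝[>] a) (𝓝 (sInf (m₂ '' Ioi a))) :=
    MonotoneOn.tendsto_nhdsGT hmono₂.monotoneOn hbb₂
  by_cases hcase : ∃ c ∈ Ioi a, 0 ≤ 1 - m₂ c + m₃ c
  · -- Case A : bounded, limits exist, contradiction with non-extendability
    exfalso
    obtain ⟨c, hcIoi, hc⟩ := hcase
    have hgpos : ∀ t ∈ Ioo a c, 0 < 1 - m₂ t + m₃ t := by
      intro t ht
      by_contra hcon
      push_neg at hcon
      have := RF_g_forward hD hDc hode₂ hode₃ ht₀ h2p h2l h3n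
        (mem_Ioi.mpr ht.1) hcIoi ht.2 hcon
      linarith
    have hanti : StrictAntiOn m₃ (Ioo a c) :=
      RF_m₃_anti hD hDc hode₂ hode₃ ht₀ h2p h2l h3n
        (fun x hx => mem_Ioi.mpr hx.1) (convex_Ioo a c) hgpos
    have hne : (Ioo a c).Nonempty := nonempty_Ioo.mpr (mem_Ioi.mp hcIoi)
    have hba : BddAbove (m₃ '' Ioo a c) :=
      ⟨0, by rintro y ⟨x, hx, rfl⟩; exact (hn x (mem_Ioi.mpr hx.1)).le⟩
    have hL₃ : Tendsto m₃ (𝓝[>] a) (𝓝 (sSup (m₃ '' Ioo a c))) :=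
      AntitoneOn.tendsto_nhdsWithin_Ioo_right hne hanti.antitoneOn hba
    obtain ⟨ε, hε, z₂, z₃, h1, h2, h3⟩ := RF_extend hode₂ hode₃ hL₂ hL₃
    exact hext ε hε ⟨z₂, z₃, h1, h2, h3⟩
  · push_neg at hcase
    have hmono₃ : StrictMonoOn m₃ (Ioi a) :=
      RF_m₃_mono hD hDc hode₂ hode₃ ht₀ h2p h2l h3n
        (subset_refl _) (convex_Ioi a) hcase
    by_cases hbb : BddBelow (m₃ '' Ioi a)
    · exfalso
      have hL₃ : Tendsto m₃ (𝓝[>] a) (𝓝 (sInf (m₃ '' Ioi a))) :=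
        MonotoneOn.tendsto_nhdsGT hmono₃.monotoneOn hbb
      obtain ⟨ε, hε, z₂, z₃, h1, h2, h3⟩ := RF_extend hode₂ hode₃ hL₂ hL₃
      exact hext ε hε ⟨z₂, z₃, h1, h2, h3⟩
    · apply tendsto_atBot.mpr
      intro bnd
      obtain ⟨y, ⟨x, hx, rfl⟩, hyb⟩ := not_bddBelow_iff.mp hbb bnd
      filter_upwards [Ioo_mem_nhdsGT_of_mem (left_mem_Ico.mpr (mem_Ioi.mp hx))] with
        s hs
      exact (hmono₃ (mem_Ioi.mpr hs.1) hx hs.2).le.trans hyb.le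

lemma RF_comap_bot : comap (fun t : ℝ => (t : EReal)) (𝓝[>] (⊥:EReal)) = atBot := by
  have h1 : (𝓝[>] (⊥:EReal)) = 𝓝[≠] (⊥:EReal) := by
    congr 1; ext x; simp [bot_lt_iff_ne_bot]
  rw [h1, EReal.nhdsWithin_bot, comap_map]
  exact fun a b h => by exact_mod_cast h

lemma RF_comap_coe (a : ℝ) :
    comap (fun t : ℝ => (t : EReal)) (𝓝[>] (a:EReal)) = 𝓝[>] a := by
  have himg : Real.toEReal '' Ioi a = Ioo (a : EReal) ⊤ := by
    ext x; induction x using EReal.rec <;> simp [EReal.coe_lt_coe_iff]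
  have hmap : map (fun t : ℝ => (t : EReal)) (𝓝[>] a) = 𝓝[>] (a:EReal) := by
    rw [EReal.isEmbedding_coe.map_nhdsWithin_eq, himg, ← Ioi_inter_Iio,
      nhdsWithin_inter_of_mem']
    exact mem_nhdsWithin_of_mem_nhds (Iio_mem_nhds (EReal.coe_lt_top a))
  rw [← hmap, comap_map]
  exact fun x y h => by exact_mod_cast h


/-- Backward trichotomy for a maximal solution of the planar Ricci flow system starting
in the strip `{0 < m₂ < 1, m₃ < 0}`, with maximal interval of existence `(α, ∞)`
(`α ∈ [−∞, ∞)`): exactly one of the following holds: (i) `α = −∞` and the solution tends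
to `(0,0)` as `t → −∞`; (ii) `α = −∞` and it tends to `(0,−1)` as `t → −∞`;
(iii) `m₃(t) → −∞` as `t → α⁺`. Maximality is expressed by the non-extendability
hypothesis `hmax`. -/
theorem ricci_flow_strip_backward_trichotomy
    (α : EReal) (t₀ : ℝ) (hαt₀ : α < (t₀ : EReal))
    (m₂ m₃ : ℝ → ℝ)
    (hode₂ : ∀ t : ℝ, α < (t : EReal) →
      HasDerivAt m₂ (m₂ t * (1 - m₂ t) * (1 + m₂ t - m₃ t)) t)
    (hode₃ : ∀ t : ℝ, α < (t : EReal) →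
      HasDerivAt m₃ (m₃ t * (1 - m₃ t) * (1 - m₂ t + m₃ t)) t)
    (hinit : 0 < m₂ t₀ ∧ m₂ t₀ < 1 ∧ m₃ t₀ < 0)
    (hmax : ∀ β : EReal, β < α →
      ¬ ∃ z₂ z₃ : ℝ → ℝ,
        (∀ t : ℝ, β < (t : EReal) →
          HasDerivAt z₂ (z₂ t * (1 - z₂ t) * (1 + z₂ t - z₃ t)) t) ∧
        (∀ t : ℝ, β < (t : EReal) →
          HasDerivAt z₃ (z₃ t * (1 - z₃ t) * (1 - z₂ t + z₃ t)) t) ∧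
        (∀ t : ℝ, α < (t : EReal) → z₂ t = m₂ t ∧ z₃ t = m₃ t)) :
    ((α = ⊥ ∧ Tendsto (fun t => (m₂ t, m₃ t)) atBot (𝓝 ((0 : ℝ), (0 : ℝ)))) ∧
      ¬(α = ⊥ ∧ Tendsto (fun t => (m₂ t, m₃ t)) atBot (𝓝 ((0 : ℝ), (-1 : ℝ)))) ∧
      ¬Tendsto m₃ (comap (fun t : ℝ => (t : EReal)) (𝓝[>] α)) atBot) ∨
    (¬(α = ⊥ ∧ Tendsto (fun t => (m₂ t, m₃ t)) atBot (𝓝 ((0 : ℝ), (0 : ℝ)))) ∧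
      (α = ⊥ ∧ Tendsto (fun t => (m₂ t, m₃ t)) atBot (𝓝 ((0 : ℝ), (-1 : ℝ)))) ∧
      ¬Tendsto m₃ (comap (fun t : ℝ => (t : EReal)) (𝓝[>] α)) atBot) ∨
    (¬(α = ⊥ ∧ Tendsto (fun t => (m₂ t, m₃ t)) atBot (𝓝 ((0 : ℝ), (0 : ℝ)))) ∧
      ¬(α = ⊥ ∧ Tendsto (fun t => (m₂ t, m₃ t)) atBot (𝓝 ((0 : ℝ), (-1 : ℝ)))) ∧
      Tendsto m₃ (comap (fun t : ℝ => (t : EReal)) (𝓝[>] α)) atBot) := by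
  obtain ⟨h2p, h2l, h3n⟩ := hinit
  induction α using EReal.rec with
  | bot =>
    rw [RF_comap_bot]
    have ho₂ : ∀ t : ℝ, HasDerivAt m₂ (m₂ t * (1 - m₂ t) * (1 + m₂ t - m₃ t)) t :=
      fun t => hode₂ t (bot_lt_iff_ne_bot.mpr (EReal.coe_ne_bot t))
    have ho₃ : ∀ t : ℝ, HasDerivAt m₃ (m₃ t * (1 - m₃ t) * (1 - m₂ t + m₃ t)) t :=
      fun t => hode₃ t (bot_lt_iff_ne_bot.mpr (EReal.coe_ne_bot t))
    rcases RF_global ho₂ ho₃ h2p h2l h3n with h | h | h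
    · have hm₃ : Tendsto m₃ atBot (𝓝 0) := (continuous_snd.tendsto _).comp h
      refine Or.inl ⟨⟨rfl, h⟩, ?_, not_tendsto_atBot_of_tendsto_nhds hm₃⟩
      rintro ⟨-, h'⟩
      have := tendsto_nhds_unique h h'
      rw [Prod.ext_iff] at this
      norm_num at this
    · have hm₃ : Tendsto m₃ atBot (𝓝 (-1)) := (continuous_snd.tendsto _).comp h
      refine Or.inr (Or.inl ⟨?_, ⟨rfl, h⟩, not_tendsto_atBot_of_tendsto_nhds hm₃⟩)
      rintro ⟨-, h'⟩
      have := tendsto_nhds_unique h h'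
      rw [Prod.ext_iff] at this
      norm_num at this
    · refine Or.inr (Or.inr ⟨?_, ?_, h⟩)
      · rintro ⟨-, h'⟩
        exact not_tendsto_atBot_of_tendsto_nhds ((continuous_snd.tendsto _).comp h') h
      · rintro ⟨-, h'⟩
        exact not_tendsto_atBot_of_tendsto_nhds ((continuous_snd.tendsto _).comp h') h
  | coe a =>
    rw [RF_comap_coe]
    have hat₀ : a < t₀ := EReal.coe_lt_coe_iff.mp hαt₀
    have ho₂ : ∀ t ∈ Ioi a, HasDerivAt m₂ (m₂ t * (1 - m₂ t) * (1 + m₂ t - m₃ t)) t :=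
      fun t ht => hode₂ t (EReal.coe_lt_coe_iff.mpr ht)
    have ho₃ : ∀ t ∈ Ioi a, HasDerivAt m₃ (m₃ t * (1 - m₃ t) * (1 - m₂ t + m₃ t)) t :=
      fun t ht => hode₃ t (EReal.coe_lt_coe_iff.mpr ht)
    have hext : ∀ ε > (0:ℝ), ¬ ∃ z₂ z₃ : ℝ → ℝ,
        (∀ t ∈ Ioi (a - ε), HasDerivAt z₂ (z₂ t * (1 - z₂ t) * (1 + z₂ t - z₃ t)) t) ∧
        (∀ t ∈ Ioi (a - ε), HasDerivAt z₃ (z₃ t * (1 - z₃ t) * (1 - z₂ t + z₃ t)) t) ∧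
        (∀ t ∈ Ioi a, z₂ t = m₂ t ∧ z₃ t = m₃ t) := by
      rintro ε hε ⟨z₂, z₃, hz1, hz2, hz3⟩
      apply hmax ((a - ε : ℝ) : EReal) (EReal.coe_lt_coe_iff.mpr (by linarith))
      exact ⟨z₂, z₃,
        fun t ht => hz1 t (mem_Ioi.mpr (EReal.coe_lt_coe_iff.mp ht)),
        fun t ht => hz2 t (mem_Ioi.mpr (EReal.coe_lt_coe_iff.mp ht)),
        fun t ht => hz3 t (mem_Ioi.mpr (EReal.coe_lt_coe_iff.mp ht))⟩
    have hA := RF_finite hat₀ ho₂ ho₃ h2p h2l h3n hext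
    refine Or.inr (Or.inr ⟨?_, ?_, hA⟩)
    · rintro ⟨h', -⟩; exact EReal.coe_ne_bot a h'
    · rintro ⟨h', -⟩; exact EReal.coe_ne_bot a h'
  | top => exact absurd hαt₀ (not_top_lt)
end

section
/- The point (1,1) is an asymptotically stable fixed point of the system dm₂/dt = m₂(1−m₂)(1+m₂−m₃), dm₃/dt = m₃(1−m₃)(1−m₂+m₃): there exists δ > 0 such that every maximal solution (m₂,m₃) with ‖(m₂(t₀),m₃(t₀)) − (1,1)‖ < δ at some time t₀ is defined for all t ≥ t₀ and satisfies (m₂(t),m₃(t)) → (1,1) as t → ∞. -/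
open Filter Set Topology Metric

noncomputable def rfClamp (z : ℝ) : ℝ := max (3/4) (min z (5/4))

noncomputable def rfF (p : ℝ × ℝ) : ℝ × ℝ :=
  (p.1 * (1 - p.1) * (1 + p.1 - p.2), p.2 * (1 - p.2) * (1 - p.1 + p.2))

noncomputable def rfG (p : ℝ × ℝ) : ℝ × ℝ := rfF (rfClamp p.1, rfClamp p.2)

lemma rfClamp_mem (z : ℝ) : rfClamp z ∈ Icc (3/4 : ℝ) (5/4) := by
  refine ⟨le_max_left _ _, ?_⟩
  simp only [rfClamp, max_le_iff]
  exact ⟨by norm_num, min_le_right _ _⟩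

lemma rfClamp_eq_of_mem {z : ℝ} (h : z ∈ Icc (3/4 : ℝ) (5/4)) : rfClamp z = z := by
  simp [rfClamp, min_eq_left h.2, max_eq_right h.1]

lemma rfClamp_lip (a b : ℝ) : |rfClamp a - rfClamp b| ≤ |a - b| := by
  have h1 : |rfClamp a - rfClamp b| ≤ |min a (5/4:ℝ) - min b (5/4)| := by
    simpa [rfClamp, max_comm] using abs_max_sub_max_le_abs (min a (5/4:ℝ)) (min b (5/4)) (3/4:ℝ)
  have h2 : |min a (5/4:ℝ) - min b (5/4)| ≤ |a - b| := by
    simpa using abs_min_sub_min_le_max a (5/4:ℝ) b (5/4:ℝ)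
  exact h1.trans h2

lemma rfClamp_sign (z : ℝ) : (z - 1) * (1 - rfClamp z) ≤ 0 := by
  rcases le_total z 1 with h | h
  · have : rfClamp z ≤ 1 := by
      simp only [rfClamp, max_le_iff]
      constructor
      · norm_num
      · exact le_trans (min_le_left _ _) h
    nlinarith
  · have : 1 ≤ rfClamp z := le_trans (by simpa using (le_min h (by norm_num : (1:ℝ) ≤ 5/4))) (le_max_right _ _)
    nlinarith

lemma rf_comp_lip (x y x' y' d : ℝ) (hx : x ∈ Icc (3/4:ℝ) (5/4)) (hy : y ∈ Icc (3/4:ℝ) (5/4))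
    (hx' : x' ∈ Icc (3/4:ℝ) (5/4)) (hy' : y' ∈ Icc (3/4:ℝ) (5/4))
    (h1 : |x - x'| ≤ d) (h2 : |y - y'| ≤ d) :
    |x * (1 - x) * (1 + x - y) - x' * (1 - x') * (1 + x' - y')| ≤ 8 * d := by
  obtain ⟨hx1, hx2⟩ := hx; obtain ⟨hy1, hy2⟩ := hy
  obtain ⟨hx1', hx2'⟩ := hx'; obtain ⟨hy1', hy2'⟩ := hy'
  have e1 : |x - x'| ≤ d := h1
  have hd : 0 ≤ d := le_trans (abs_nonneg _) h1
  have key : x * (1 - x) * (1 + x - y) - x' * (1 - x') * (1 + x' - y')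
      = (x - x') * ((1 - x) * (1 + x - y)) + x' * ((x' - x) * (1 + x - y))
        + x' * (1 - x') * ((x - x') + (y' - y)) := by ring
  rw [key]
  have a1 : |(x - x') * ((1 - x) * (1 + x - y))| ≤ d * (3/8) := by
    rw [abs_mul]
    apply mul_le_mul h1 _ (abs_nonneg _) hd
    rw [abs_mul]
    have : |1 - x| ≤ 1/4 := by rw [abs_le]; constructor <;> linarith
    have h3 : |1 + x - y| ≤ 3/2 := by rw [abs_le]; constructor <;> linarith
    nlinarith [abs_nonneg (1 - x), abs_nonneg (1 + x - y)]
  have a2 : |x' * ((x' - x) * (1 + x - y))| ≤ (5/4) * (d * (3/2)) := by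
    rw [abs_mul, abs_mul]
    have hb : |x'| ≤ 5/4 := by rw [abs_le]; constructor <;> linarith
    have h3 : |1 + x - y| ≤ 3/2 := by rw [abs_le]; constructor <;> linarith
    have h4 : |x' - x| ≤ d := by rwa [abs_sub_comm]
    have : |x' - x| * |1 + x - y| ≤ d * (3/2) :=
      mul_le_mul h4 h3 (abs_nonneg _) hd
    nlinarith [abs_nonneg x', abs_nonneg (x' - x), abs_nonneg (1 + x - y)]
  have a3 : |x' * (1 - x') * ((x - x') + (y' - y))| ≤ (5/16) * (2*d) := by
    rw [abs_mul]
    have hb : |x' * (1 - x')| ≤ 5/16 := by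
      rw [abs_mul]
      have h5 : |x'| ≤ 5/4 := by rw [abs_le]; constructor <;> linarith
      have h6 : |1 - x'| ≤ 1/4 := by rw [abs_le]; constructor <;> linarith
      nlinarith [abs_nonneg x', abs_nonneg (1 - x')]
    have h7 : |(x - x') + (y' - y)| ≤ 2*d := by
      refine le_trans (abs_add_le _ _) ?_
      have : |y' - y| ≤ d := by rwa [abs_sub_comm]
      linarith
    nlinarith [abs_nonneg (x' * (1 - x')), abs_nonneg ((x - x') + (y' - y))]
  calc |(x - x') * ((1 - x) * (1 + x - y)) + x' * ((x' - x) * (1 + x - y))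
        + x' * (1 - x') * ((x - x') + (y' - y))|
      ≤ |(x - x') * ((1 - x) * (1 + x - y)) + x' * ((x' - x) * (1 + x - y))|
        + |x' * (1 - x') * ((x - x') + (y' - y))| := abs_add_le _ _
    _ ≤ |(x - x') * ((1 - x) * (1 + x - y))| + |x' * ((x' - x) * (1 + x - y))|
        + |x' * (1 - x') * ((x - x') + (y' - y))| := by linarith [abs_add_le ((x - x') * ((1 - x) * (1 + x - y))) (x' * ((x' - x) * (1 + x - y)))]
    _ ≤ d * (3/8) + (5/4) * (d * (3/2)) + (5/16) * (2*d) := by linarith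
    _ ≤ 8 * d := by linarith

lemma rfG_lip : LipschitzWith 8 rfG := by
  apply LipschitzWith.of_dist_le_mul
  intro p q
  set d := dist p q with hd
  have hd1 : |p.1 - q.1| ≤ d := by
    rw [hd, Prod.dist_eq]; exact le_max_of_le_left (by rw [Real.dist_eq])
  have hd2 : |p.2 - q.2| ≤ d := by
    rw [hd, Prod.dist_eq]; exact le_max_of_le_right (by rw [Real.dist_eq])
  have c1 := (rfClamp_lip p.1 q.1).trans hd1
  have c2 := (rfClamp_lip p.2 q.2).trans hd2
  rw [Prod.dist_eq, max_le_iff]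
  constructor
  · rw [Real.dist_eq]
    show |rfClamp p.1 * (1 - rfClamp p.1) * (1 + rfClamp p.1 - rfClamp p.2) -
      rfClamp q.1 * (1 - rfClamp q.1) * (1 + rfClamp q.1 - rfClamp q.2)| ≤ 8 * d
    exact rf_comp_lip _ _ _ _ _ (rfClamp_mem _) (rfClamp_mem _) (rfClamp_mem _) (rfClamp_mem _) c1 c2
  · rw [Real.dist_eq]
    show |rfClamp p.2 * (1 - rfClamp p.2) * (1 - rfClamp p.1 + rfClamp p.2) -
      rfClamp q.2 * (1 - rfClamp q.2) * (1 - rfClamp q.1 + rfClamp q.2)| ≤ 8 * d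
    have := rf_comp_lip (rfClamp p.2) (rfClamp p.1) (rfClamp q.2) (rfClamp q.1) d
      (rfClamp_mem _) (rfClamp_mem _) (rfClamp_mem _) (rfClamp_mem _) c2 c1
    convert this using 3 <;> ring

lemma rf_abs_bdd {u v : ℝ} (hu : u ∈ Icc (3/4:ℝ) (5/4)) (hv : v ∈ Icc (3/4:ℝ) (5/4)) :
    |u * (1 - u) * (1 + u - v)| ≤ 1 := by
  obtain ⟨u1, u2⟩ := hu; obtain ⟨v1, v2⟩ := hv
  rw [abs_mul, abs_mul]
  have h1 : |u| ≤ 5/4 := by rw [abs_le]; constructor <;> linarith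
  have h2 : |1 - u| ≤ 1/4 := by rw [abs_le]; constructor <;> linarith
  have h3 : |1 + u - v| ≤ 3/2 := by rw [abs_le]; constructor <;> linarith
  have m1 : |u| * |1 - u| ≤ 5/16 := by
    nlinarith [abs_nonneg u, abs_nonneg (1 - u)]
  have m2 : |u| * |1 - u| * |1 + u - v| ≤ (5/16) * (3/2) :=
    mul_le_mul m1 h3 (abs_nonneg _) (by norm_num)
  linarith

lemma rfG_bdd (p : ℝ × ℝ) : ‖rfG p‖ ≤ 1 := by
  rw [Prod.norm_def]
  obtain ⟨a1, a2⟩ := rfClamp_mem p.1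
  obtain ⟨b1, b2⟩ := rfClamp_mem p.2
  rw [max_le_iff]
  constructor
  · show ‖rfClamp p.1 * (1 - rfClamp p.1) * (1 + rfClamp p.1 - rfClamp p.2)‖ ≤ 1
    rw [Real.norm_eq_abs]
    exact rf_abs_bdd (rfClamp_mem _) (rfClamp_mem _)
  · show ‖rfClamp p.2 * (1 - rfClamp p.2) * (1 - rfClamp p.1 + rfClamp p.2)‖ ≤ 1
    rw [Real.norm_eq_abs]
    have := rf_abs_bdd (rfClamp_mem p.2) (rfClamp_mem p.1)
    convert this using 3; ring

/-- solution on a finite interval -/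
lemma rfG_sol_Icc (t₀ : ℝ) (x₀ : ℝ × ℝ) (n : ℕ) :
    ∃ f : ℝ → ℝ × ℝ, f t₀ = x₀ ∧
      (ContinuousOn f (Icc (t₀ - (n+1)) (t₀ + (n+1)))) ∧
      ∀ t ∈ Ioo (t₀ - (n+1)) (t₀ + (n+1)), HasDerivAt f (rfG (f t)) t := by
  have ht0 : t₀ ∈ Icc (t₀ - (n+1)) (t₀ + (n+1)) := by
    constructor <;> [linarith [Nat.cast_nonneg (α := ℝ) n]; linarith [Nat.cast_nonneg (α := ℝ) n]]
  have hpl : IsPicardLindelof (fun _ p => rfG p) (⟨t₀, ht0⟩ : Icc (t₀ - (n+1)) (t₀ + (n+1)))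
      x₀ (n+1) 0 1 8 := by
    constructor
    · intro t _; exact rfG_lip.lipschitzOnWith
    · intro x _; exact continuousOn_const
    · intro t _ x _; exact rfG_bdd x
    · have : max (t₀ + (n+1) - t₀) (t₀ - (t₀ - (n+1))) = (n+1 : ℝ) := by
        rw [max_eq_left] <;> ring_nf <;> simp
      show ((1 : NNReal) : ℝ) * max (t₀ + (n+1) - t₀) (t₀ - (t₀ - (n+1))) ≤ ((n+1 : NNReal) : ℝ) - ((0 : NNReal) : ℝ)
      rw [this]; push_cast; simp
  obtain ⟨f, hf0, hf⟩ := hpl.exists_eq_forall_mem_Icc_hasDerivWithinAt₀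
  refine ⟨f, hf0, fun t ht => ((hf t ht).continuousWithinAt), fun t ht => ?_⟩
  have h1 : Icc (t₀ - (n+1)) (t₀ + (n+1)) ∈ 𝓝 t := Icc_mem_nhds ht.1 ht.2
  exact (hf t (Ioo_subset_Icc_self ht)).hasDerivAt h1

/-- global solution -/
lemma rfG_sol_global (t₀ : ℝ) (x₀ : ℝ × ℝ) :
    ∃ m : ℝ → ℝ × ℝ, m t₀ = x₀ ∧ ∀ t, HasDerivAt m (rfG (m t)) t := by
  choose f hf0 hfc hf using rfG_sol_Icc t₀ x₀
  -- agreement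
  have hagree : ∀ n k : ℕ, n ≤ k → ∀ t ∈ Icc (t₀ - (n+1)) (t₀ + (n+1)), f n t = f k t := by
    intro n k hnk
    have hsub : Icc (t₀ - ((n:ℝ)+1)) (t₀ + (n+1)) ⊆ Icc (t₀ - ((k:ℝ)+1)) (t₀ + (k+1)) := by
      apply Icc_subset_Icc <;> [skip; skip] <;>
        · have : (n:ℝ) ≤ k := Nat.cast_le.mpr hnk
          linarith
    have hsub' : Ioo (t₀ - ((n:ℝ)+1)) (t₀ + (n+1)) ⊆ Ioo (t₀ - ((k:ℝ)+1)) (t₀ + (k+1)) := by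
      apply Ioo_subset_Ioo <;>
        · have : (n:ℝ) ≤ k := Nat.cast_le.mpr hnk
          linarith
    have ht₀ : t₀ ∈ Ioo (t₀ - ((n:ℝ)+1)) (t₀ + (n+1)) := by
      constructor <;> [linarith [Nat.cast_nonneg (α := ℝ) n]; linarith [Nat.cast_nonneg (α := ℝ) n]]
    exact ODE_solution_unique_of_mem_Icc (v := fun _ p => rfG p) (s := fun _ => univ)
      (fun _ _ => rfG_lip.lipschitzOnWith)
      ht₀ (hfc n) (fun t ht => hf n t ht) (fun _ _ => mem_univ _)
      ((hfc k).mono hsub) (fun t ht => hf k t (hsub' ht)) (fun _ _ => mem_univ _)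
      (by rw [hf0 n, hf0 k])
  set m : ℝ → ℝ × ℝ := fun t => f ⌊|t - t₀|⌋₊ t with hm
  have hmem : ∀ t : ℝ, ∀ n : ℕ, |t - t₀| < n + 1 → t ∈ Ioo (t₀ - ((n:ℝ)+1)) (t₀ + (n+1)) := by
    intro t n h
    rw [abs_lt] at h
    constructor <;> [linarith [h.1]; linarith [h.2]]
  have hmself : ∀ t : ℝ, t ∈ Ioo (t₀ - ((⌊|t - t₀|⌋₊ : ℝ)+1)) (t₀ + (⌊|t - t₀|⌋₊+1)) :=
    fun t => hmem t _ (Nat.lt_floor_add_one _)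
  have hmeq : ∀ t : ℝ, ∀ n : ℕ, |t - t₀| < n + 1 → m t = f n t := by
    intro t n h
    rcases le_total ⌊|t - t₀|⌋₊ n with hle | hle
    · exact hagree _ n hle t (Ioo_subset_Icc_self (hmself t))
    · exact (hagree n _ hle t (Ioo_subset_Icc_self (hmem t n h))).symm
  refine ⟨m, ?_, ?_⟩
  · show f ⌊|t₀ - t₀|⌋₊ t₀ = x₀
    simp [hf0]
  · intro t
    set n := ⌊|t - t₀|⌋₊ with hn
    have heq : m =ᶠ[𝓝 t] f n := by
      have hopen : IsOpen {u : ℝ | |u - t₀| < n + 1} := by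
        have : Continuous fun u : ℝ => |u - t₀| := (continuous_id.sub continuous_const).abs
        exact isOpen_lt this continuous_const
      have htmem : t ∈ {u : ℝ | |u - t₀| < n + 1} := by
        show |t - t₀| < (n:ℝ) + 1
        rw [hn]; exact_mod_cast Nat.lt_floor_add_one |t - t₀|
      filter_upwards [hopen.mem_nhds htmem] with u hu
      exact hmeq u n hu
    have hd : HasDerivAt (f n) (rfG (f n t)) t := hf n t (hmself t)
    have : HasDerivAt m (rfG (f n t)) t := hd.congr_of_eventuallyEq heq
    rwa [show m t = f n t from hmeq t n (Nat.lt_floor_add_one _)]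

lemma rfG_fst_sign (p : ℝ × ℝ) : (p.1 - 1) * (rfG p).1 ≤ 0 := by
  have h := rfClamp_sign p.1
  obtain ⟨h1, h2⟩ := rfClamp_mem p.1
  obtain ⟨h3, h4⟩ := rfClamp_mem p.2
  have pos : (0:ℝ) ≤ rfClamp p.1 * (1 + rfClamp p.1 - rfClamp p.2) := by nlinarith
  have key := mul_nonpos_of_nonpos_of_nonneg h pos
  show (p.1 - 1) * (rfClamp p.1 * (1 - rfClamp p.1) * (1 + rfClamp p.1 - rfClamp p.2)) ≤ 0
  nlinarith [key]

lemma rfG_snd_sign (p : ℝ × ℝ) : (p.2 - 1) * (rfG p).2 ≤ 0 := by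
  have h := rfClamp_sign p.2
  obtain ⟨h1, h2⟩ := rfClamp_mem p.1
  obtain ⟨h3, h4⟩ := rfClamp_mem p.2
  have pos : (0:ℝ) ≤ rfClamp p.2 * (1 - rfClamp p.1 + rfClamp p.2) := by nlinarith
  have key := mul_nonpos_of_nonpos_of_nonneg h pos
  show (p.2 - 1) * (rfClamp p.2 * (1 - rfClamp p.2) * (1 - rfClamp p.1 + rfClamp p.2)) ≤ 0
  nlinarith [key]

lemma rf_solution (t₀ a b : ℝ) (hin : max |a-1| |b-1| < 1/8) :
    ∃ m : ℝ → ℝ × ℝ, m t₀ = (a,b) ∧ (∀ t, HasDerivAt m (rfG (m t)) t) ∧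
      (∀ t, t₀ ≤ t → ((m t).1 - 1)^2 + ((m t).2 - 1)^2 < 1/32) ∧
      Tendsto m atTop (𝓝 ((1:ℝ),(1:ℝ))) := by
  obtain ⟨m, hm0, hm⟩ := rfG_sol_global t₀ (a, b)
  -- coordinate derivatives
  have hm2 : ∀ t, HasDerivAt (fun u => (m u).1) ((rfG (m t)).1) t := fun t =>
    (ContinuousLinearMap.fst ℝ ℝ ℝ).hasFDerivAt.comp_hasDerivAt t (hm t)
  have hm3 : ∀ t, HasDerivAt (fun u => (m u).2) ((rfG (m t)).2) t := fun t =>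
    (ContinuousLinearMap.snd ℝ ℝ ℝ).hasFDerivAt.comp_hasDerivAt t (hm t)
  set V : ℝ → ℝ := fun t => ((m t).1 - 1)^2 + ((m t).2 - 1)^2 with hVdef
  have hV : ∀ t, HasDerivAt V
      (2*((m t).1-1)*(rfG (m t)).1 + 2*((m t).2-1)*(rfG (m t)).2) t := by
    intro t
    have d1 : HasDerivAt (fun u => ((m u).1 - 1)^2)
        (2*((m t).1-1)*(rfG (m t)).1) t := by
      have := (((hm2 t).sub_const 1)).fun_pow 2
      exact this.congr_deriv (by norm_num)
    have d2 : HasDerivAt (fun u => ((m u).2 - 1)^2)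
        (2*((m t).2-1)*(rfG (m t)).2) t := by
      have := (((hm3 t).sub_const 1)).fun_pow 2
      exact this.congr_deriv (by norm_num)
    exact d1.add d2
  have hVanti : Antitone V := by
    apply antitone_of_deriv_nonpos
    · exact fun t => (hV t).differentiableAt
    · intro t
      rw [(hV t).deriv]
      have := rfG_fst_sign (m t)
      have := rfG_snd_sign (m t)
      nlinarith [rfG_fst_sign (m t), rfG_snd_sign (m t)]
  have hV0 : V t₀ < 1/32 := by
    rw [hVdef]; simp only [hm0]
    rw [max_lt_iff] at hin
    have h1 := hin.1; have h2 := hin.2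
    rw [abs_lt] at h1 h2
    nlinarith
  have hVsmall : ∀ t, t₀ ≤ t → V t < 1/32 := fun t ht => lt_of_le_of_lt (hVanti ht) hV0
  refine ⟨m, hm0, hm, hVsmall, ?_⟩
  -- convergence
  have hmem : ∀ t, t₀ ≤ t → (m t).1 ∈ Icc (3/4:ℝ) (5/4) ∧ (m t).2 ∈ Icc (3/4:ℝ) (5/4) := by
    intro t ht
    have h := hVsmall t ht
    constructor <;> constructor <;> nlinarith [sq_nonneg ((m t).1 - 1), sq_nonneg ((m t).2 - 1)]
  set U : ℝ → ℝ := fun t => V t * Real.exp ((3/4)*t) with hUdef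
  have hU : ∀ t, HasDerivAt U
      ((2*((m t).1-1)*(rfG (m t)).1 + 2*((m t).2-1)*(rfG (m t)).2) * Real.exp ((3/4)*t)
        + V t * (Real.exp ((3/4)*t) * (3/4))) t := by
    intro t
    have h' := (hV t).fun_mul (((hasDerivAt_id t).const_mul (3/4)).exp)
    simpa using h'
  have hUanti : AntitoneOn U (Ici t₀) := by
    apply antitoneOn_of_deriv_nonpos (convex_Ici t₀)
    · exact fun t _ => ((hU t).continuousAt).continuousWithinAt
    · exact fun t _ => ((hU t).differentiableAt).differentiableWithinAt
    · intro t ht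
      rw [interior_Ici] at ht
      rw [(hU t).deriv]
      obtain ⟨⟨x1, x2⟩, ⟨y1, y2⟩⟩ := hmem t (le_of_lt ht)
      have e1 : rfClamp (m t).1 = (m t).1 := rfClamp_eq_of_mem ⟨x1, x2⟩
      have e2 : rfClamp (m t).2 = (m t).2 := rfClamp_eq_of_mem ⟨y1, y2⟩
      have hG1 : (rfG (m t)).1 = (m t).1 * (1 - (m t).1) * (1 + (m t).1 - (m t).2) := by
        show rfClamp (m t).1 * (1 - rfClamp (m t).1) * (1 + rfClamp (m t).1 - rfClamp (m t).2) = _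
        rw [e1, e2]
      have hG2 : (rfG (m t)).2 = (m t).2 * (1 - (m t).2) * (1 - (m t).1 + (m t).2) := by
        show rfClamp (m t).2 * (1 - rfClamp (m t).2) * (1 - rfClamp (m t).1 + rfClamp (m t).2) = _
        rw [e1, e2]
      rw [hG1, hG2, hVdef]
      set x := (m t).1; set y := (m t).2
      have hexp : (0:ℝ) < Real.exp ((3/4)*t) := Real.exp_pos _
      have k1 : (x-1)^2 * (3/8) ≤ (x-1)^2 * (x*(1+x-y)) := by
        apply mul_le_mul_of_nonneg_left _ (sq_nonneg _)
        nlinarith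
      have k2 : (y-1)^2 * (3/8) ≤ (y-1)^2 * (y*(1-x+y)) := by
        apply mul_le_mul_of_nonneg_left _ (sq_nonneg _)
        nlinarith
      have core : 2*(x-1)*(x*(1-x)*(1+x-y)) + 2*(y-1)*(y*(1-y)*(1-x+y))
          + ((x-1)^2 + (y-1)^2) * (3/4) ≤ 0 := by nlinarith [k1, k2]
      calc (2*(x-1)*(x*(1-x)*(1+x-y)) + 2*(y-1)*(y*(1-y)*(1-x+y))) * Real.exp ((3/4)*t)
          + ((x-1)^2 + (y-1)^2) * (Real.exp ((3/4)*t) * (3/4))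
          = (2*(x-1)*(x*(1-x)*(1+x-y)) + 2*(y-1)*(y*(1-y)*(1-x+y))
            + ((x-1)^2 + (y-1)^2) * (3/4)) * Real.exp ((3/4)*t) := by ring
        _ ≤ 0 * Real.exp ((3/4)*t) := by
            apply mul_le_mul_of_nonneg_right core (le_of_lt hexp)
        _ = 0 := by ring
  -- V t ≤ C * exp (-(3/4) t)
  set C : ℝ := V t₀ * Real.exp ((3/4)*t₀) with hC
  have hVle : ∀ t, t₀ ≤ t → V t ≤ C * Real.exp (-((3/4)*t)) := by
    intro t ht
    have := hUanti (self_mem_Ici) ht ht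
    rw [hUdef] at this
    have hexp : (0:ℝ) < Real.exp ((3/4)*t) := Real.exp_pos _
    rw [Real.exp_neg]
    have hC' : V t * Real.exp ((3/4)*t) ≤ C := this
    calc V t = (V t * Real.exp ((3/4)*t)) * (Real.exp ((3/4)*t))⁻¹ := by field_simp
      _ ≤ C * (Real.exp ((3/4)*t))⁻¹ := by
          apply mul_le_mul_of_nonneg_right hC' (by positivity)
  have hVtend : Tendsto V atTop (𝓝 0) := by
    have htop : Tendsto (fun t : ℝ => (3/4)*t) atTop atTop := by
      apply Tendsto.const_mul_atTop (by norm_num : (0:ℝ) < 3/4) tendsto_id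
    have hexp : Tendsto (fun t : ℝ => C * Real.exp (-((3/4)*t))) atTop (𝓝 (C * 0)) := by
      exact (Real.tendsto_exp_neg_atTop_nhds_zero.comp htop).const_mul C
    rw [mul_zero] at hexp
    apply tendsto_of_tendsto_of_tendsto_of_le_of_le' tendsto_const_nhds hexp
    · filter_upwards with t
      positivity
    · filter_upwards [eventually_ge_atTop t₀] with t ht
      exact hVle t ht
  -- convergence of m
  rw [tendsto_iff_dist_tendsto_zero]
  apply squeeze_zero (fun t => dist_nonneg) (g := fun t => Real.sqrt (V t))
  · intro t
    rw [Prod.dist_eq, max_le_iff]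
    have e1 : ((1:ℝ),(1:ℝ)).1 = 1 := rfl
    have e2 : ((1:ℝ),(1:ℝ)).2 = 1 := rfl
    rw [e1, e2]
    constructor
    · rw [Real.dist_eq, ← Real.sqrt_sq_eq_abs]
      apply Real.sqrt_le_sqrt
      simp only [hVdef]
      nlinarith [sq_nonneg ((m t).2 - 1)]
    · rw [Real.dist_eq, ← Real.sqrt_sq_eq_abs]
      apply Real.sqrt_le_sqrt
      simp only [hVdef]
      nlinarith [sq_nonneg ((m t).1 - 1)]
  · have := (Real.continuous_sqrt.tendsto 0).comp hVtend
    rwa [Real.sqrt_zero] at this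

lemma rfB_mem_iff (p : ℝ × ℝ) :
    p ∈ closedBall ((1:ℝ),(1:ℝ)) (1/4) ↔ |p.1 - 1| ≤ 1/4 ∧ |p.2 - 1| ≤ 1/4 := by
  rw [mem_closedBall, Prod.dist_eq, max_le_iff, Real.dist_eq, Real.dist_eq]

lemma rfB_mem_ball_iff (p : ℝ × ℝ) :
    p ∈ ball ((1:ℝ),(1:ℝ)) (1/4) ↔ |p.1 - 1| < 1/4 ∧ |p.2 - 1| < 1/4 := by
  rw [mem_ball, Prod.dist_eq, max_lt_iff, Real.dist_eq, Real.dist_eq]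

lemma rfFG_eq {p : ℝ × ℝ} (hp : p ∈ closedBall ((1:ℝ),(1:ℝ)) (1/4)) : rfG p = rfF p := by
  rw [rfB_mem_iff] at hp
  obtain ⟨h1, h2⟩ := hp
  rw [abs_le] at h1 h2
  have e1 : rfClamp p.1 = p.1 := rfClamp_eq_of_mem ⟨by linarith [h1.1], by linarith [h1.2]⟩
  have e2 : rfClamp p.2 = p.2 := rfClamp_eq_of_mem ⟨by linarith [h2.1], by linarith [h2.2]⟩
  rw [rfG, e1, e2]

lemma rfF_lipOn : LipschitzOnWith 8 rfF (closedBall ((1:ℝ),(1:ℝ)) (1/4)) := by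
  intro p hp q hq
  rw [← rfFG_eq hp, ← rfFG_eq hq]
  exact rfG_lip p q

lemma rf_unique (t₀ : ℝ) (m : ℝ → ℝ × ℝ) (hm : ∀ t, HasDerivAt m (rfG (m t)) t)
    (hsmall : ∀ t, t₀ ≤ t → ((m t).1 - 1)^2 + ((m t).2 - 1)^2 < 1/32)
    (s : Set ℝ) (Z : ℝ → ℝ × ℝ) (hs : IsOpen s) (hoc : s.OrdConnected) (hts : t₀ ∈ s)
    (hZ : ∀ t ∈ s, HasDerivAt Z (rfF (Z t)) t) (hZ0 : Z t₀ = m t₀) :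
    ∀ t ∈ s, t₀ ≤ t → Z t = m t := by
  set B := closedBall ((1:ℝ),(1:ℝ)) (1/4) with hB
  have hmball : ∀ t, t₀ ≤ t → m t ∈ ball ((1:ℝ),(1:ℝ)) (1/4) := by
    intro t ht
    rw [rfB_mem_ball_iff]
    have h := hsmall t ht
    constructor <;> (rw [abs_lt]; constructor <;>
      nlinarith [sq_nonneg ((m t).1 - 1), sq_nonneg ((m t).2 - 1)])
  have hmB : ∀ t, t₀ ≤ t → m t ∈ B := fun t ht => ball_subset_closedBall (hmball t ht)
  have hmF : ∀ t, t₀ ≤ t → HasDerivAt m (rfF (m t)) t := by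
    intro t ht
    have := hm t
    rwa [rfFG_eq (hmB t ht)] at this
  have hmc : Continuous m := by
    rw [continuous_iff_continuousAt]; exact fun t => (hm t).continuousAt
  -- the subset of s ∩ Ici t₀ where Z = m is clopen
  set s' : Set ℝ := s ∩ Ici t₀ with hs'
  have hpre : IsPreconnected s' := (hoc.inter Set.ordConnected_Ici).isPreconnected
  haveI : PreconnectedSpace s' := Subtype.preconnectedSpace hpre
  set E : Set s' := {x | Z ↑x = m ↑x} with hE
  have hZconts' : ∀ x : s', ContinuousAt Z ↑x := fun x => (hZ _ x.2.1).continuousAt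
  have hEclosed : IsClosed E := by
    apply isClosed_eq
    · exact continuous_iff_continuousAt.mpr fun x =>
        (hZconts' x).comp continuous_subtype_val.continuousAt
    · exact hmc.comp continuous_subtype_val
  have hEopen : IsOpen E := by
    rw [isOpen_iff_mem_nhds]
    rintro ⟨t, hts'⟩ hxE
    have htS : t ∈ s := hts'.1
    have htge : t₀ ≤ t := hts'.2
    have hZt : Z t = m t := hxE
    -- choose ε
    obtain ⟨ε₁, hε₁pos, hε₁⟩ := Metric.isOpen_iff.mp hs t htS
    have hZB : Z ⁻¹' (ball ((1:ℝ),(1:ℝ)) (1/4)) ∈ 𝓝 t := by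
      apply (hZconts' ⟨t, hts'⟩).preimage_mem_nhds
      apply isOpen_ball.mem_nhds
      rw [hZt]; exact hmball t htge
    obtain ⟨ε₂, hε₂pos, hε₂⟩ := Metric.mem_nhds_iff.mp hZB
    set ε := min ε₁ ε₂ with hεdef
    have hεpos : 0 < ε := lt_min hε₁pos hε₂pos
    have key : ∀ u ∈ s', |u - t| < ε/2 → Z u = m u := by
      intro u hu' hud
      have huge : t₀ ≤ u := hu'.2
      have hballsub : ∀ w : ℝ, |w - t| < ε → w ∈ s ∧ Z w ∈ B := by
        intro w hw
        have hw1 : w ∈ ball t ε₁ := by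
          rw [mem_ball, Real.dist_eq]; exact lt_of_lt_of_le hw (min_le_left _ _)
        have hw2 : w ∈ ball t ε₂ := by
          rw [mem_ball, Real.dist_eq]; exact lt_of_lt_of_le hw (min_le_right _ _)
        exact ⟨hε₁ hw1, ball_subset_closedBall (hε₂ hw2)⟩
      rcases le_total t u with htu | hut
      · -- forward uniqueness on [t, u]
        have hIcc : ∀ w ∈ Icc t u, |w - t| < ε := by
          intro w hw
          rw [abs_sub_lt_iff]
          constructor
          · have : |u - t| < ε/2 := hud
            rw [abs_sub_lt_iff] at this
            linarith [hw.2, this.1, hεpos]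
          · linarith [hw.1, hεpos]
        have := ODE_solution_unique_of_mem_Icc_right
          (v := fun _ p => rfF p) (s := fun _ => B) (K := 8)
          (fun _ _ => rfF_lipOn)
          (f := Z) (g := m) (a := t) (b := u)
          (fun w hw => ((hZ w (hballsub w (hIcc w hw)).1).continuousAt).continuousWithinAt)
          (fun w hw => (hZ w (hballsub w (hIcc w (Ico_subset_Icc_self hw))).1).hasDerivWithinAt)
          (fun w hw => (hballsub w (hIcc w (Ico_subset_Icc_self hw))).2)
          (hmc.continuousOn)
          (fun w hw => (hmF w (le_trans htge hw.1)).hasDerivWithinAt)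
          (fun w hw => hmB w (le_trans htge hw.1))
          hZt
        exact this ⟨htu, le_refl u⟩
      · -- backward uniqueness on [u, t]
        have hIcc : ∀ w ∈ Icc u t, |w - t| < ε := by
          intro w hw
          rw [abs_sub_lt_iff]
          constructor
          · linarith [hw.2, hεpos]
          · have : |u - t| < ε/2 := hud
            rw [abs_sub_lt_iff] at this
            linarith [hw.1, this.2, hεpos]
        have := ODE_solution_unique_of_mem_Icc_left
          (v := fun _ p => rfF p) (s := fun _ => B) (K := 8)
          (fun _ _ => rfF_lipOn)
          (f := Z) (g := m) (a := u) (b := t)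
          (fun w hw => ((hZ w (hballsub w (hIcc w hw)).1).continuousAt).continuousWithinAt)
          (fun w hw => (hZ w (hballsub w (hIcc w (Ioc_subset_Icc_self hw))).1).hasDerivWithinAt)
          (fun w hw => (hballsub w (hIcc w (Ioc_subset_Icc_self hw))).2)
          (hmc.continuousOn)
          (fun w hw => (hmF w (le_trans huge (le_of_lt hw.1))).hasDerivWithinAt)
          (fun w hw => hmB w (le_trans huge (le_of_lt hw.1)))
          hZt
        exact this ⟨le_refl u, hut⟩
    rw [nhds_subtype_eq_comap, Filter.mem_comap]
    refine ⟨ball t (ε/2), ball_mem_nhds t (by positivity), ?_⟩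
    rintro ⟨u, hu'⟩ hu
    exact key u hu' (by rwa [mem_preimage, mem_ball, Real.dist_eq] at hu)
  have hEne : E.Nonempty := ⟨⟨t₀, hts, le_refl t₀⟩, hZ0⟩
  have : E = univ := by
    rcases isClopen_iff.mp ⟨hEclosed, hEopen⟩ with h | h
    · exact absurd h (Nonempty.ne_empty hEne)
    · exact h
  intro t ht hge
  have : (⟨t, ht, hge⟩ : s') ∈ E := this ▸ mem_univ _
  exact this


/-- The fixed point `(1,1)` (the round metric on `SU(2)`) is asymptotically stable for
the planar Ricci flow system: there is `δ > 0` such that every maximal solution starting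
within distance `δ` of `(1,1)` exists for all forward time and converges to `(1,1)`.
Forward globality and maximality of the exhibited solution are expressed by the final
uniqueness clause. -/
theorem ricci_flow_round_metric_asymptotically_stable :
    ∃ δ : ℝ, 0 < δ ∧
      ∀ (t₀ a b : ℝ), ‖((a, b) : ℝ × ℝ) - ((1 : ℝ), (1 : ℝ))‖ < δ →
        ∃ m₂ m₃ : ℝ → ℝ,
          m₂ t₀ = a ∧ m₃ t₀ = b ∧
          (∀ t ∈ Ici t₀, HasDerivAt m₂ (m₂ t * (1 - m₂ t) * (1 + m₂ t - m₃ t)) t) ∧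
          (∀ t ∈ Ici t₀, HasDerivAt m₃ (m₃ t * (1 - m₃ t) * (1 - m₂ t + m₃ t)) t) ∧
          Tendsto (fun t => (m₂ t, m₃ t)) atTop (𝓝 ((1 : ℝ), (1 : ℝ))) ∧
          (∀ (s : Set ℝ) (z₂ z₃ : ℝ → ℝ), IsOpen s → s.OrdConnected → t₀ ∈ s →
            (∀ t ∈ s, HasDerivAt z₂ (z₂ t * (1 - z₂ t) * (1 + z₂ t - z₃ t)) t) →
            (∀ t ∈ s, HasDerivAt z₃ (z₃ t * (1 - z₃ t) * (1 - z₂ t + z₃ t)) t) →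
            z₂ t₀ = a → z₃ t₀ = b → ∀ t ∈ s, t₀ ≤ t → z₂ t = m₂ t ∧ z₃ t = m₃ t) := by
  refine ⟨1/8, by norm_num, ?_⟩
  intro t₀ a b hin
  have hin' : max |a - 1| |b - 1| < 1/8 := by
    have : ((a, b) : ℝ × ℝ) - ((1 : ℝ), (1 : ℝ)) = (a - 1, b - 1) := rfl
    rw [this, Prod.norm_def, Real.norm_eq_abs, Real.norm_eq_abs] at hin
    exact hin
  obtain ⟨m, hm0, hm, hsmall, htend⟩ := rf_solution t₀ a b hin'
  -- square membership for t ≥ t₀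
  have hmem : ∀ t, t₀ ≤ t → (m t).1 ∈ Icc (3/4:ℝ) (5/4) ∧ (m t).2 ∈ Icc (3/4:ℝ) (5/4) := by
    intro t ht
    have h := hsmall t ht
    constructor <;> constructor <;>
      nlinarith [sq_nonneg ((m t).1 - 1), sq_nonneg ((m t).2 - 1)]
  have hG1 : ∀ t, t₀ ≤ t →
      (rfG (m t)).1 = (m t).1 * (1 - (m t).1) * (1 + (m t).1 - (m t).2) := by
    intro t ht
    obtain ⟨h1, h2⟩ := hmem t ht
    show rfClamp (m t).1 * (1 - rfClamp (m t).1) * (1 + rfClamp (m t).1 - rfClamp (m t).2) = _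
    rw [rfClamp_eq_of_mem h1, rfClamp_eq_of_mem h2]
  have hG2 : ∀ t, t₀ ≤ t →
      (rfG (m t)).2 = (m t).2 * (1 - (m t).2) * (1 - (m t).1 + (m t).2) := by
    intro t ht
    obtain ⟨h1, h2⟩ := hmem t ht
    show rfClamp (m t).2 * (1 - rfClamp (m t).2) * (1 - rfClamp (m t).1 + rfClamp (m t).2) = _
    rw [rfClamp_eq_of_mem h1, rfClamp_eq_of_mem h2]
  refine ⟨fun t => (m t).1, fun t => (m t).2,
    by show (m t₀).1 = a; rw [hm0], by show (m t₀).2 = b; rw [hm0], ?_, ?_, ?_, ?_⟩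
  · intro t ht
    have h := (ContinuousLinearMap.fst ℝ ℝ ℝ).hasFDerivAt.comp_hasDerivAt t (hm t)
    show HasDerivAt (fun t => (m t).1) ((m t).1 * (1 - (m t).1) * (1 + (m t).1 - (m t).2)) t
    rw [← hG1 t ht]
    exact h
  · intro t ht
    have h := (ContinuousLinearMap.snd ℝ ℝ ℝ).hasFDerivAt.comp_hasDerivAt t (hm t)
    show HasDerivAt (fun t => (m t).2) ((m t).2 * (1 - (m t).2) * (1 - (m t).1 + (m t).2)) t
    rw [← hG2 t ht]
    exact h
  · have : (fun t => ((m t).1, (m t).2)) = m := by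
      funext t; exact Prod.mk.eta
    rw [this]; exact htend
  · intro s z₂ z₃ hs hoc hts hz₂ hz₃ hz₂0 hz₃0
    set Z : ℝ → ℝ × ℝ := fun t => (z₂ t, z₃ t) with hZdef
    have hZ : ∀ t ∈ s, HasDerivAt Z (rfF (Z t)) t := by
      intro t ht
      exact (hz₂ t ht).prodMk (hz₃ t ht)
    have hZ0 : Z t₀ = m t₀ := by
      rw [hm0]; simp only [hZdef, hz₂0, hz₃0]
    have huniq := rf_unique t₀ m hm hsmall s Z hs hoc hts hZ hZ0
    intro t ht hge
    have := huniq t ht hge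
    exact ⟨congrArg Prod.fst this, congrArg Prod.snd this⟩
end

section
/- For (m₂,m₃) ∈ ℝ² set ν₁ = m₂+m₃−1, ν₂ = 1+m₃−m₂, ν₃ = 1+m₂−m₃, and similarly ν₁', ν₂', ν₃' for (m₂',m₃'). Suppose (m₂,m₃) and (m₂',m₃') lie in S_m = {(x,y) ∈ ℝ² : 0 ≤ x ≤ 1, y ≤ x}, with ν₁ < 0 < ν₂ and ν₁' ≤ ν₂' < 0, and suppose there exists c > 0 such that ν₁ν₃ = c·ν₁'ν₃', ν₁ν₂ = c·ν₂'ν₃', and ν₂ν₃ = c·ν₁'ν₂'. Then m₂ = 0, m₂' = 0, and m₃·m₃' = 1. -/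
/-- If `(m₂,m₃) ∈ S_m` lies in `S₋₊` (i.e. `ν₁ < 0 < ν₂`) and `(m₂',m₃') ∈ S_m` lies in
`S₋₋` (i.e. `ν₁' ≤ ν₂' < 0`), and their Ricci data agree up to a positive factor `c`,
then `m₂ = m₂' = 0` and `m₃·m₃' = 1`. -/
theorem ricci_data_S_minusplus_S_minusminus
    (m₂ m₃ m₂' m₃' : ℝ)
    (hSm : 0 ≤ m₂ ∧ m₂ ≤ 1 ∧ m₃ ≤ m₂)
    (hSm' : 0 ≤ m₂' ∧ m₂' ≤ 1 ∧ m₃' ≤ m₂')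
    (hν : m₂ + m₃ - 1 < 0 ∧ 0 < 1 + m₃ - m₂)
    (hν' : m₂' + m₃' - 1 ≤ 1 + m₃' - m₂' ∧ 1 + m₃' - m₂' < 0)
    (c : ℝ) (hc : 0 < c)
    (h₁ : (m₂ + m₃ - 1) * (1 + m₂ - m₃) = c * ((m₂' + m₃' - 1) * (1 + m₂' - m₃')))
    (h₂ : (m₂ + m₃ - 1) * (1 + m₃ - m₂) = c * ((1 + m₃' - m₂') * (1 + m₂' - m₃')))
    (h₃ : (1 + m₃ - m₂) * (1 + m₂ - m₃) = c * ((m₂' + m₃' - 1) * (1 + m₃' - m₂'))) :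
    m₂ = 0 ∧ m₂' = 0 ∧ m₃ * m₃' = 1 := by
  obtain ⟨hm0, hm1, hm2⟩ := hSm
  obtain ⟨hm0', hm1', hm2'⟩ := hSm'
  obtain ⟨ha, hb⟩ := hν
  obtain ⟨ha', hb'⟩ := hν'
  -- eliminate c : get (νᵢ) relations
  have key1 : (m₂ + m₃ - 1) *
      ((1 + m₂ - m₃) * (1 + m₃' - m₂') - (1 + m₃ - m₂) * (m₂' + m₃' - 1)) = 0 := by
    linear_combination (1 + m₃' - m₂') * h₁ - (m₂' + m₃' - 1) * h₂
  have e1 : (1 + m₂ - m₃) * (1 + m₃' - m₂') = (1 + m₃ - m₂) * (m₂' + m₃' - 1) := by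
    rcases mul_eq_zero.mp key1 with h | h
    · linarith
    · linarith
  have key2 : (1 + m₂ - m₃) *
      ((m₂ + m₃ - 1) * (1 + m₃' - m₂') - (1 + m₃ - m₂) * (1 + m₂' - m₃')) = 0 := by
    linear_combination (1 + m₃' - m₂') * h₁ - (1 + m₂' - m₃') * h₃
  have e2 : (m₂ + m₃ - 1) * (1 + m₃' - m₂') = (1 + m₃ - m₂) * (1 + m₂' - m₃') := by
    rcases mul_eq_zero.mp key2 with h | h
    · linarith
    · linarith
  -- K = m₂ * ν₂' = m₂' * ν₂
  have k1 : m₂ * (1 + m₃' - m₂') = m₂' * (1 + m₃ - m₂) := by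
    linear_combination e2 / 2 + e1 / 2
  have hle : m₂ * (1 + m₃' - m₂') ≤ 0 :=
    mul_nonpos_of_nonneg_of_nonpos hm0 hb'.le
  have hge : 0 ≤ m₂' * (1 + m₃ - m₂) := mul_nonneg hm0' hb.le
  have hz : m₂ * (1 + m₃' - m₂') = 0 := le_antisymm hle (k1 ▸ hge)
  have hz' : m₂' * (1 + m₃ - m₂) = 0 := k1 ▸ hz
  have hm2z : m₂ = 0 := by
    rcases mul_eq_zero.mp hz with h | h
    · exact h
    · linarith
  have hm2z' : m₂' = 0 := by
    rcases mul_eq_zero.mp hz' with h | h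
    · exact h
    · linarith
  refine ⟨hm2z, hm2z', ?_⟩
  subst hm2z hm2z'
  linear_combination e2 / 2
end

section
/- For (m₂,m₃) ∈ ℝ² set ν₁ = m₂+m₃−1, ν₂ = 1+m₃−m₂, ν₃ = 1+m₂−m₃. Let S_{++} = {(m₂,m₃) ∈ ℝ² : 0 ≤ m₂ ≤ 1, m₃ ≤ m₂, and 0 < ν₁}. Then the map (m₂,m₃) ↦ (ν₁/ν₃, ν₁/ν₂) is injective on S_{++}. -/
/-- On `S₊₊ = {(m₂,m₃) ∈ S_m : 0 < ν₁}`, the map `(m₂,m₃) ↦ (ν₁/ν₃, ν₁/ν₂)` is injective,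
where `ν₁ = m₂+m₃−1`, `ν₂ = 1+m₃−m₂`, `ν₃ = 1+m₂−m₃`. -/
theorem injective_on_S_plusplus :
    Set.InjOn
      (fun p : ℝ × ℝ =>
        ((p.1 + p.2 - 1) / (1 + p.1 - p.2), (p.1 + p.2 - 1) / (1 + p.2 - p.1)))
      {p : ℝ × ℝ | 0 ≤ p.1 ∧ p.1 ≤ 1 ∧ p.2 ≤ p.1 ∧ 0 < p.1 + p.2 - 1} := by
  rintro ⟨a, b⟩ ⟨ha0, ha1, hab, hav⟩ ⟨c, d⟩ ⟨hc0, hc1, hcd, hcv⟩ h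
  simp only [Prod.mk.injEq] at h
  obtain ⟨h1, h2⟩ := h
  have hp3 : (0:ℝ) < 1 + a - b := by linarith
  have hp2 : (0:ℝ) < 1 + b - a := by linarith
  have hq3 : (0:ℝ) < 1 + c - d := by linarith
  have hq2 : (0:ℝ) < 1 + d - c := by linarith
  rw [div_eq_div_iff hp3.ne' hq3.ne'] at h1
  rw [div_eq_div_iff hp2.ne' hq2.ne'] at h2
  have hsum : a + b = c + d := by nlinarith
  have hdiff : a - b = c - d := by nlinarith
  have : a = c := by linarith
  have : b = d := by linarith
  simp_all
end

section
/- For (m₂,m₃) ∈ ℝ² set ν₁ = m₂+m₃−1, ν₂ = 1+m₃−m₂, ν₃ = 1+m₂−m₃. Let S_{-+} = {(m₂,m₃) ∈ ℝ² : 0 ≤ m₂ ≤ 1, m₃ ≤ m₂, and ν₁ < 0 < ν₂} and S_{--} = {(m₂,m₃) ∈ ℝ² : 0 ≤ m₂ ≤ 1, m₃ ≤ m₂, and ν₂ < 0}. Then the map (m₂,m₃) ↦ (ν₁/ν₂, ν₁/ν₃) is injective on S_{-+}, and the map (m₂,m₃) ↦ (ν₃/ν₂, ν₃/ν₁) is injective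 on S_{--}. -/
/-- With `ν₁ = m₂+m₃−1`, `ν₂ = 1+m₃−m₂`, `ν₃ = 1+m₂−m₃`: the map
`(m₂,m₃) ↦ (ν₁/ν₂, ν₁/ν₃)` is injective on `S₋₊ = {(m₂,m₃) ∈ S_m : ν₁ < 0 < ν₂}`, and the
map `(m₂,m₃) ↦ (ν₃/ν₂, ν₃/ν₁)` is injective on `S₋₋ = {(m₂,m₃) ∈ S_m : ν₂ < 0}`. -/
theorem injective_on_S_minusplus_and_S_minusminus :
    Set.InjOn
      (fun p : ℝ × ℝ =>
        ((p.1 + p.2 - 1) / (1 + p.2 - p.1), (p.1 + p.2 - 1) / (1 + p.1 - p.2)))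
      {p : ℝ × ℝ | 0 ≤ p.1 ∧ p.1 ≤ 1 ∧ p.2 ≤ p.1 ∧ p.1 + p.2 - 1 < 0 ∧ 0 < 1 + p.2 - p.1} ∧
    Set.InjOn
      (fun p : ℝ × ℝ =>
        ((1 + p.1 - p.2) / (1 + p.2 - p.1), (1 + p.1 - p.2) / (p.1 + p.2 - 1)))
      {p : ℝ × ℝ | 0 ≤ p.1 ∧ p.1 ≤ 1 ∧ p.2 ≤ p.1 ∧ 1 + p.2 - p.1 < 0} := by
  constructor
  · rintro ⟨x, y⟩ ⟨hx0, hx1, hxy, h1, h2⟩ ⟨u, v⟩ ⟨hu0, hu1, huv, g1, g2⟩ heq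
    simp only [Prod.mk.injEq] at heq
    obtain ⟨e1, e2⟩ := heq
    have hA3 : (0:ℝ) < 1 + x - y := by linarith
    have hB3 : (0:ℝ) < 1 + u - v := by linarith
    rw [div_eq_div_iff (ne_of_gt h2) (ne_of_gt g2)] at e1
    rw [div_eq_div_iff (ne_of_gt hA3) (ne_of_gt hB3)] at e2
    have key : x + y - 1 = u + v - 1 := by linear_combination (e1 + e2) / 2
    have h12 : (x + y - 1) * ((1 + v - u) - (1 + y - x)) = 0 := by
      linear_combination e1 - (1 + y - x) * key
    have hA2 : (1 + v - u) - (1 + y - x) = 0 := by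
      rcases mul_eq_zero.mp h12 with h | h
      · exact absurd h (ne_of_lt h1)
      · exact h
    rw [Prod.mk.injEq]
    exact ⟨by linarith, by linarith⟩
  · rintro ⟨x, y⟩ ⟨hx0, hx1, hxy, h2⟩ ⟨u, v⟩ ⟨hu0, hu1, huv, g2⟩ heq
    simp only [Prod.mk.injEq] at heq
    obtain ⟨e1, e2⟩ := heq
    have hA1 : x + y - 1 < 0 := by linarith
    have hB1 : u + v - 1 < 0 := by linarith
    have hA3 : (0:ℝ) < 1 + x - y := by linarith
    rw [div_eq_div_iff (ne_of_lt h2) (ne_of_lt g2)] at e1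
    rw [div_eq_div_iff (ne_of_lt hA1) (ne_of_lt hB1)] at e2
    have key : (1 + x - y) - (1 + u - v) = 0 := by linear_combination e1 / 2
    have h12 : (1 + x - y) * ((u + v - 1) - (x + y - 1)) = 0 := by
      linear_combination e2 - (x + y - 1) * key
    have hA2 : (u + v - 1) - (x + y - 1) = 0 := by
      rcases mul_eq_zero.mp h12 with h | h
      · exact absurd h (ne_of_gt hA3)
      · exact h
    rw [Prod.mk.injEq]
    exact ⟨by linarith, by linarith⟩
end
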